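/- arXiv:2308.04360 — 9 statements merged into one kernel-verified Lean document; each statement's English description precedes it below -/
import Mathlib

section
/- Let n and r be positive integers with n ≥ 2r, and let l be the least positive integer for which there exists a positive integer k ≤ l+1 satisfying 0 ≤ m_r(l,k) ≤ C(l,k) and Σ_{i=0}^{k-1} C(l,i) + m_r(l,k) ≥ n. Then the base size of the symmetric group S_n acting on the set of r-element subsets of [n] equals l. -/
/-- `𝓑` is a base for the symmetric group `S_n` acting on the set of `r`-element
subsets of `[n] = {1, …, n}` (modelled as `Fin n`): all members of `𝓑` are
`r`-subsets and the pointwise stabiliser of `𝓑` in `S_n` is trivial. -/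
def IsBaseSym (n r : ℕ) (𝓑 : Finset (Finset (Fin n))) : Prop :=
  (∀ B ∈ 𝓑, B.card = r) ∧
    ∀ σ : Equiv.Perm (Fin n), (∀ B ∈ 𝓑, B.image σ = B) → σ = 1

/-- The base size of `S_n` acting on `r`-element subsets of `[n]`:
the minimum cardinality of a base. -/
noncomputable def baseSizeSym (n r : ℕ) : ℕ :=
  sInf {l : ℕ | ∃ 𝓑 : Finset (Finset (Fin n)), IsBaseSym n r 𝓑 ∧ 𝓑.card = l}

/-- The rational number `m_r(l,k) = (1/k)(l·r − Σ_{i=1}^{k-1} i·C(l,i))`. -/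
def mr (r l k : ℕ) : ℚ :=
  ((l : ℚ) * r - ∑ i ∈ Finset.Icc 1 (k - 1), (i : ℚ) * (l.choose i)) / k

open Finset

namespace BaseSymAux

variable {l : ℕ}

def tot (F : Finset (Finset (Fin l))) : ℕ := ∑ S ∈ F, S.card
def col (F : Finset (Finset (Fin l))) (j : Fin l) : ℕ := (F.filter (fun S => j ∈ S)).card
def fib (F : Finset (Finset (Fin l))) (i : ℕ) : ℕ := (F.filter (fun S => S.card = i)).card

lemma sum_col (F : Finset (Finset (Fin l))) : ∑ j, col F j = tot F := by
  unfold col tot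
  simp only [Finset.card_filter]
  rw [Finset.sum_comm]
  congr 1; ext S
  simp [Finset.card_filter, Finset.filter_mem_eq_inter]

lemma fib_le_choose (F : Finset (Finset (Fin l))) (i : ℕ) : fib F i ≤ l.choose i := by
  unfold fib
  calc (F.filter (fun S => S.card = i)).card
      ≤ ((univ : Finset (Fin l)).powersetCard i).card := by
        apply Finset.card_le_card
        intro S hS
        simp only [Finset.mem_filter] at hS
        simp [Finset.mem_powersetCard, hS.2]
    _ = l.choose i := by simp [Finset.card_powersetCard]

lemma card_mem_range (S : Finset (Fin l)) : S.card ∈ range (l+1) := by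
  simp only [Finset.mem_range, Nat.lt_succ_iff]
  simpa using Finset.card_le_card (Finset.subset_univ S)

lemma card_eq_sum_fib (F : Finset (Finset (Fin l))) :
    F.card = ∑ i ∈ range (l+1), fib F i :=
  Finset.card_eq_sum_card_fiberwise (fun S _ => card_mem_range S)

lemma tot_eq_sum_fib (F : Finset (Finset (Fin l))) :
    tot F = ∑ i ∈ range (l+1), i * fib F i := by
  unfold tot fib
  rw [← Finset.sum_fiberwise_of_maps_to (fun S _ => card_mem_range S) (fun S => S.card)]
  congr 1; ext i
  rw [Finset.sum_congr rfl (fun S hS => (Finset.mem_filter.mp hS).2), Finset.sum_const,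
    smul_eq_mul, mul_comm]

lemma card_le_subsets (F : Finset (Finset (Fin l))) : F.card ≤ 2 ^ l := by
  calc F.card ≤ (univ : Finset (Finset (Fin l))).card := Finset.card_le_card (subset_univ _)
    _ = 2 ^ l := by simp

lemma sum_choose_mul (l : ℕ) : ∑ i ∈ range (l+1), i * l.choose i = l * 2^(l-1) := by
  cases l with
  | zero => simp
  | succ m =>
    rw [Finset.sum_range_succ']
    simp only [Nat.zero_mul, Nat.add_zero, Nat.succ_sub_one]
    have : ∀ i ∈ range (m+1), (i+1) * (m+1).choose (i+1) = (m+1) * m.choose i := by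
      intro i _
      rw [mul_comm, ← Nat.add_one_mul_choose_eq]
    rw [Finset.sum_congr rfl this, ← Finset.mul_sum, Nat.sum_range_choose]

lemma exists_move (F : Finset (Finset (Fin l))) (j j' : Fin l)
    (h : col F j' < col F j) :
    ∃ S ∈ F, j ∈ S ∧ j' ∉ S ∧ insert j' (S.erase j) ∉ F := by
  by_contra hcon
  push_neg at hcon
  have hjj' : j ≠ j' := by rintro rfl; omega
  have hinj : ∀ S ∈ F.filter (fun S => j ∈ S ∧ j' ∉ S),
      insert j' (S.erase j) ∈ F.filter (fun S => j' ∈ S ∧ j ∉ S) := by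
    intro S hS
    rw [Finset.mem_filter] at hS
    obtain ⟨hSF, hjS, hj'S⟩ := hS
    rw [Finset.mem_filter]
    refine ⟨hcon S hSF hjS hj'S, Finset.mem_insert_self _ _, ?_⟩
    simp [Finset.mem_insert, hjj', Finset.mem_erase]
  have hcard : (F.filter (fun S => j ∈ S ∧ j' ∉ S)).card
      ≤ (F.filter (fun S => j' ∈ S ∧ j ∉ S)).card := by
    apply Finset.card_le_card_of_injOn (fun S => insert j' (S.erase j)) (fun S hS => hinj S (Finset.mem_coe.mp hS))
    intro S hS T hT hST
    simp only [Finset.coe_filter, Set.mem_setOf_eq] at hS hT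
    have hS' : j' ∉ S.erase j := fun h => hS.2.2 (Finset.mem_of_mem_erase h)
    have hT' : j' ∉ T.erase j := fun h => hT.2.2 (Finset.mem_of_mem_erase h)
    have heq : S.erase j = T.erase j := by
      have := congrArg (Finset.erase · j') hST
      simpa [Finset.erase_insert hS', Finset.erase_insert hT'] using this
    have h1 : insert j (S.erase j) = insert j (T.erase j) := by rw [heq]
    rwa [Finset.insert_erase hS.2.1, Finset.insert_erase hT.2.1] at h1
  have hj : col F j = ((F.filter (fun S => j ∈ S)).filter (fun S => j' ∈ S)).card
      + (F.filter (fun S => j ∈ S ∧ j' ∉ S)).card := by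
    rw [col]
    have e2 : F.filter (fun S => j ∈ S ∧ j' ∉ S)
        = (F.filter (fun S => j ∈ S)).filter (fun S => ¬ j' ∈ S) := by
      rw [Finset.filter_filter]
    rw [e2]
    exact (Finset.card_filter_add_card_filter_not (fun S => j' ∈ S)).symm
  have hj' : col F j' = ((F.filter (fun S => j' ∈ S)).filter (fun S => j ∈ S)).card
      + (F.filter (fun S => j' ∈ S ∧ j ∉ S)).card := by
    rw [col]
    have e2 : F.filter (fun S => j' ∈ S ∧ j ∉ S)
        = (F.filter (fun S => j' ∈ S)).filter (fun S => ¬ j ∈ S) := by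
      rw [Finset.filter_filter]
    rw [e2]
    exact (Finset.card_filter_add_card_filter_not (fun S => j ∈ S)).symm
  have e3 : (F.filter (fun S => j ∈ S)).filter (fun S => j' ∈ S)
      = (F.filter (fun S => j' ∈ S)).filter (fun S => j ∈ S) := by
    rw [Finset.filter_filter, Finset.filter_filter]
    congr 1; ext S; tauto
  rw [e3] at hj
  omega

lemma col_insert_of_not_mem (F : Finset (Finset (Fin l))) (T : Finset (Fin l)) (hT : T ∉ F)
    (i : Fin l) : col (insert T F) i = col F i + if i ∈ T then 1 else 0 := by
  rw [col, col, Finset.filter_insert]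
  split <;> simp_all [Finset.card_insert_of_notMem, fun h => hT (Finset.mem_of_mem_filter T h)]

lemma col_erase_of_mem (F : Finset (Finset (Fin l))) (S : Finset (Fin l)) (hS : S ∈ F)
    (i : Fin l) : col F i = col (F.erase S) i + if i ∈ S then 1 else 0 := by
  rw [col, col, Finset.filter_erase]
  split
  · rw [Finset.card_erase_add_one (Finset.mem_filter.mpr ⟨hS, by assumption⟩)]
  · rw [Finset.erase_eq_of_notMem (by simp [*] : S ∉ F.filter (fun S => i ∈ S))]
    simp

lemma tot_insert_of_not_mem (F : Finset (Finset (Fin l))) (T : Finset (Fin l)) (hT : T ∉ F) :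
    tot (insert T F) = tot F + T.card := by
  rw [tot, tot, Finset.sum_insert hT, add_comm]

lemma tot_erase_of_mem (F : Finset (Finset (Fin l))) (S : Finset (Fin l)) (hS : S ∈ F) :
    tot F = tot (F.erase S) + S.card := by
  rw [tot, tot, ← Finset.sum_erase_add _ _ hS]

lemma balance (r : ℕ) : ∀ (N : ℕ) (F : Finset (Finset (Fin l))),
    (∑ j, ((col F j - r) + (r - col F j))) ≤ N → tot F = l * r →
    ∃ F' : Finset (Finset (Fin l)), F'.card = F.card ∧ ∀ j, col F' j = r := by
  intro N
  induction N with
  | zero =>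
    intro F hΦ htot
    refine ⟨F, rfl, fun j => ?_⟩
    have := Finset.sum_eq_zero_iff.mp (Nat.le_zero.mp hΦ) j (Finset.mem_univ j)
    omega
  | succ N ih =>
    intro F hΦ htot
    by_cases hall : ∀ j, col F j = r
    · exact ⟨F, rfl, hall⟩
    push_neg at hall
    obtain ⟨j₀, hj₀⟩ := hall
    have hsum : ∑ j, col F j = ∑ _j : Fin l, r := by
      rw [sum_col, htot]; simp [mul_comm]
    have hja : ∃ ja, r < col F ja := by
      by_contra hc; push_neg at hc
      have : ∑ j, col F j < ∑ _j : Fin l, r :=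
        Finset.sum_lt_sum (fun j _ => hc j) ⟨j₀, Finset.mem_univ j₀, lt_of_le_of_ne (hc j₀) hj₀⟩
      omega
    have hjb : ∃ jb, col F jb < r := by
      by_contra hc; push_neg at hc
      have : ∑ _j : Fin l, r < ∑ j, col F j :=
        Finset.sum_lt_sum (fun j _ => hc j)
          ⟨j₀, Finset.mem_univ j₀, lt_of_le_of_ne (hc j₀) (Ne.symm hj₀)⟩
      omega
    obtain ⟨ja, hja⟩ := hja
    obtain ⟨jb, hjb⟩ := hjb
    have hmove := exists_move F ja jb (by omega)
    obtain ⟨S, hSF, hjaS, hjbS, hTF⟩ := hmove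
    set T := insert jb (S.erase ja) with hT
    have hjbe : jb ∉ S.erase ja := fun h => hjbS (Finset.mem_of_mem_erase h)
    have hTcard : T.card = S.card := by
      rw [hT, Finset.card_insert_of_notMem hjbe, Finset.card_erase_of_mem hjaS]
      have : 1 ≤ S.card := Finset.card_pos.mpr ⟨ja, hjaS⟩
      omega
    have hTnotE : T ∉ F.erase S := fun h => hTF (Finset.mem_of_mem_erase h)
    set F' := insert T (F.erase S) with hF'
    have hcard' : F'.card = F.card := by
      rw [hF', Finset.card_insert_of_notMem hTnotE, Finset.card_erase_of_mem hSF]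
      have : 1 ≤ F.card := Finset.card_pos.mpr ⟨S, hSF⟩
      omega
    have htot' : tot F' = l * r := by
      rw [hF', tot_insert_of_not_mem _ _ hTnotE, hTcard, ← tot_erase_of_mem F S hSF, htot]
    have hjab : ja ≠ jb := by rintro rfl; omega
    have hcol' : ∀ i, col F' i + (if i ∈ S then 1 else 0)
        = col F i + (if i ∈ T then 1 else 0) := by
      intro i
      rw [hF', col_insert_of_not_mem _ _ hTnotE, col_erase_of_mem F S hSF i]
      ring
    have hmemT : ∀ i, (i ∈ T ↔ (i = jb ∨ (i ∈ S ∧ i ≠ ja))) := by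
      intro i
      rw [hT]
      simp [Finset.mem_insert, Finset.mem_erase, and_comm]
    have hcolja : col F' ja + 1 = col F ja := by
      have := hcol' ja
      have h1 : ja ∈ S := hjaS
      have h2 : ja ∉ T := by rw [hmemT]; simp [hjab]
      simp [h1, h2] at this; omega
    have hcoljb : col F' jb = col F jb + 1 := by
      have := hcol' jb
      have h2 : jb ∈ T := by rw [hmemT]; tauto
      simp [hjbS, h2] at this; omega
    have hcolo : ∀ i, i ≠ ja → i ≠ jb → col F' i = col F i := by
      intro i h1 h2
      have := hcol' i
      by_cases hiS : i ∈ S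
      · have : i ∈ T := by rw [hmemT]; tauto
        simp_all
      · have : i ∉ T := by rw [hmemT]; push_neg; exact ⟨h2, fun h => absurd h hiS⟩
        simp_all
    -- potential decreases by 2
    have hkey : ∀ i : Fin l, ((col F' i - r) + (r - col F' i))
        + (if i = ja then 1 else 0) + (if i = jb then 1 else 0)
        = ((col F i - r) + (r - col F i)) := by
      intro i
      by_cases h1 : i = ja
      · subst h1; simp [hjab]; omega
      · by_cases h2 : i = jb
        · subst h2; simp [Ne.symm hjab, hcoljb]; omega
        · simp [h1, h2, hcolo i h1 h2]
    have hΦ' : (∑ j, ((col F' j - r) + (r - col F' j))) ≤ N := by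
      have := Finset.sum_congr rfl (fun i (_ : i ∈ univ) => (hkey i).symm)
      simp only [Finset.sum_add_distrib] at this hΦ ⊢
      simp only [Finset.sum_ite_eq', Finset.mem_univ, if_true] at this
      omega
    obtain ⟨F'', h1, h2⟩ := ih F' hΦ' htot'
    exact ⟨F'', by rw [h1, hcard'], h2⟩




lemma sum_zsmul_choose (l : ℕ) :
    ∑ i ∈ range (l+1), ((2*i - l : ℤ)) * (l.choose i : ℤ) = 0 := by
  have h1 : ∑ i ∈ range (l+1), (2*(i:ℤ)) * (l.choose i : ℤ)
      = 2 * (l * 2^(l-1) : ℕ) := by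
    rw [← sum_choose_mul l]
    push_cast
    rw [Finset.mul_sum]
    congr 1; ext i; ring
  have h2 : ∑ i ∈ range (l+1), (l:ℤ) * (l.choose i : ℤ) = l * 2^l := by
    rw [← Finset.mul_sum]
    congr 1
    exact_mod_cast congrArg (Nat.cast : ℕ → ℤ) (Nat.sum_range_choose l)
  have h3 : ∑ i ∈ range (l+1), ((2*i - l : ℤ)) * (l.choose i : ℤ)
      = (∑ i ∈ range (l+1), (2*(i:ℤ)) * (l.choose i : ℤ))
        - ∑ i ∈ range (l+1), (l:ℤ) * (l.choose i : ℤ) := by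
    rw [← Finset.sum_sub_distrib]
    congr 1; ext i; ring
  rw [h3, h1, h2]
  cases l with
  | zero => simp
  | succ m =>
    push_cast
    rw [pow_succ]
    ring

lemma exists_grow (F : Finset (Finset (Fin l))) (hne : F.Nonempty)
    (hcon : ∀ S ∈ F, ∀ T : Finset (Fin l), T.card = S.card + 1 → T ∈ F) :
    F.card * l ≤ 2 * tot F := by
  obtain ⟨S₀, hS₀F⟩ := hne
  set s := ((F.image Finset.card).min' ⟨S₀.card, Finset.mem_image_of_mem _ hS₀F⟩) with hs
  obtain ⟨S₁, hS₁F, hS₁c⟩ := Finset.mem_image.mp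
    ((F.image Finset.card).min'_mem ⟨S₀.card, Finset.mem_image_of_mem _ hS₀F⟩)
  have hsle : ∀ S ∈ F, s ≤ S.card := fun S hS =>
    Finset.min'_le _ _ (Finset.mem_image_of_mem _ hS)
  have hS₁c' : S₁.card = s := hS₁c
  have hsl : s ≤ l := by
    rw [← hS₁c']
    simpa using Finset.card_le_card (Finset.subset_univ S₁)
  have hup : ∀ d (T : Finset (Fin l)), T.card = s + 1 + d → T ∈ F := by
    intro d
    induction d with
    | zero => intro T hT; exact hcon S₁ hS₁F T (by omega)
    | succ d ih =>
      intro T hT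
      obtain ⟨T', hT'T, hT'c⟩ := Finset.exists_subset_card_eq
        (show s + 1 + d ≤ T.card by omega)
      exact hcon T' (ih T' hT'c) T (by omega)
  have hfib_eq : ∀ i, s < i → i ≤ l → fib F i = l.choose i := by
    intro i hsi hil
    refine le_antisymm (fib_le_choose F i) ?_
    calc l.choose i = ((univ : Finset (Fin l)).powersetCard i).card := by
          simp [Finset.card_powersetCard]
      _ ≤ (F.filter (fun S => S.card = i)).card := by
          apply Finset.card_le_card
          intro T hT
          rw [Finset.mem_powersetCard] at hT
          exact Finset.mem_filter.mpr ⟨hup (i - s - 1) T (by omega), hT.2⟩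
      _ = fib F i := rfl
  have hfib_lt : ∀ i, i < s → fib F i = 0 := by
    intro i hi
    rw [fib, Finset.card_eq_zero, Finset.filter_eq_empty_iff]
    intro S hS hc
    have := hsle S hS
    omega
  by_cases h2s : l < 2 * s
  · -- all sets big
    have : F.card * s ≤ tot F := by
      rw [tot]
      calc F.card * s = ∑ _S ∈ F, s := by rw [Finset.sum_const, smul_eq_mul]
        _ ≤ ∑ S ∈ F, S.card := Finset.sum_le_sum hsle
    nlinarith [this]
  · push_neg at h2s
    have hnn : (0:ℤ) ≤ ∑ i ∈ range (l+1),
        ((2*i - l : ℤ)) * ((fib F i : ℤ) - (l.choose i : ℤ)) := by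
      apply Finset.sum_nonneg
      intro i hi
      rw [Finset.mem_range] at hi
      rcases lt_trichotomy i s with h | h | h
      · rw [hfib_lt i h]
        have h1 : (2*(i:ℤ) - l) ≤ 0 := by push_cast; omega
        have h2 : (((0:ℕ):ℤ)) - (l.choose i : ℤ) ≤ 0 := by
          have : (0:ℤ) ≤ (l.choose i : ℤ) := by positivity
          omega
        nlinarith [h1, h2]
      · subst h
        have h1 : (2*(s:ℤ) - l) ≤ 0 := by push_cast; omega
        have h2 : (fib F s : ℤ) - (l.choose s : ℤ) ≤ 0 := by
          have := fib_le_choose F s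
          push_cast; omega
        nlinarith [h1, h2]
      · rw [hfib_eq i h (by omega)]
        simp
    have hsplit : ∑ i ∈ range (l+1), ((2*i - l : ℤ)) * (fib F i : ℤ)
        = ∑ i ∈ range (l+1), ((2*i - l : ℤ)) * (l.choose i : ℤ)
          + ∑ i ∈ range (l+1), ((2*i - l : ℤ)) * ((fib F i : ℤ) - (l.choose i : ℤ)) := by
      rw [← Finset.sum_add_distrib]
      congr 1; ext i; ring
    have hmain : (0:ℤ) ≤ ∑ i ∈ range (l+1), ((2*i - l : ℤ)) * (fib F i : ℤ) := by
      rw [hsplit, sum_zsmul_choose]; omega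
    have htot : (2 * tot F : ℤ) = ∑ i ∈ range (l+1), (2*(i:ℤ)) * (fib F i : ℤ) := by
      rw [tot_eq_sum_fib F]
      push_cast
      rw [Finset.mul_sum]
      congr 1; ext i; ring
    have hcardl : (F.card * l : ℤ) = ∑ i ∈ range (l+1), (l:ℤ) * (fib F i : ℤ) := by
      rw [card_eq_sum_fib F]
      push_cast
      rw [Finset.sum_mul]
      congr 1; ext i; ring
    have : ∑ i ∈ range (l+1), ((2*i - l : ℤ)) * (fib F i : ℤ)
        = (2 * tot F : ℤ) - (F.card * l : ℤ) := by
      rw [htot, hcardl, ← Finset.sum_sub_distrib]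
      congr 1; ext i; ring
    rw [this] at hmain
    exact_mod_cast sub_nonneg.mp hmain



lemma grow (r : ℕ) : ∀ (d : ℕ) (F : Finset (Finset (Fin l))), F.Nonempty →
    2*(l*r) ≤ F.card * l → l*r - tot F ≤ d → tot F ≤ l*r →
    ∃ F' : Finset (Finset (Fin l)), F'.card = F.card ∧ tot F' = l*r := by
  intro d
  induction d with
  | zero => intro F _ _ h1 h2; exact ⟨F, rfl, by omega⟩
  | succ d ih =>
    intro F hne h2lr hd hle
    by_cases heq : tot F = l*r
    · exact ⟨F, rfl, heq⟩
    have hlt : tot F < l*r := by omega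
    have hmv : ∃ S ∈ F, ∃ T : Finset (Fin l), T ∉ F ∧ T.card = S.card + 1 := by
      by_contra hc
      push_neg at hc
      have hcon : ∀ S ∈ F, ∀ T : Finset (Fin l), T.card = S.card + 1 → T ∈ F := by
        intro S hS T hT
        by_contra hTF
        exact (hc S hS T hTF) hT
      have := exists_grow F hne hcon
      omega
    obtain ⟨S, hSF, T, hTF, hTc⟩ := hmv
    have hTE : T ∉ F.erase S := fun h => hTF (Finset.mem_of_mem_erase h)
    have hcardpos : 1 ≤ F.card := Finset.card_pos.mpr ⟨S, hSF⟩
    have hcard2 : (insert T (F.erase S)).card = F.card := by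
      rw [Finset.card_insert_of_notMem hTE, Finset.card_erase_of_mem hSF]
      omega
    have htot2 : tot (insert T (F.erase S)) = tot F + 1 := by
      rw [tot_insert_of_not_mem _ _ hTE, hTc]
      have := tot_erase_of_mem F S hSF
      omega
    obtain ⟨F'', hc'', ht''⟩ := ih (insert T (F.erase S)) ⟨T, Finset.mem_insert_self _ _⟩
      (by rw [hcard2]; exact h2lr) (by omega) (by omega)
    exact ⟨F'', by rw [hc'', hcard2], ht''⟩




def Fk (l k : ℕ) : ℕ := ∑ i ∈ range k, i * l.choose i
def Nk (l k : ℕ) : ℕ := ∑ i ∈ range k, l.choose i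

lemma mr_eq (r l k : ℕ) (hk : 0 < k) :
    mr r l k = (((l*r : ℕ) : ℚ) - ((Fk l k : ℕ) : ℚ))/(k : ℚ) := by
  rw [mr]
  congr 1
  have h1 : (Fk l k : ℚ) = ∑ i ∈ range k, (i:ℚ) * (l.choose i : ℚ) := by
    rw [Fk]; push_cast; rfl
  have h2 : ∑ i ∈ range k, (i:ℚ) * (l.choose i : ℚ)
      = ∑ i ∈ Icc 1 (k-1), (i:ℚ) * (l.choose i : ℚ) := by
    rw [Finset.range_eq_Ico, Finset.sum_eq_sum_Ico_succ_bot hk]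
    simp only [Nat.cast_zero, zero_mul, zero_add]
    have : Icc 1 (k-1) = Ico 1 k := by rw [← Finset.Ico_add_one_right_eq_Icc]; congr 1; omega
    rw [this]
  rw [h1, h2]
  push_cast
  ring

lemma mr_nonneg_iff (r l k : ℕ) (hk : 0 < k) :
    0 ≤ mr r l k ↔ Fk l k ≤ l * r := by
  rw [mr_eq r l k hk]
  rw [le_div_iff₀ (by positivity : (0:ℚ) < k)]
  rw [zero_mul, sub_nonneg]
  exact_mod_cast Iff.rfl

lemma mr_le_choose_iff (r l k : ℕ) (hk : 0 < k) :
    mr r l k ≤ (l.choose k : ℚ) ↔ l * r ≤ Fk l k + k * l.choose k := by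
  rw [mr_eq r l k hk, div_le_iff₀ (by positivity : (0:ℚ) < k)]
  constructor
  · intro h
    push_cast at h
    have : ((l*r : ℕ) : ℚ) ≤ (Fk l k : ℚ) + (k * l.choose k : ℕ) := by push_cast; nlinarith
    exact_mod_cast this
  · intro h
    have : ((l*r : ℕ) : ℚ) ≤ (Fk l k : ℚ) + (k * l.choose k : ℕ) := by exact_mod_cast h
    push_cast at this ⊢
    nlinarith

lemma mr_cond3_iff (n r l k : ℕ) (hk : 0 < k) :
    ((n:ℚ) ≤ (∑ i ∈ Finset.range k, (l.choose i : ℚ)) + mr r l k) ↔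
      k * n + Fk l k ≤ k * Nk l k + l * r := by
  have hN : (∑ i ∈ Finset.range k, (l.choose i : ℚ)) = ((Nk l k : ℕ) : ℚ) := by
    rw [Nk]; push_cast; rfl
  rw [hN, mr_eq r l k hk]
  rw [← sub_le_iff_le_add']
  rw [le_div_iff₀ (by positivity : (0:ℚ) < k)]
  constructor
  · intro h
    push_cast at h
    have : ((k*n + Fk l k : ℕ) : ℚ) ≤ ((k * Nk l k + l*r : ℕ) : ℚ) := by push_cast; nlinarith
    exact_mod_cast this
  · intro h
    have : ((k*n + Fk l k : ℕ) : ℚ) ≤ ((k * Nk l k + l*r : ℕ) : ℚ) := by exact_mod_cast h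
    push_cast at this ⊢
    nlinarith




/-- the family of all subsets of `Fin l` of size `< k`, as biUnion of powersetCards -/
def low (l k : ℕ) : Finset (Finset (Fin l)) :=
  (range k).biUnion (fun i => (univ : Finset (Fin l)).powersetCard i)

lemma low_disj (l k : ℕ) : ∀ i ∈ range k, ∀ j ∈ range k, i ≠ j →
    Disjoint ((univ : Finset (Fin l)).powersetCard i) ((univ : Finset (Fin l)).powersetCard j) := by
  intro i _ j _ hij
  rw [Finset.disjoint_left]
  intro S hSi hSj
  rw [Finset.mem_powersetCard] at hSi hSj
  exact hij (hSi.2 ▸ hSj.2)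

lemma card_low (l k : ℕ) : (low l k).card = Nk l k := by
  rw [low, Finset.card_biUnion (low_disj l k), Nk]
  congr 1; ext i
  simp [Finset.card_powersetCard]

lemma tot_low (l k : ℕ) : tot (low l k) = Fk l k := by
  rw [low, tot, Finset.sum_biUnion]
  · rw [Fk]
    congr 1; ext i
    rw [Finset.sum_congr rfl (fun S hS => (Finset.mem_powersetCard.mp hS).2),
      Finset.sum_const, smul_eq_mul, mul_comm]
    simp [Finset.card_powersetCard]
  · intro i hi j hj hij
    exact low_disj l k i hi j hj hij
  
/-- initial family : n distinct subsets with total ≤ l*r -/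
lemma exists_initial (n r k : ℕ) (hk : 0 < k)
    (h0 : Fk l k ≤ l * r)
    (h1 : l * r ≤ Fk l k + k * l.choose k)
    (h2 : k * n + Fk l k ≤ k * Nk l k + l * r) :
    ∃ F : Finset (Finset (Fin l)), F.card = n ∧ tot F ≤ l * r := by
  by_cases hcase : n ≤ Nk l k
  · obtain ⟨F, hFsub, hFcard⟩ := Finset.exists_subset_card_eq
      (show n ≤ (low l k).card by rw [card_low]; exact hcase)
    refine ⟨F, hFcard, ?_⟩
    calc tot F ≤ tot (low l k) :=
          Finset.sum_le_sum_of_subset hFsub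
      _ = Fk l k := tot_low l k
      _ ≤ l * r := h0
  · push_neg at hcase
    set t := n - Nk l k with ht
    have htC : t ≤ l.choose k := by nlinarith [h2, h1, hcase, Nat.sub_add_cancel hcase.le]
    obtain ⟨G, hGsub, hGcard⟩ := Finset.exists_subset_card_eq
      (show t ≤ ((univ : Finset (Fin l)).powersetCard k).card by
        rw [Finset.card_powersetCard, Finset.card_univ, Fintype.card_fin]; exact htC)
    have hdisj : Disjoint (low l k) G := by
      rw [Finset.disjoint_left]
      intro S hSl hSG
      rw [low, Finset.mem_biUnion] at hSl
      obtain ⟨i, hi, hSi⟩ := hSl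
      rw [Finset.mem_range] at hi
      have h3 := (Finset.mem_powersetCard.mp hSi).2
      have h4 := (Finset.mem_powersetCard.mp (hGsub hSG)).2
      omega
    refine ⟨low l k ∪ G, ?_, ?_⟩
    · rw [Finset.card_union_of_disjoint hdisj, card_low, hGcard]
      omega
    · rw [tot, Finset.sum_union hdisj]
      have hG : ∑ S ∈ G, S.card = t * k := by
        rw [Finset.sum_congr rfl (fun S hS => (Finset.mem_powersetCard.mp (hGsub hS)).2),
          Finset.sum_const, smul_eq_mul, hGcard]
      rw [← tot, tot_low, hG]
      -- k*n + Fk ≤ k*Nk + l*r, n = Nk + t  ⟹ Fk + t*k ≤ l*r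
      have : n = Nk l k + t := by omega
      nlinarith [h2, this]




lemma Fk_le_mul_Nk (l k : ℕ) : Fk l k ≤ k * Nk l k := by
  rw [Fk, Nk, Finset.mul_sum]
  apply Finset.sum_le_sum
  intro i hi
  rw [Finset.mem_range] at hi
  exact Nat.mul_le_mul_right _ (by omega)

lemma Fk_add (l k : ℕ) : Fk l (k+1) = Fk l k + k * l.choose k := by
  rw [Fk, Fk, Finset.sum_range_succ]

lemma master (n r : ℕ) (F : Finset (Finset (Fin l))) (hcard : F.card = n)
    (htot : tot F = l * r) :
    ∀ k, k ≤ l + 1 → k * n + Fk l k ≤ k * Nk l k + l * r := by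
  intro k hk
  have h1 : k * n = ∑ i ∈ range (l+1), k * fib F i := by
    rw [← Finset.mul_sum, ← card_eq_sum_fib, hcard]
  have h2 : ∀ i ∈ range (l+1),
      k * fib F i ≤ i * fib F i + (if i ∈ range k then (k-i) * l.choose i else 0) := by
    intro i _
    by_cases hik : i ∈ range k
    · rw [if_pos hik]
      rw [Finset.mem_range] at hik
      have hc := fib_le_choose F i
      have : k * fib F i = i * fib F i + (k-i) * fib F i := by
        rw [← Nat.add_mul]; congr 1; omega
      rw [this]
      exact Nat.add_le_add_left (Nat.mul_le_mul_left _ hc) _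
    · rw [if_neg hik]
      rw [Finset.mem_range] at hik
      simp only [Nat.add_zero]
      exact Nat.mul_le_mul_right _ (by omega)
  have h3 : k * n ≤ tot F + ∑ i ∈ range (l+1), (if i ∈ range k then (k-i) * l.choose i else 0) := by
    rw [h1, tot_eq_sum_fib, ← Finset.sum_add_distrib]
    exact Finset.sum_le_sum h2
  have h4 : ∑ i ∈ range (l+1), (if i ∈ range k then (k-i) * l.choose i else 0)
      = ∑ i ∈ range k, (k-i) * l.choose i := by
    rw [Finset.sum_ite_mem]
    congr 1
    exact Finset.inter_eq_right.mpr (Finset.range_subset_range.mpr hk)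
  have h5 : ∑ i ∈ range k, (k-i) * l.choose i + Fk l k = k * Nk l k := by
    rw [Fk, Nk, Finset.mul_sum, ← Finset.sum_add_distrib]
    apply Finset.sum_congr rfl
    intro i hi
    rw [Finset.mem_range] at hi
    rw [← Nat.add_mul]
    congr 1
    omega
  omega

lemma necessity (n r : ℕ) (F : Finset (Finset (Fin l))) (hcard : F.card = n)
    (hcol : ∀ j, col F j = r) (hn2 : 2 ≤ n) (h2r : 2 * r ≤ n) :
    0 < l ∧ ∃ k, 0 < k ∧ k ≤ l + 1 ∧ Fk l k ≤ l * r ∧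
      l * r ≤ Fk l k + k * l.choose k ∧ k * n + Fk l k ≤ k * Nk l k + l * r := by
  have htot : tot F = l * r := by
    rw [← sum_col]
    rw [Finset.sum_congr rfl (fun j _ => hcol j), Finset.sum_const, Finset.card_univ,
      Fintype.card_fin, smul_eq_mul]
  have hn2l : n ≤ 2 ^ l := hcard ▸ card_le_subsets F
  have hl0 : 0 < l := by
    rcases Nat.eq_zero_or_pos l with h | h
    · subst h; simp at hn2l; omega
    · exact h
  refine ⟨hl0, ?_⟩
  set P : ℕ → Prop := fun k => Fk l k ≤ l * r with hP
  have hPdec : DecidablePred P := fun k => by rw [hP]; infer_instance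
  set k := Nat.findGreatest P (l+1) with hkdef
  have hP1 : P 1 := by rw [hP]; simp [Fk]
  have hk1 : 1 ≤ k := Nat.le_findGreatest (by omega) hP1
  have hkle : k ≤ l + 1 := Nat.findGreatest_le (l+1)
  have hkP : P k := Nat.findGreatest_spec (m := 1) (by omega) hP1
  refine ⟨k, by omega, hkle, hkP, ?_, master n r F hcard htot k hkle⟩
  by_cases hkl : k = l + 1
  · rw [hkl]
    have hc0 : l.choose (l+1) = 0 := Nat.choose_eq_zero_of_lt (by omega)
    rw [hc0, Nat.mul_zero, Nat.add_zero]
    have hFkfull : Fk l (l+1) = l * 2^(l-1) := sum_choose_mul l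
    rw [hFkfull]
    have hpow : 2^l = 2 * 2^(l-1) := by
      conv_lhs => rw [show l = (l-1)+1 by omega]
      rw [pow_succ]; ring
    nlinarith [hn2l, h2r, hpow]
  · have hgt : ¬ P (k+1) := Nat.findGreatest_is_greatest (hkdef ▸ Nat.lt_succ_self k) (by omega)
    rw [hP] at hgt
    push_neg at hgt
    rw [Fk_add] at hgt
    omega




lemma filter_image_inj {α β : Type*} [DecidableEq α] [DecidableEq β] (s : Finset α)
    (g : α → β) (hg : Function.Injective g) (p : β → Prop) [DecidablePred p] :
    ((s.image g).filter p).card = (s.filter (fun x => p (g x))).card := by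
  rw [Finset.filter_image, Finset.card_image_of_injective _ hg]

lemma image_swap_eq_self {n : ℕ} (B : Finset (Fin n)) (x y : Fin n) (hxy : x ∈ B ↔ y ∈ B) :
    B.image (Equiv.swap x y) = B := by
  ext a
  rw [Finset.mem_image]
  constructor
  · rintro ⟨b, hb, rfl⟩
    rcases eq_or_ne b x with rfl | hbx
    · rw [Equiv.swap_apply_left]; exact hxy.mp hb
    rcases eq_or_ne b y with rfl | hby
    · rw [Equiv.swap_apply_right]; exact hxy.mpr hb
    · rwa [Equiv.swap_apply_of_ne_of_ne hbx hby]
  · intro ha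
    refine ⟨Equiv.swap x y a, ?_, Equiv.swap_apply_self x y a⟩
    rcases eq_or_ne a x with rfl | hax
    · rw [Equiv.swap_apply_left]; exact hxy.mp ha
    rcases eq_or_ne a y with rfl | hay
    · rw [Equiv.swap_apply_right]; exact hxy.mpr ha
    · rwa [Equiv.swap_apply_of_ne_of_ne hax hay]

lemma family_to_base (n r c : ℕ) (F : Finset (Finset (Fin c))) (hcard : F.card = n)
    (hcol : ∀ j, col F j = r) :
    ∃ 𝓑 : Finset (Finset (Fin n)), IsBaseSym n r 𝓑 ∧ 𝓑.card ≤ c := by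
  have e : {S // S ∈ F} ≃ Fin n := F.equivFinOfCardEq hcard
  set g : Fin n → Finset (Fin c) := fun x => (e.symm x : Finset (Fin c)) with hg
  have hginj : Function.Injective g := fun x y h =>
    e.symm.injective (Subtype.ext h)
  have hgF : ∀ x, g x ∈ F := fun x => (e.symm x).2
  have hgsurj : ∀ S ∈ F, ∃ x, g x = S := fun S hS =>
    ⟨e ⟨S, hS⟩, by rw [hg]; simp⟩
  set B : Fin c → Finset (Fin n) := fun j => univ.filter (fun x => j ∈ g x) with hBdef
  have hBcard : ∀ j, (B j).card = r := by
    intro j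
    have himg : F.filter (fun S => j ∈ S) = (univ.filter (fun x => j ∈ g x)).image g := by
      ext S
      rw [Finset.mem_filter, Finset.mem_image]
      constructor
      · rintro ⟨hSF, hjS⟩
        obtain ⟨x, rfl⟩ := hgsurj S hSF
        exact ⟨x, Finset.mem_filter.mpr ⟨Finset.mem_univ x, hjS⟩, rfl⟩
      · rintro ⟨x, hx, rfl⟩
        exact ⟨hgF x, (Finset.mem_filter.mp hx).2⟩
    have := hcol j
    rw [col, himg, Finset.card_image_of_injective _ hginj] at this
    rw [hBdef]
    exact this
  refine ⟨univ.image B, ⟨?_, ?_⟩, ?_⟩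
  · intro B' hB'
    obtain ⟨j, _, rfl⟩ := Finset.mem_image.mp hB'
    exact hBcard j
  · intro σ hσ
    apply Equiv.ext
    intro x
    have hBx : ∀ j, x ∈ B j ↔ σ x ∈ B j := by
      intro j
      have him := hσ (B j) (Finset.mem_image_of_mem B (Finset.mem_univ j))
      constructor
      · intro hx
        rw [← him]
        exact Finset.mem_image_of_mem σ hx
      · intro hx
        rw [← him, Finset.mem_image] at hx
        obtain ⟨b, hb, hbe⟩ := hx
        rwa [← σ.injective hbe]
    have hgeq : g (σ x) = g x := by
      ext j
      have := hBx j
      rw [hBdef] at this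
      simp only [Finset.mem_filter, Finset.mem_univ, true_and] at this
      rw [← this]
    exact hginj hgeq
  · calc (univ.image B).card ≤ (univ : Finset (Fin c)).card := Finset.card_image_le
      _ = c := by simp

lemma base_to_family (n r c : ℕ) (𝓑 : Finset (Finset (Fin n))) (hB : IsBaseSym n r 𝓑)
    (hcard : 𝓑.card = c) :
    ∃ F : Finset (Finset (Fin c)), F.card = n ∧ ∀ j, col F j = r := by
  have e : {S // S ∈ 𝓑} ≃ Fin c := 𝓑.equivFinOfCardEq hcard
  set D : Fin c → Finset (Fin n) := fun j => (e.symm j : Finset (Fin n)) with hD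
  have hDmem : ∀ j, D j ∈ 𝓑 := fun j => (e.symm j).2
  have hDsurj : ∀ B ∈ 𝓑, ∃ j, D j = B := fun B hBm =>
    ⟨e ⟨B, hBm⟩, by rw [hD]; simp⟩
  set g : Fin n → Finset (Fin c) := fun x => univ.filter (fun j => x ∈ D j) with hg
  have hginj : Function.Injective g := by
    intro x y hxy
    have hiff : ∀ B ∈ 𝓑, (x ∈ B ↔ y ∈ B) := by
      intro B hBm
      obtain ⟨j, rfl⟩ := hDsurj B hBm
      have : (j ∈ g x) = (j ∈ g y) := by rw [hxy]
      rw [hg] at this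
      simp only [Finset.mem_filter, Finset.mem_univ, true_and] at this
      rw [this]
    have hswap : ∀ B ∈ 𝓑, B.image (Equiv.swap x y) = B := fun B hBm =>
      image_swap_eq_self B x y (hiff B hBm)
    have h1 := hB.2 (Equiv.swap x y) hswap
    calc x = Equiv.swap x y y := (Equiv.swap_apply_right x y).symm
      _ = (1 : Equiv.Perm (Fin n)) y := by rw [h1]
      _ = y := rfl
  refine ⟨univ.image g, ?_, ?_⟩
  · rw [Finset.card_image_of_injective _ hginj, Finset.card_univ, Fintype.card_fin]
  · intro j
    rw [col, filter_image_inj _ _ hginj]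
    have : univ.filter (fun x => j ∈ g x) = D j := by
      ext x
      rw [hg]
      simp
    rw [this]
    exact hB.1 (D j) (hDmem j)


end BaseSymAux

/-- Theorem 1 (symmetric case): if `n ≥ 2r` and `l` is the least positive integer
for which there is a positive `k ≤ l + 1` with `0 ≤ m_r(l,k) ≤ C(l,k)` and
`Σ_{i=0}^{k-1} C(l,i) + m_r(l,k) ≥ n` , then `b(S_{n,r}) = l`. -/
theorem baseSize_sym_eq (n r l : ℕ) (hn : 0 < n) (hr : 0 < r) (h2r : 2 * r ≤ n)
    (hl : IsLeast {l' : ℕ | 0 < l' ∧ ∃ k : ℕ, 0 < k ∧ k ≤ l' + 1 ∧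
      0 ≤ mr r l' k ∧ mr r l' k ≤ (l'.choose k : ℚ) ∧
      (n : ℚ) ≤ (∑ i ∈ Finset.range k, (l'.choose i : ℚ)) + mr r l' k} l) :
    baseSizeSym n r = l := by
  have hn2 : 2 ≤ n := by omega
  obtain ⟨⟨hl0, k, hk0, hkle, hmr0, hmrC, hmrn⟩, hleast⟩ := hl
  rw [BaseSymAux.mr_nonneg_iff r l k hk0] at hmr0
  rw [BaseSymAux.mr_le_choose_iff r l k hk0] at hmrC
  rw [BaseSymAux.mr_cond3_iff n r l k hk0] at hmrn
  obtain ⟨F₀, hF₀card, hF₀tot⟩ := BaseSymAux.exists_initial (l := l) n r k hk0 hmr0 hmrC hmrn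
  have hne : F₀.Nonempty := Finset.card_pos.mp (by omega)
  have h2lrn : 2*(l*r) ≤ F₀.card * l := by
    rw [hF₀card]
    calc 2*(l*r) = (2*r)*l := by ring
      _ ≤ n*l := Nat.mul_le_mul_right l h2r
  obtain ⟨F₁, hF₁card, hF₁tot⟩ :=
    BaseSymAux.grow r (l*r - BaseSymAux.tot F₀) F₀ hne h2lrn le_rfl hF₀tot
  obtain ⟨F₂, hF₂card, hF₂col⟩ := BaseSymAux.balance r
    (∑ j, ((BaseSymAux.col F₁ j - r) + (r - BaseSymAux.col F₁ j))) F₁ le_rfl hF₁tot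
  obtain ⟨𝓑, h𝓑base, h𝓑card⟩ := BaseSymAux.family_to_base n r l F₂ (by omega) hF₂col
  have hSne : {c : ℕ | ∃ 𝓑 : Finset (Finset (Fin n)), IsBaseSym n r 𝓑 ∧ 𝓑.card = c}.Nonempty :=
    ⟨𝓑.card, 𝓑, h𝓑base, rfl⟩
  obtain ⟨𝓑', h𝓑'base, h𝓑'card⟩ := Nat.sInf_mem hSne
  obtain ⟨F₃, hF₃card, hF₃col⟩ := BaseSymAux.base_to_family n r _ 𝓑' h𝓑'base h𝓑'card
  obtain ⟨hc0, k', hk'0, hk'le, hc1, hc2, hc3⟩ :=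
    BaseSymAux.necessity n r F₃ hF₃card hF₃col hn2 h2r
  have hlle : l ≤ sInf {c : ℕ | ∃ 𝓑 : Finset (Finset (Fin n)), IsBaseSym n r 𝓑 ∧ 𝓑.card = c} :=
    hleast ⟨hc0, k', hk'0, hk'le,
      (BaseSymAux.mr_nonneg_iff r _ k' hk'0).mpr hc1,
      (BaseSymAux.mr_le_choose_iff r _ k' hk'0).mpr hc2,
      (BaseSymAux.mr_cond3_iff n r _ k' hk'0).mpr hc3⟩
  have hge : sInf {c : ℕ | ∃ 𝓑 : Finset (Finset (Fin n)), IsBaseSym n r 𝓑 ∧ 𝓑.card = c}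
      ≤ 𝓑.card := Nat.sInf_le ⟨𝓑, h𝓑base, rfl⟩
  rw [baseSizeSym]
  omega
end

section
/- Let n and r be positive integers with n ≥ 2r. Then the base size of the alternating group A_{n+1} acting on the set of r-element subsets of [n+1] equals the base size of the symmetric group S_n acting on the set of r-element subsets of [n]. -/
/-- `𝓒` is a base for the alternating group `A_m` acting on `r`-element subsets of `[m]`. -/
def IsBaseAlt (m r : ℕ) (𝓒 : Finset (Finset (Fin m))) : Prop :=
  (∀ B ∈ 𝓒, B.card = r) ∧
    ∀ σ ∈ alternatingGroup (Fin m), (∀ B ∈ 𝓒, B.image σ = B) → σ = 1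

/-- The base size of `A_m` acting on `r`-element subsets of `[m]`. -/
noncomputable def baseSizeAlt (m r : ℕ) : ℕ :=
  sInf {l : ℕ | ∃ 𝓒 : Finset (Finset (Fin m)), IsBaseAlt m r 𝓒 ∧ 𝓒.card = l}


section Auxiliary

set_option linter.unusedSectionVars false

open Finset Equiv

/-! ### Generic signature lemmas -/

variable {α : Type*} [DecidableEq α]

/-- Two points have the same signature w.r.t. a family of finsets. -/
def SameSig (F : Finset (Finset α)) (x y : α) : Prop := ∀ B ∈ F, (x ∈ B ↔ y ∈ B)

/-- A family is "almost injective" with exceptional pair `(a, b)`. -/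
def AlmostInj (F : Finset (Finset α)) (a b : α) : Prop :=
  ∀ x y, x ≠ y → SameSig F x y → (x = a ∧ y = b) ∨ (x = b ∧ y = a)

lemma image_perm_eq (σ : Equiv.Perm α) {B : Finset α} (h : ∀ c ∈ B, σ c ∈ B) :
    B.image σ = B := by
  apply Finset.eq_of_subset_of_card_le
  · intro w hw
    obtain ⟨c, hc, rfl⟩ := Finset.mem_image.mp hw
    exact h c hc
  · rw [Finset.card_image_of_injective _ σ.injective]

lemma mem_iff_of_image_eq {σ : Equiv.Perm α} {B : Finset α} (h : B.image σ = B) (x : α) :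
    x ∈ B ↔ σ x ∈ B := by
  constructor
  · intro hx; rw [← h]; exact Finset.mem_image_of_mem _ hx
  · intro hx
    rw [← h] at hx
    obtain ⟨c, hc, hcx⟩ := Finset.mem_image.mp hx
    rwa [σ.injective hcx] at hc

lemma sameSig_of_fix {F : Finset (Finset α)} {σ : Equiv.Perm α}
    (h : ∀ B ∈ F, B.image σ = B) (x : α) : SameSig F (σ x) x := by
  intro B hB
  exact (mem_iff_of_image_eq (h B hB) x).symm

lemma swap_mem_of_sameSig {F : Finset (Finset α)} {x y : α} (h : SameSig F x y)
    {B : Finset α} (hB : B ∈ F) {c : α} (hc : c ∈ B) : Equiv.swap x y c ∈ B := by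
  rcases eq_or_ne c x with rfl | hcx
  · rw [Equiv.swap_apply_left]; exact (h B hB).mp hc
  rcases eq_or_ne c y with rfl | hcy
  · rw [Equiv.swap_apply_right]; exact (h B hB).mpr hc
  · rwa [Equiv.swap_apply_of_ne_of_ne hcx hcy]

/-! ### Counting machinery: families of columns with prescribed coverage -/

variable {β : Type*} [Fintype β] [DecidableEq β]

/-- Coverage of a row `b` by a family of columns. -/
def covr (F : Finset (Finset β)) (b : β) : ℕ := (F.filter (fun s => b ∈ s)).card

lemma double_count (F : Finset (Finset β)) :
    ∑ b, covr F b = ∑ s ∈ F, s.card := by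
  unfold covr
  simp only [Finset.card_filter]
  rw [Finset.sum_comm]
  refine Finset.sum_congr rfl fun s _ => ?_
  rw [← Finset.card_filter, Finset.filter_univ_mem]

lemma covr_exchange {F : Finset (Finset β)} {u v : Finset β} (hu : u ∈ F) (hv : v ∉ F)
    (b : β) : covr (insert v (F.erase u)) b
      = covr F b - (if b ∈ u then 1 else 0) + (if b ∈ v then 1 else 0) := by
  unfold covr
  have hvf : v ∉ (F.filter (fun s => b ∈ s)).erase u :=
    fun h => hv (Finset.mem_filter.mp (Finset.mem_erase.mp h).2).1
  rw [Finset.filter_insert, Finset.filter_erase]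
  by_cases hbv : b ∈ v <;> by_cases hbu : b ∈ u <;>
    simp only [hbv, hbu, if_true, if_false]
  · have hum : u ∈ F.filter (fun s => b ∈ s) := Finset.mem_filter.mpr ⟨hu, hbu⟩
    rw [Finset.card_insert_of_notMem hvf, Finset.card_erase_of_mem hum]
  · rw [Finset.card_insert_of_notMem hvf,
      Finset.erase_eq_of_notMem (show u ∉ F.filter (fun s => b ∈ s) from
        fun h => hbu (Finset.mem_filter.mp h).2)]
    omega
  · have hum : u ∈ F.filter (fun s => b ∈ s) := Finset.mem_filter.mpr ⟨hu, hbu⟩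
    rw [Finset.card_erase_of_mem hum]; omega
  · rw [Finset.erase_eq_of_notMem (show u ∉ F.filter (fun s => b ∈ s) from
        fun h => hbu (Finset.mem_filter.mp h).2)]
    omega

lemma sum_card_exchange {F : Finset (Finset β)} {u v : Finset β} (hu : u ∈ F) (hv : v ∉ F) :
    ∑ s ∈ insert v (F.erase u), s.card + u.card = (∑ s ∈ F, s.card) + v.card := by
  have h1 : ∑ s ∈ insert v (F.erase u), s.card = v.card + ∑ s ∈ F.erase u, s.card :=
    Finset.sum_insert (fun h => hv (Finset.mem_of_mem_erase h))
  have h2 : ∑ s ∈ F, s.card = u.card + ∑ s ∈ F.erase u, s.card := by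
    conv_lhs => rw [← Finset.insert_erase hu]
    exact Finset.sum_insert (Finset.notMem_erase u F)
  omega

lemma ct_move {r n : ℕ} (hr : 1 ≤ r) (hn : 2*r ≤ n) (F : Finset (Finset β))
    (hcard : F.card = n) (hsum : ∑ b, covr F b ≤ (Fintype.card β) * r)
    (hne : ¬ ∀ b, covr F b = r) :
    ∃ F' : Finset (Finset β), F'.card = n ∧ (∑ b, covr F' b ≤ (Fintype.card β) * r) ∧
      (∑ b, ((covr F' b - r) + (r - covr F' b))) < ∑ b, ((covr F b - r) + (r - covr F b)) := by
  have hconst : ∑ _b : β, r = (Fintype.card β) * r := by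
    rw [Finset.sum_const, Finset.card_univ, smul_eq_mul]
  have hex_lt : ∃ j, covr F j < r := by
    by_contra hco
    push_neg at hco
    push_neg at hne
    obtain ⟨b₀, hb₀⟩ := hne
    have : (Fintype.card β) * r < ∑ b, covr F b := by
      rw [← hconst]
      exact Finset.sum_lt_sum (fun b _ => hco b)
        ⟨b₀, Finset.mem_univ _, lt_of_le_of_ne (hco b₀) (Ne.symm hb₀)⟩
    omega
  obtain ⟨j, hj⟩ := hex_lt
  by_cases hbig : ∃ i, r < covr F i
  · -- swap move
    obtain ⟨i, hi⟩ := hbig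
    have hij : i ≠ j := by rintro rfl; omega
    set A := F.filter (fun s => i ∈ s ∧ j ∉ s) with hA
    set Bf := F.filter (fun s => j ∈ s ∧ i ∉ s) with hBf
    have h1 : covr F i = (F.filter (fun s => i ∈ s ∧ j ∈ s)).card + A.card := by
      unfold covr
      rw [← Finset.card_filter_add_card_filter_not
        (s := F.filter (fun s => i ∈ s)) (p := fun s => j ∈ s), Finset.filter_filter,
        Finset.filter_filter]
    have h2 : covr F j = (F.filter (fun s => i ∈ s ∧ j ∈ s)).card + Bf.card := by
      unfold covr
      rw [← Finset.card_filter_add_card_filter_not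
        (s := F.filter (fun s => j ∈ s)) (p := fun s => i ∈ s), Finset.filter_filter,
        Finset.filter_filter]
      have hcomm : F.filter (fun a => j ∈ a ∧ i ∈ a) = F.filter (fun s => i ∈ s ∧ j ∈ s) :=
        Finset.filter_congr (fun s _ => and_comm)
      rw [hcomm]
    have hAB : Bf.card < A.card := by omega
    by_cases hall : ∀ s ∈ A, insert j (s.erase i) ∈ F
    · exfalso
      have himg : A.image (fun s => insert j (s.erase i)) ⊆ Bf := by
        intro t ht
        obtain ⟨s, hs, rfl⟩ := Finset.mem_image.mp ht
        obtain ⟨hsF, hsi, hsj⟩ := Finset.mem_filter.mp hs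
        refine Finset.mem_filter.mpr ⟨hall s hs, Finset.mem_insert_self _ _, fun hi' => ?_⟩
        rcases Finset.mem_insert.mp hi' with h | h
        · exact hij h
        · exact Finset.notMem_erase i s h
      have hinj : Set.InjOn (fun s : Finset β => insert j (s.erase i)) ↑A := by
        intro s1 h1' s2 h2' he
        obtain ⟨_, hs1i, hs1j⟩ := Finset.mem_filter.mp (Finset.mem_coe.mp h1')
        obtain ⟨_, hs2i, hs2j⟩ := Finset.mem_filter.mp (Finset.mem_coe.mp h2')
        simp only at he
        have he' : (insert j (s1.erase i)).erase j = (insert j (s2.erase i)).erase j := by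
          rw [he]
        rw [Finset.erase_insert (fun h => hs1j (Finset.mem_of_mem_erase h)),
          Finset.erase_insert (fun h => hs2j (Finset.mem_of_mem_erase h))] at he'
        have := congrArg (insert i) he'
        rwa [Finset.insert_erase hs1i, Finset.insert_erase hs2i] at this
      have := Finset.card_le_card himg
      rw [Finset.card_image_of_injOn hinj] at this
      omega
    · push_neg at hall
      obtain ⟨u, huA, hvF⟩ := hall
      obtain ⟨huF, hui, huj⟩ := Finset.mem_filter.mp huA
      set v := insert j (u.erase i) with hv
      have hjv : j ∈ v := Finset.mem_insert_self _ _
      have hiv : i ∉ v := fun h => by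
        rcases Finset.mem_insert.mp h with h | h
        · exact hij h
        · exact Finset.notMem_erase i u h
      have hmemo : ∀ b, b ≠ i → b ≠ j → (b ∈ v ↔ b ∈ u) := by
        intro b hbi hbj
        constructor
        · intro h
          rcases Finset.mem_insert.mp h with h | h
          · exact absurd h hbj
          · exact Finset.mem_of_mem_erase h
        · intro h
          exact Finset.mem_insert_of_mem (Finset.mem_erase.mpr ⟨hbi, h⟩)
      have hvcard : v.card = u.card := by
        rw [hv, Finset.card_insert_of_notMem (fun h => huj (Finset.mem_of_mem_erase h)),
          Finset.card_erase_of_mem hui]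
        have : 1 ≤ u.card := Finset.card_pos.mpr ⟨i, hui⟩
        omega
      refine ⟨insert v (F.erase u), ?_, ?_, ?_⟩
      · rw [Finset.card_insert_of_notMem (fun h => hvF (Finset.mem_of_mem_erase h)),
          Finset.card_erase_of_mem huF, hcard]
        omega
      · rw [double_count] at hsum ⊢
        have := sum_card_exchange huF hvF
        omega
      · have hci : covr (insert v (F.erase u)) i = covr F i - 1 := by
          rw [covr_exchange huF hvF]
          simp [hui, hiv]
        have hcj : covr (insert v (F.erase u)) j = covr F j + 1 := by
          rw [covr_exchange huF hvF]
          simp [huj, hjv]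
        have hco : ∀ b, b ≠ i → b ≠ j → covr (insert v (F.erase u)) b = covr F b := by
          intro b hbi hbj
          rw [covr_exchange huF hvF]
          by_cases hbu : b ∈ u
          · have hbv : b ∈ v := (hmemo b hbi hbj).mpr hbu
            have : 1 ≤ covr F b := Finset.card_pos.mpr ⟨u, Finset.mem_filter.mpr ⟨huF, hbu⟩⟩
            simp only [hbu, hbv, if_true]
            omega
          · have hbv : b ∉ v := fun h => hbu ((hmemo b hbi hbj).mp h)
            simp [hbu, hbv]
        refine Finset.sum_lt_sum (fun b _ => ?_) ⟨i, Finset.mem_univ _, ?_⟩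
        · by_cases hbi : b = i
          · subst hbi; rw [hci]; omega
          by_cases hbj : b = j
          · subst hbj; rw [hcj]; omega
          · rw [hco b hbi hbj]
        · rw [hci]; omega
  · -- grow move
    push_neg at hbig
    have hD : covr F j + (F.filter (fun s => j ∉ s)).card = n := by
      rw [← hcard]
      exact Finset.card_filter_add_card_filter_not (p := fun s => j ∈ s)
    by_cases hall : ∀ s ∈ F.filter (fun s => j ∉ s), insert j s ∈ F
    · exfalso
      have himg : (F.filter (fun s => j ∉ s)).image (insert j) ⊆ F.filter (fun s => j ∈ s) := by
        intro t ht
        obtain ⟨s, hs, rfl⟩ := Finset.mem_image.mp ht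
        exact Finset.mem_filter.mpr ⟨hall s hs, Finset.mem_insert_self _ _⟩
      have hinj : Set.InjOn (insert j) (↑(F.filter (fun s => j ∉ s)) : Set (Finset β)) := by
        intro s1 h1' s2 h2' he
        have hs1j := (Finset.mem_filter.mp (Finset.mem_coe.mp h1')).2
        have hs2j := (Finset.mem_filter.mp (Finset.mem_coe.mp h2')).2
        have he' := congrArg (·.erase j) he
        simpa [Finset.erase_insert hs1j, Finset.erase_insert hs2j] using he'
      have := Finset.card_le_card himg
      rw [Finset.card_image_of_injOn hinj] at this
      have : covr F j < r := hj
      unfold covr at *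
      omega
    · push_neg at hall
      obtain ⟨u, huD, hvF⟩ := hall
      obtain ⟨huF, huj⟩ := Finset.mem_filter.mp huD
      set v := insert j u with hv
      have hjv : j ∈ v := Finset.mem_insert_self _ _
      have hvcard : v.card = u.card + 1 := Finset.card_insert_of_notMem huj
      have hsumlt : ∑ b, covr F b < (Fintype.card β) * r := by
        rw [← hconst]
        exact Finset.sum_lt_sum (fun b _ => hbig b) ⟨j, Finset.mem_univ _, hj⟩
      have hcj : covr (insert v (F.erase u)) j = covr F j + 1 := by
        rw [covr_exchange huF hvF]
        simp [huj, hjv]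
      have hco : ∀ b, b ≠ j → covr (insert v (F.erase u)) b = covr F b := by
        intro b hbj
        rw [covr_exchange huF hvF]
        have hmv : b ∈ v ↔ b ∈ u := by
          constructor
          · intro h
            rcases Finset.mem_insert.mp h with h | h
            · exact absurd h hbj
            · exact h
          · exact Finset.mem_insert_of_mem
        by_cases hbu : b ∈ u
        · have : 1 ≤ covr F b := Finset.card_pos.mpr ⟨u, Finset.mem_filter.mpr ⟨huF, hbu⟩⟩
          simp only [hbu, hmv.mpr hbu, if_true]
          omega
        · have hbv : b ∉ v := fun h => hbu (hmv.mp h)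
          simp [hbu, hbv]
      refine ⟨insert v (F.erase u), ?_, ?_, ?_⟩
      · rw [Finset.card_insert_of_notMem (fun h => hvF (Finset.mem_of_mem_erase h)),
          Finset.card_erase_of_mem huF, hcard]
        omega
      · rw [double_count] at hsumlt ⊢
        have := sum_card_exchange huF hvF
        omega
      · refine Finset.sum_lt_sum (fun b _ => ?_) ⟨j, Finset.mem_univ _, ?_⟩
        · by_cases hbj : b = j
          · subst hbj; rw [hcj]
            have := hbig b
            omega
          · rw [hco b hbj]
        · rw [hcj]
          have := hbig j
          omega

lemma ct_exists_aux {r n : ℕ} (hr : 1 ≤ r) (hn : 2*r ≤ n) :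
    ∀ (k : ℕ) (F : Finset (Finset β)),
      (∑ b, ((covr F b - r) + (r - covr F b))) ≤ k → F.card = n →
      (∑ b, covr F b ≤ (Fintype.card β) * r) →
      ∃ G : Finset (Finset β), G.card = n ∧ ∀ b, covr G b = r := by
  intro k
  induction k with
  | zero =>
    intro F hk hcard hsum
    have h0 : ∀ b ∈ Finset.univ, ((covr F b - r) + (r - covr F b)) = 0 :=
      Finset.sum_eq_zero_iff.mp (Nat.le_zero.mp hk)
    refine ⟨F, hcard, fun b => ?_⟩
    have := h0 b (Finset.mem_univ b)
    omega
  | succ k IH =>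
    intro F hk hcard hsum
    by_cases h0 : ∀ b, covr F b = r
    · exact ⟨F, hcard, h0⟩
    · obtain ⟨F', h1, h2, h3⟩ := ct_move hr hn F hcard hsum h0
      exact IH F' (by omega) h1 h2

lemma ct_exists {r n : ℕ} (hr : 1 ≤ r) (hn : 2*r ≤ n)
    (F : Finset (Finset β)) (hcard : F.card = n)
    (hsum : ∑ s ∈ F, s.card ≤ (Fintype.card β) * r) :
    ∃ G : Finset (Finset β), G.card = n ∧ ∀ b, covr G b = r := by
  rw [← double_count] at hsum
  exact ct_exists_aux hr hn _ F le_rfl hcard hsum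

/-! ### Base characterisations -/

lemma baseSym_sig_inj {n r : ℕ} {𝓑 : Finset (Finset (Fin n))} (h : IsBaseSym n r 𝓑) :
    ∀ x y, SameSig 𝓑 x y → x = y := by
  intro x y hxy
  have hfix : ∀ B ∈ 𝓑, B.image (Equiv.swap x y) = B := fun B hB =>
    image_perm_eq _ (fun c hc => swap_mem_of_sameSig hxy hB hc)
  have := h.2 _ hfix
  have h2 : Equiv.swap x y x = (1 : Equiv.Perm (Fin n)) x := by rw [this]
  exact (by simpa [Equiv.swap_apply_left] using h2 : y = x).symm

lemma baseSym_of_sig_inj {n r : ℕ} {𝓑 : Finset (Finset (Fin n))}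
    (h1 : ∀ B ∈ 𝓑, B.card = r) (h2 : ∀ x y, SameSig 𝓑 x y → x = y) :
    IsBaseSym n r 𝓑 := by
  refine ⟨h1, fun σ hσ => ?_⟩
  apply Equiv.ext
  intro x
  rw [Equiv.Perm.one_apply]
  exact h2 (σ x) x (sameSig_of_fix hσ x)

lemma baseAlt_almostInj {m r : ℕ} {𝓒 : Finset (Finset (Fin (m + 1)))}
    (h : IsBaseAlt (m + 1) r 𝓒) : ∃ a b, AlmostInj 𝓒 a b := by
  by_cases hex : ∃ x y, x ≠ y ∧ SameSig 𝓒 x y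
  · obtain ⟨a, b, hab, hR⟩ := hex
    refine ⟨a, b, fun x y hxy hRxy => ?_⟩
    by_contra hcon
    rw [not_or] at hcon
    obtain ⟨hc1, hc2⟩ := hcon
    set σ : Equiv.Perm (Fin (m + 1)) := Equiv.swap x y * Equiv.swap a b with hσ
    have hσA : σ ∈ alternatingGroup (Fin (m + 1)) := by
      rw [Equiv.Perm.mem_alternatingGroup, hσ, Equiv.Perm.sign_mul,
        Equiv.Perm.sign_swap hxy, Equiv.Perm.sign_swap hab]
      decide
    have hσfix : ∀ B ∈ 𝓒, B.image σ = B := by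
      intro B hB
      apply image_perm_eq
      intro c hc
      have h1 : Equiv.swap a b c ∈ B := swap_mem_of_sameSig hR hB hc
      have h2 : Equiv.swap x y (Equiv.swap a b c) ∈ B := swap_mem_of_sameSig hRxy hB h1
      simpa [hσ, Equiv.Perm.mul_apply] using h2
    have hσ1 : σ = 1 := h.2 σ hσA hσfix
    by_cases hxab : x = a ∨ x = b
    · have hya : y ≠ a := by
        rintro rfl
        rcases hxab with rfl | rfl
        · exact hxy rfl
        · exact hc2 ⟨rfl, rfl⟩
      have hyb : y ≠ b := by
        rintro rfl
        rcases hxab with rfl | rfl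
        · exact hc1 ⟨rfl, rfl⟩
        · exact hxy rfl
      have : σ y = y := by rw [hσ1]; rfl
      rw [hσ, Equiv.Perm.mul_apply, Equiv.swap_apply_of_ne_of_ne hya hyb,
        Equiv.swap_apply_right] at this
      exact hxy this
    · rw [not_or] at hxab
      have : σ x = x := by rw [hσ1]; rfl
      rw [hσ, Equiv.Perm.mul_apply, Equiv.swap_apply_of_ne_of_ne hxab.1 hxab.2,
        Equiv.swap_apply_left] at this
      exact hxy this.symm
  · push_neg at hex
    exact ⟨0, 0, fun x y hxy hR => absurd hR (hex x y hxy)⟩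

lemma baseAlt_of_almostInj {m r : ℕ} {𝓒 : Finset (Finset (Fin m))}
    (h1 : ∀ B ∈ 𝓒, B.card = r) {a b : Fin m} (hAI : AlmostInj 𝓒 a b) :
    IsBaseAlt m r 𝓒 := by
  refine ⟨h1, fun σ hσA hσfix => ?_⟩
  by_contra hσ1
  have hmove : ∃ c, σ c ≠ c := by
    by_contra hc
    push_neg at hc
    exact hσ1 (Equiv.ext hc)
  obtain ⟨c, hc⟩ := hmove
  have K : ∀ x, σ x ≠ x → (σ x = a ∧ x = b) ∨ (σ x = b ∧ x = a) :=
    fun x hx => hAI (σ x) x hx (sameSig_of_fix hσfix x)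
  have hkey : a ≠ b ∧ σ a = b ∧ σ b = a := by
    rcases K c hc with ⟨hca, hcb⟩ | ⟨hcb, hca⟩
    · have hba : σ b = a := hcb ▸ hca
      have hab : a ≠ b := fun he => hc (hca.trans (he.trans hcb.symm))
      have hsa : σ a ≠ a := fun he => hab (σ.injective (he.trans hba.symm))
      rcases K a hsa with ⟨_, h2'⟩ | ⟨h1', _⟩
      · exact absurd h2' hab
      · exact ⟨hab, h1', hba⟩
    · have hab' : σ a = b := hca ▸ hcb
      have hab : a ≠ b := fun he => hc (hcb.trans (he.symm.trans hca.symm))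
      have hsb : σ b ≠ b := fun he => hab (σ.injective (hab'.trans he.symm))
      rcases K b hsb with ⟨h1', _⟩ | ⟨h1', _⟩
      · exact ⟨hab, hab', h1'⟩
      · exact absurd h1' hsb
  obtain ⟨hab, hsa, hsb⟩ := hkey
  have hothers : ∀ x, x ≠ a → x ≠ b → σ x = x := by
    intro x hxa hxb
    by_contra hx
    rcases K x hx with ⟨_, h2'⟩ | ⟨_, h2'⟩
    · exact hxb h2'
    · exact hxa h2'
  have hswap : σ = Equiv.swap a b := by
    apply Equiv.ext
    intro x
    rcases eq_or_ne x a with rfl | hxa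
    · rw [Equiv.swap_apply_left]; exact hsa
    rcases eq_or_ne x b with rfl | hxb
    · rw [Equiv.swap_apply_right]; exact hsb
    · rw [Equiv.swap_apply_of_ne_of_ne hxa hxb]; exact hothers x hxa hxb
  have hsgn := Equiv.Perm.mem_alternatingGroup.mp hσA
  rw [hswap, Equiv.Perm.sign_swap hab] at hsgn
  exact absurd hsgn (by decide)

/-! ### Direction A : a base for `S_n` yields a base for `A_{n+1}` of the same size -/

def csEmb (n : ℕ) : Fin n ↪ Fin (n + 1) := ⟨Fin.castSucc, Fin.castSucc_injective n⟩

lemma dirA {n r : ℕ} {𝓑 : Finset (Finset (Fin n))} (h : IsBaseSym n r 𝓑) :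
    IsBaseAlt (n + 1) r (𝓑.image (Finset.map (csEmb n))) ∧
      (𝓑.image (Finset.map (csEmb n))).card = 𝓑.card := by
  set 𝓒 := 𝓑.image (Finset.map (csEmb n)) with h𝓒
  have hmem : ∀ (x : Fin n) (B : Finset (Fin n)),
      Fin.castSucc x ∈ B.map (csEmb n) ↔ x ∈ B := fun x B => Finset.mem_map' _
  have hlast : ∀ B : Finset (Fin n), Fin.last n ∉ B.map (csEmb n) := by
    intro B hmem'
    obtain ⟨y, _, hy⟩ := Finset.mem_map.mp hmem'
    exact (Fin.castSucc_lt_last y).ne hy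
  have hRcs : ∀ x y : Fin n,
      SameSig 𝓒 (Fin.castSucc x) (Fin.castSucc y) → SameSig 𝓑 x y := by
    intro x y hR B hB
    have := hR (B.map (csEmb n)) (Finset.mem_image_of_mem _ hB)
    rwa [hmem, hmem] at this
  have hRlast : ∀ x : Fin n,
      SameSig 𝓒 (Fin.castSucc x) (Fin.last n) → ∀ B ∈ 𝓑, x ∉ B := by
    intro x hR B hB hx
    have := hR (B.map (csEmb n)) (Finset.mem_image_of_mem _ hB)
    rw [hmem] at this
    exact hlast B (this.mp hx)
  have hcards : ∀ C ∈ 𝓒, C.card = r := by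
    intro C hC
    obtain ⟨B, hB, rfl⟩ := Finset.mem_image.mp hC
    rw [Finset.card_map]
    exact h.1 B hB
  have hcard : 𝓒.card = 𝓑.card :=
    Finset.card_image_of_injective _ (Finset.map_injective (csEmb n))
  refine ⟨?_, hcard⟩
  by_cases hz : ∃ z : Fin n, ∀ B ∈ 𝓑, z ∉ B
  · obtain ⟨z, hz⟩ := hz
    refine baseAlt_of_almostInj hcards (a := Fin.castSucc z) (b := Fin.last n) ?_
    intro x y hxy hR
    rcases Fin.eq_castSucc_or_eq_last x with ⟨x', rfl⟩ | rfl
    · rcases Fin.eq_castSucc_or_eq_last y with ⟨y', rfl⟩ | rfl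
      · exact absurd (congrArg Fin.castSucc (baseSym_sig_inj h x' y' (hRcs x' y' hR)))
          hxy
      · left
        have hx' : ∀ B ∈ 𝓑, x' ∉ B := hRlast x' hR
        have : x' = z := baseSym_sig_inj h x' z
          (fun B hB => iff_of_false (hx' B hB) (hz B hB))
        exact ⟨congrArg Fin.castSucc this, rfl⟩
    · rcases Fin.eq_castSucc_or_eq_last y with ⟨y', rfl⟩ | rfl
      · right
        have hy' : ∀ B ∈ 𝓑, y' ∉ B := hRlast y'
          (fun B hB => (hR B hB).symm)
        have : y' = z := baseSym_sig_inj h y' z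
          (fun B hB => iff_of_false (hy' B hB) (hz B hB))
        exact ⟨rfl, congrArg Fin.castSucc this⟩
      · exact absurd rfl hxy
  · push_neg at hz
    refine baseAlt_of_almostInj hcards (a := Fin.last n) (b := Fin.last n) ?_
    intro x y hxy hR
    exfalso
    rcases Fin.eq_castSucc_or_eq_last x with ⟨x', rfl⟩ | rfl
    · rcases Fin.eq_castSucc_or_eq_last y with ⟨y', rfl⟩ | rfl
      · exact hxy (congrArg Fin.castSucc (baseSym_sig_inj h x' y' (hRcs x' y' hR)))
      · obtain ⟨B, hB, hxB⟩ := hz x'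
        exact (hRlast x' hR B hB) hxB
    · rcases Fin.eq_castSucc_or_eq_last y with ⟨y', rfl⟩ | rfl
      · obtain ⟨B, hB, hyB⟩ := hz y'
        exact (hRlast y' (fun B hB => (hR B hB).symm) B hB) hyB
      · exact hxy rfl

/-! ### Direction B : a base for `A_{n+1}` yields a base for `S_n` of at most the same size -/

lemma card_filter_subtype {γ : Type*} [DecidableEq γ] (T : Finset γ) (p : γ → Prop)
    [DecidablePred p] :
    (Finset.univ.filter (fun s : {x // x ∈ T} => p s.1)).card = (T.filter p).card := by
  apply Finset.card_bij (fun s _ => s.1)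
  · intro s hs
    exact Finset.mem_filter.mpr ⟨s.2, (Finset.mem_filter.mp hs).2⟩
  · intro s _ t _ he
    exact Subtype.ext he
  · intro t ht
    exact ⟨⟨t, (Finset.mem_filter.mp ht).1⟩,
      Finset.mem_filter.mpr ⟨Finset.mem_univ _, (Finset.mem_filter.mp ht).2⟩, rfl⟩

lemma dirB {n r : ℕ} (hr : 1 ≤ r) (hn : 2*r ≤ n) {𝓒 : Finset (Finset (Fin (n+1)))}
    (h : IsBaseAlt (n+1) r 𝓒) :
    ∃ 𝓑 : Finset (Finset (Fin n)), IsBaseSym n r 𝓑 ∧ 𝓑.card ≤ 𝓒.card := by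
  classical
  obtain ⟨a, b, hAI⟩ := baseAlt_almostInj h
  set g : Fin (n+1) → Finset {C // C ∈ 𝓒} :=
    fun x => Finset.univ.filter (fun C => x ∈ C.1) with hg
  have hgR : ∀ x y, g x = g y → SameSig 𝓒 x y := by
    intro x y he B hB
    have := Finset.ext_iff.mp he ⟨B, hB⟩
    simp only [hg, Finset.mem_filter, Finset.mem_univ, true_and] at this
    exact this
  have hginj : ∀ x ∈ Finset.univ.erase a, ∀ y ∈ Finset.univ.erase a, g x = g y → x = y := by
    intro x hx y hy he
    by_contra hxy
    rcases hAI x y hxy (hgR x y he) with ⟨hxa, _⟩ | ⟨_, hya⟩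
    · exact (Finset.ne_of_mem_erase hx) hxa
    · exact (Finset.ne_of_mem_erase hy) hya
  set S := (Finset.univ.erase a).image g with hS
  have hScard : S.card = n := by
    rw [hS, Finset.card_image_of_injOn (fun x hx y hy => hginj x hx y hy),
      Finset.card_erase_of_mem (Finset.mem_univ a), Finset.card_univ, Fintype.card_fin]
    omega
  have hgcard : ∀ x, (g x).card = covr 𝓒 x := by
    intro x
    rw [hg]
    exact card_filter_subtype 𝓒 (fun C => x ∈ C)
  have hsum : ∑ s ∈ S, s.card ≤ (Fintype.card {C // C ∈ 𝓒}) * r := by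
    have h1 : ∑ s ∈ S, s.card = ∑ x ∈ Finset.univ.erase a, (g x).card :=
      Finset.sum_image (fun x hx y hy => hginj x hx y hy)
    have h2 : ∑ x ∈ Finset.univ.erase a, (g x).card ≤ ∑ x, (g x).card :=
      Finset.sum_le_sum_of_subset (Finset.subset_univ _)
    have h3 : ∑ x, (g x).card = ∑ x, covr 𝓒 x :=
      Finset.sum_congr rfl (fun x _ => hgcard x)
    have h4 : ∑ x, covr 𝓒 x = ∑ C ∈ 𝓒, C.card := double_count 𝓒
    have h5 : ∑ C ∈ 𝓒, C.card = 𝓒.card * r := by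
      rw [Finset.sum_congr rfl (fun C hC => h.1 C hC), Finset.sum_const, smul_eq_mul]
    rw [h1, Fintype.card_coe]
    omega
  obtain ⟨G, hGcard, hGcov⟩ := ct_exists hr hn S hScard hsum
  have e : {s // s ∈ G} ≃ Fin n := G.equivFinOfCardEq hGcard
  set Bfun : {C // C ∈ 𝓒} → Finset (Fin n) :=
    fun C => Finset.univ.filter (fun x : Fin n => C ∈ (e.symm x).1) with hBfun
  have hmemB : ∀ (C : {C // C ∈ 𝓒}) (x : Fin n), x ∈ Bfun C ↔ C ∈ (e.symm x).1 := by
    intro C x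
    simp [hBfun]
  have hBcard : ∀ C, (Bfun C).card = r := by
    intro C
    have h1 : (Bfun C).card = (Finset.univ.filter (fun s : {s // s ∈ G} => C ∈ s.1)).card := by
      rw [hBfun]
      apply Finset.card_bij (fun x _ => e.symm x)
      · intro x hx
        exact Finset.mem_filter.mpr ⟨Finset.mem_univ _, (Finset.mem_filter.mp hx).2⟩
      · intro x _ y _ he
        exact e.symm.injective he
      · intro s hs
        refine ⟨e s, Finset.mem_filter.mpr ⟨Finset.mem_univ _, ?_⟩, by simp⟩
        simpa using (Finset.mem_filter.mp hs).2
    rw [h1, card_filter_subtype G (fun s => C ∈ s)]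
    exact hGcov C
  refine ⟨Finset.univ.image Bfun, ?_, ?_⟩
  · apply baseSym_of_sig_inj
    · intro B hB
      obtain ⟨C, _, rfl⟩ := Finset.mem_image.mp hB
      exact hBcard C
    · intro x y hxy
      have h1 : ∀ C, C ∈ (e.symm x).1 ↔ C ∈ (e.symm y).1 := by
        intro C
        have := hxy (Bfun C) (Finset.mem_image_of_mem _ (Finset.mem_univ C))
        rwa [hmemB, hmemB] at this
      have h2 : e.symm x = e.symm y := Subtype.ext (Finset.ext h1)
      exact e.symm.injective h2
  · calc (Finset.univ.image Bfun).card ≤ Finset.univ.card := Finset.card_image_le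
      _ = 𝓒.card := by rw [Finset.card_univ, Fintype.card_coe]

end Auxiliary

/-- For `n ≥ 2r`, the base size of `A_{n+1}` on `r`-subsets of `[n+1]` equals the base
size of `S_n` on `r`-subsets of `[n]`. -/
theorem baseSize_alt_eq_baseSize_sym (n r : ℕ) (hn : 0 < n) (hr : 0 < r)
    (h2r : 2 * r ≤ n) : baseSizeAlt (n + 1) r = baseSizeSym n r := by
  classical
  unfold baseSizeAlt baseSizeSym
  have hsub : ∀ l, l ∈ {l : ℕ | ∃ 𝓑 : Finset (Finset (Fin n)), IsBaseSym n r 𝓑 ∧ 𝓑.card = l} →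
      l ∈ {l : ℕ | ∃ 𝓒 : Finset (Finset (Fin (n + 1))), IsBaseAlt (n + 1) r 𝓒 ∧ 𝓒.card = l} := by
    rintro l ⟨𝓑, hB, rfl⟩
    obtain ⟨h1, h2⟩ := dirA hB
    exact ⟨_, h1, h2⟩
  have hBB : ∀ l, l ∈ {l : ℕ | ∃ 𝓒 : Finset (Finset (Fin (n + 1))), IsBaseAlt (n + 1) r 𝓒 ∧ 𝓒.card = l} →
      ∃ l', l' ∈ {l : ℕ | ∃ 𝓑 : Finset (Finset (Fin n)), IsBaseSym n r 𝓑 ∧ 𝓑.card = l} ∧ l' ≤ l := by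
    rintro l ⟨𝓒, hC, rfl⟩
    obtain ⟨𝓑, h1, h2⟩ := dirB hr h2r hC
    exact ⟨𝓑.card, ⟨𝓑, h1, rfl⟩, h2⟩
  rcases Set.eq_empty_or_nonempty
      {l : ℕ | ∃ 𝓒 : Finset (Finset (Fin (n + 1))), IsBaseAlt (n + 1) r 𝓒 ∧ 𝓒.card = l} with
    hAe | hAne
  · have hSe : {l : ℕ | ∃ 𝓑 : Finset (Finset (Fin n)), IsBaseSym n r 𝓑 ∧ 𝓑.card = l} = ∅ :=
      Set.eq_empty_iff_forall_notMem.mpr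
        (fun l hl => Set.eq_empty_iff_forall_notMem.mp hAe l (hsub l hl))
    rw [hAe, hSe]
  · obtain ⟨l', hl', hle⟩ := hBB _ (Nat.sInf_mem hAne)
    apply le_antisymm
    · exact Nat.sInf_le (hsub _ (Nat.sInf_mem ⟨l', hl'⟩))
    · exact le_trans (Nat.sInf_le hl') hle
end

section
/- Let n and r be positive integers with n ≥ 2r. Then the base size of the symmetric group S_n acting on the set of r-element subsets of [n] equals the base size of S_n acting on the set of all subsets of [n] of size at most r. -/
/-- `𝓑` is a base for `S_n` acting on subsets of `[n]` of size at most `r`. -/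
def IsBaseSymLe (n r : ℕ) (𝓑 : Finset (Finset (Fin n))) : Prop :=
  (∀ B ∈ 𝓑, B.card ≤ r) ∧
    ∀ σ : Equiv.Perm (Fin n), (∀ B ∈ 𝓑, B.image σ = B) → σ = 1

/-- The base size of `S_n` acting on subsets of `[n]` of size at most `r`. -/
noncomputable def baseSizeSymLe (n r : ℕ) : ℕ :=
  sInf {l : ℕ | ∃ 𝓑 : Finset (Finset (Fin n)), IsBaseSymLe n r 𝓑 ∧ 𝓑.card = l}



open Finset

/-- separating family -/
def SepFam (n : ℕ) (𝓑 : Finset (Finset (Fin n))) : Prop :=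
  ∀ x y : Fin n, x ≠ y → ∃ B ∈ 𝓑, (x ∈ B ∧ y ∉ B) ∨ (y ∈ B ∧ x ∉ B)

lemma image_eq_of_mem_iff {n : ℕ} {B : Finset (Fin n)} {σ : Equiv.Perm (Fin n)}
    (h : ∀ a, a ∈ B ↔ σ a ∈ B) : B.image σ = B := by
  apply Finset.eq_of_subset_of_card_le
  · intro a ha
    rcases Finset.mem_image.1 ha with ⟨b, hb, rfl⟩
    exact (h b).1 hb
  · rw [Finset.card_image_of_injective _ σ.injective]

lemma base_iff_sep {n : ℕ} (𝓑 : Finset (Finset (Fin n))) :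
    (∀ σ : Equiv.Perm (Fin n), (∀ B ∈ 𝓑, B.image σ = B) → σ = 1) ↔ SepFam n 𝓑 := by
  constructor
  · intro h x y hxy
    by_contra hc
    push_neg at hc
    have hs : ∀ B ∈ 𝓑, (x ∈ B ↔ y ∈ B) := by
      intro B hB
      have := hc B hB
      tauto
    have h1 : Equiv.swap x y = 1 := by
      apply h
      intro B hB
      apply image_eq_of_mem_iff
      intro a
      rcases eq_or_ne a x with rfl | hax
      · rw [Equiv.swap_apply_left]; exact hs B hB
      rcases eq_or_ne a y with rfl | hay
      · rw [Equiv.swap_apply_right]; exact (hs B hB).symm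
      · rw [Equiv.swap_apply_of_ne_of_ne hax hay]
    have := congrArg (fun e : Equiv.Perm (Fin n) => e x) h1
    simp [Equiv.swap_apply_left] at this
    exact hxy this.symm
  · intro hsep σ hσ
    apply Equiv.ext
    intro a
    simp only [Equiv.Perm.one_apply]
    by_contra ha
    have key : ∀ B ∈ 𝓑, (a ∈ B ↔ σ a ∈ B) := by
      intro B hB
      constructor
      · intro h'
        have : σ a ∈ B.image σ := Finset.mem_image_of_mem _ h'
        rwa [hσ B hB] at this
      · intro h'
        have : σ a ∈ B.image σ := by rw [hσ B hB]; exact h'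
        rcases Finset.mem_image.1 this with ⟨b, hb, hb2⟩
        have : b = a := σ.injective hb2
        rwa [this] at hb
    obtain ⟨B, hB, hB2⟩ := hsep a (σ a) (fun h => ha h.symm)
    have := key B hB
    tauto

lemma exists_uniform_sep {n : ℕ} (r : ℕ) (hr : 0 < r) (h2r : 2 * r ≤ n) :
    ∀ k (𝓑 : Finset (Finset (Fin n))), ((𝓑.filter (fun B => B.card ≠ r)).card = k) →
      (∀ B ∈ 𝓑, B.card ≤ r) → SepFam n 𝓑 →
      ∃ 𝓒 : Finset (Finset (Fin n)), (∀ B ∈ 𝓒, B.card = r) ∧ SepFam n 𝓒 ∧ 𝓒.card ≤ 𝓑.card := by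
  intro k
  induction k using Nat.strong_induction_on with
  | _ k IH =>
  intro 𝓑 hk hle hsep
  rcases Nat.eq_zero_or_pos k with rfl | hkpos
  · refine ⟨𝓑, ?_, hsep, le_rfl⟩
    intro B hB
    by_contra hB'
    have hmem : B ∈ 𝓑.filter (fun B => B.card ≠ r) := mem_filter.2 ⟨hB, hB'⟩
    rw [Finset.card_eq_zero.1 hk] at hmem
    exact absurd hmem (Finset.notMem_empty B)
  · classical
    obtain ⟨A, hA⟩ : (𝓑.filter (fun B => B.card ≠ r)).Nonempty := by
      rw [← Finset.card_pos, hk]; exact hkpos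
    rw [mem_filter] at hA
    obtain ⟨hA𝓑, hAcard⟩ := hA
    have hAlt : A.card < r := lt_of_le_of_ne (hle A hA𝓑) hAcard
    set 𝓑' := 𝓑.erase A with h𝓑'
    set Rel : Fin n → Fin n → Prop := fun x y => ∀ B ∈ 𝓑', (x ∈ B ↔ y ∈ B) with hRel
    have hsepA : ∀ x y : Fin n, x ≠ y → Rel x y → ((x ∈ A ∧ y ∉ A) ∨ (y ∈ A ∧ x ∉ A)) := by
      intro x y hxy hrel
      obtain ⟨B, hB, hB2⟩ := hsep x y hxy
      rcases eq_or_ne B A with rfl | hBA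
      · exact hB2
      · exfalso
        have hBm : B ∈ 𝓑' := Finset.mem_erase.2 ⟨hBA, hB⟩
        have := hrel B hBm
        tauto
    set P : Finset (Fin n) := univ.filter (fun x => ∃ y, y ≠ x ∧ Rel x y) with hP
    set T : Finset (Fin n) := P.filter (fun x => x ∈ A) with hT
    have hTP : T ⊆ P := filter_subset _ _
    have hTA : T ⊆ A := fun x hx => (mem_filter.1 hx).2
    -- partner map
    have hpartner : ∀ p ∈ P \ T, ∃ y, y ≠ p ∧ Rel p y ∧ y ∈ T := by
      intro p hp
      rw [Finset.mem_sdiff] at hp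
      obtain ⟨hpP, hpT⟩ := hp
      obtain ⟨y, hy1, hy2⟩ := (mem_filter.1 hpP).2
      have hpA : p ∉ A := fun h => hpT (mem_filter.2 ⟨hpP, h⟩)
      have hyA : y ∈ A := by
        rcases hsepA p y (Ne.symm hy1) hy2 with ⟨h1, _⟩ | ⟨h1, _⟩
        · exact absurd h1 hpA
        · exact h1
      have hyP : y ∈ P := by
        refine mem_filter.2 ⟨mem_univ _, ⟨p, Ne.symm hy1, fun B hB => (hy2 B hB).symm⟩⟩
      exact ⟨y, hy1, hy2, mem_filter.2 ⟨hyP, hyA⟩⟩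
    have hcard_diff : (P \ T).card ≤ T.card := by
      set f : Fin n → Fin n := fun p =>
        if h : ∃ y, y ≠ p ∧ Rel p y ∧ y ∈ T then h.choose else p with hf
      apply Finset.card_le_card_of_injOn f
      · intro p hp
        have h := hpartner p hp
        rw [hf]; simp only [dif_pos h]
        exact h.choose_spec.2.2
      · intro p1 hp1 p2 hp2 heq
        simp only [Finset.coe_sdiff, Set.mem_diff, Finset.mem_coe] at hp1 hp2
        have hp1' : p1 ∈ P \ T := Finset.mem_sdiff.2 hp1
        have hp2' : p2 ∈ P \ T := Finset.mem_sdiff.2 hp2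
        have h1 := hpartner p1 hp1'
        have h2 := hpartner p2 hp2'
        rw [hf] at heq
        simp only [dif_pos h1, dif_pos h2] at heq
        obtain ⟨hy1ne, hy1rel, hy1T⟩ := h1.choose_spec
        obtain ⟨hy2ne, hy2rel, hy2T⟩ := h2.choose_spec
        by_contra hne
        have hrel12 : Rel p1 p2 := by
          intro B hB
          rw [hy1rel B hB, heq, ← hy2rel B hB]
        have hp1A : p1 ∉ A := fun h => (Finset.mem_sdiff.1 hp1').2 (mem_filter.2 ⟨hp1.1, h⟩)
        have hp2A : p2 ∉ A := fun h => (Finset.mem_sdiff.1 hp2').2 (mem_filter.2 ⟨hp2.1, h⟩)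
        rcases hsepA p1 p2 hne hrel12 with ⟨h1, _⟩ | ⟨h1, _⟩
        · exact hp1A h1
        · exact hp2A h1
    have hPcard : P.card ≤ 2 * T.card := by
      have := Finset.card_sdiff_add_card_eq_card hTP
      omega
    have hTr : T.card < r := lt_of_le_of_lt (card_le_card hTA) hAlt
    have hPn : P.card ≤ n := by
      have := Finset.card_le_univ P
      rwa [Fintype.card_fin] at this
    have hEc : r - T.card ≤ (Pᶜ : Finset (Fin n)).card := by
      rw [Finset.card_compl, Fintype.card_fin]
      omega
    obtain ⟨E, hEsub, hEcard⟩ := Finset.exists_subset_card_eq hEc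
    have hTE : Disjoint T E := by
      rw [Finset.disjoint_left]
      intro a haT haE
      exact (Finset.mem_compl.1 (hEsub haE)) (hTP haT)
    set C : Finset (Fin n) := T ∪ E with hC
    have hCcard : C.card = r := by
      rw [hC, Finset.card_union_of_disjoint hTE, hEcard]
      omega
    have hsep' : SepFam n (insert C 𝓑') := by
      intro x y hxy
      by_cases hxyR : Rel x y
      · refine ⟨C, mem_insert_self _ _, ?_⟩
        have hxP : x ∈ P := mem_filter.2 ⟨mem_univ _, ⟨y, Ne.symm hxy, hxyR⟩⟩
        have hyP : y ∈ P := mem_filter.2 ⟨mem_univ _, ⟨x, hxy, fun B hB => (hxyR B hB).symm⟩⟩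
        have hyE : y ∉ E := fun h => (Finset.mem_compl.1 (hEsub h)) hyP
        have hxE : x ∉ E := fun h => (Finset.mem_compl.1 (hEsub h)) hxP
        rcases hsepA x y hxy hxyR with ⟨h1, h2⟩ | ⟨h1, h2⟩
        · left
          refine ⟨Finset.mem_union_left _ (mem_filter.2 ⟨hxP, h1⟩), ?_⟩
          rw [hC, Finset.mem_union]
          rintro (h | h)
          · exact h2 (mem_filter.1 h).2
          · exact hyE h
        · right
          refine ⟨Finset.mem_union_left _ (mem_filter.2 ⟨hyP, h1⟩), ?_⟩
          rw [hC, Finset.mem_union]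
          rintro (h | h)
          · exact h2 (mem_filter.1 h).2
          · exact hxE h
      · have hxyR' : ∃ B ∈ 𝓑', ¬(x ∈ B ↔ y ∈ B) := by
          by_contra hcon
          push_neg at hcon
          exact hxyR hcon
        obtain ⟨B, hB, hB2⟩ := hxyR'
        refine ⟨B, mem_insert_of_mem hB, ?_⟩
        tauto
    have hsubfilter : (insert C 𝓑').filter (fun B => B.card ≠ r) ⊆
        (𝓑.filter (fun B => B.card ≠ r)).erase A := by
      intro B hB
      rw [mem_filter, mem_insert] at hB
      obtain ⟨hB1 | hB1, hB2⟩ := hB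
      · exact absurd (hB1 ▸ hCcard) hB2
      · rw [h𝓑', Finset.mem_erase] at hB1
        exact Finset.mem_erase.2 ⟨hB1.1, mem_filter.2 ⟨hB1.2, hB2⟩⟩
    have hklt : ((insert C 𝓑').filter (fun B => B.card ≠ r)).card < k := by
      have h1 := Finset.card_le_card hsubfilter
      have h2 : A ∈ 𝓑.filter (fun B => B.card ≠ r) := mem_filter.2 ⟨hA𝓑, hAcard⟩
      rw [Finset.card_erase_of_mem h2, hk] at h1
      omega
    have hle' : ∀ B ∈ insert C 𝓑', B.card ≤ r := by
      intro B hB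
      rcases Finset.mem_insert.1 hB with rfl | hB'
      · exact le_of_eq hCcard
      · exact hle B (Finset.mem_of_mem_erase hB')
    obtain ⟨𝓒, h1, h2, h3⟩ := IH _ hklt (insert C 𝓑') rfl hle' hsep'
    refine ⟨𝓒, h1, h2, ?_⟩
    have hB'card : 𝓑'.card = 𝓑.card - 1 := by
      rw [h𝓑', Finset.card_erase_of_mem hA𝓑]
    have hpos : 0 < 𝓑.card := Finset.card_pos.2 ⟨A, hA𝓑⟩
    calc 𝓒.card ≤ (insert C 𝓑').card := h3
      _ ≤ 𝓑'.card + 1 := Finset.card_insert_le _ _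
      _ ≤ 𝓑.card := by omega

lemma exists_base_sym (n r : ℕ) (hr : 0 < r) (h2r : 2 * r ≤ n) :
    ∃ 𝓑 : Finset (Finset (Fin n)), (∀ B ∈ 𝓑, B.card = r) ∧ SepFam n 𝓑 := by
  classical
  refine ⟨Finset.univ.filter (fun B : Finset (Fin n) => B.card = r),
    fun B hB => (Finset.mem_filter.1 hB).2, ?_⟩
  intro x y hxy
  have hcard : r - 1 ≤ ((Finset.univ.erase y).erase x).card := by
    rw [Finset.card_erase_of_mem (Finset.mem_erase.2 ⟨hxy, Finset.mem_univ x⟩),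
      Finset.card_erase_of_mem (Finset.mem_univ y), Finset.card_univ, Fintype.card_fin]
    omega
  obtain ⟨E, hE, hEcard⟩ := Finset.exists_subset_card_eq hcard
  have hxE : x ∉ E := fun h => (Finset.mem_erase.1 (hE h)).1 rfl
  have hyE : y ∉ E := fun h => (Finset.mem_erase.1 (Finset.mem_of_mem_erase (hE h))).1 rfl
  refine ⟨insert x E, ?_, Or.inl ⟨Finset.mem_insert_self _ _, ?_⟩⟩
  · refine Finset.mem_filter.2 ⟨Finset.mem_univ _, ?_⟩
    rw [Finset.card_insert_of_notMem hxE, hEcard]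
    omega
  · intro hy
    rcases Finset.mem_insert.1 hy with h | h
    · exact hxy h.symm
    · exact hyE h

/-- Lemma 2.1 (Halasi): for `n ≥ 2r`, `b(S_{n,r}) = b(S_{n,≤r})`. -/
theorem baseSize_sym_eq_baseSize_symLe (n r : ℕ) (hn : 0 < n) (hr : 0 < r)
    (h2r : 2 * r ≤ n) : baseSizeSym n r = baseSizeSymLe n r := by
  classical
  have hsub : {l : ℕ | ∃ 𝓑 : Finset (Finset (Fin n)), IsBaseSym n r 𝓑 ∧ 𝓑.card = l} ⊆
      {l : ℕ | ∃ 𝓑 : Finset (Finset (Fin n)), IsBaseSymLe n r 𝓑 ∧ 𝓑.card = l} := by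
    rintro l ⟨𝓑, ⟨h1, h2⟩, h3⟩
    exact ⟨𝓑, ⟨fun B hB => (h1 B hB).le, h2⟩, h3⟩
  have hne1 : {l : ℕ | ∃ 𝓑 : Finset (Finset (Fin n)), IsBaseSym n r 𝓑 ∧ 𝓑.card = l}.Nonempty := by
    obtain ⟨𝓑, h1, h2⟩ := exists_base_sym n r hr h2r
    exact ⟨𝓑.card, 𝓑, ⟨h1, (base_iff_sep 𝓑).2 h2⟩, rfl⟩
  have hne2 : {l : ℕ | ∃ 𝓑 : Finset (Finset (Fin n)), IsBaseSymLe n r 𝓑 ∧ 𝓑.card = l}.Nonempty :=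
    hne1.mono hsub
  unfold baseSizeSym baseSizeSymLe
  apply le_antisymm
  · obtain ⟨𝓑, ⟨h1, h2⟩, h3⟩ := Nat.sInf_mem hne2
    obtain ⟨𝓒, hc1, hc2, hc3⟩ := exists_uniform_sep r hr h2r _ 𝓑 rfl h1 ((base_iff_sep 𝓑).1 h2)
    have hmem : 𝓒.card ∈ {l : ℕ | ∃ 𝓑 : Finset (Finset (Fin n)), IsBaseSym n r 𝓑 ∧ 𝓑.card = l} :=
      ⟨𝓒, ⟨hc1, (base_iff_sep 𝓒).2 hc2⟩, rfl⟩
    exact le_trans (Nat.sInf_le hmem) (h3 ▸ hc3)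
  · exact Nat.sInf_le (hsub (Nat.sInf_mem hne1))
end

section
/- Let n and r be positive integers and let 𝓒 be a set of subsets of [n], each of size at most r. Then 𝓒 is a base for the alternating group A_n acting on the set of subsets of [n] of size at most r (i.e., the only even permutation σ with σ(B) = B for every B ∈ 𝓒 is the identity) if and only if the equivalence classes of [n] under the relation x ∼ y ⟺ N_𝓒(x) = N_𝓒(y) are all singletons except possibly one class of size exactly two. -/
/-- The `𝓒`-neighbourhood of a point `x ∈ [n]`: the set of members of `𝓒` containing `x`. -/
def nbhd {n : ℕ} (𝓒 : Finset (Finset (Fin n))) (x : Fin n) : Finset (Finset (Fin n)) :=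
  𝓒.filter (fun B => x ∈ B)

/-- The equivalence class of `x ∈ [n]` under the relation `y ∼ x ⟺ N_𝓒(y) = N_𝓒(x)`. -/
def nbhdClass {n : ℕ} (𝓒 : Finset (Finset (Fin n))) (x : Fin n) : Finset (Fin n) :=
  Finset.univ.filter (fun y => nbhd 𝓒 y = nbhd 𝓒 x)

lemma mem_nbhdClass {n : ℕ} (𝓒 : Finset (Finset (Fin n))) (x y : Fin n) :
    y ∈ nbhdClass 𝓒 x ↔ nbhd 𝓒 y = nbhd 𝓒 x := by
  simp [nbhdClass]

lemma nbhdClass_eq_of_nbhd_eq {n : ℕ} (𝓒 : Finset (Finset (Fin n))) {x y : Fin n}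
    (h : nbhd 𝓒 x = nbhd 𝓒 y) : nbhdClass 𝓒 x = nbhdClass 𝓒 y := by
  ext z; simp [mem_nbhdClass, h]

lemma fix_iff_nbhd {n : ℕ} (𝓒 : Finset (Finset (Fin n))) (σ : Equiv.Perm (Fin n)) :
    (∀ B ∈ 𝓒, B.image σ = B) ↔ ∀ x, nbhd 𝓒 (σ x) = nbhd 𝓒 x := by
  constructor
  · intro h x
    ext B
    simp only [nbhd, Finset.mem_filter, and_congr_right_iff]
    intro hB
    conv_lhs => rw [← h B hB]
    simp [σ.injective.eq_iff]
  · intro h B hB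
    apply Finset.eq_of_subset_of_card_le
    · intro b hb
      obtain ⟨a, haB, rfl⟩ := Finset.mem_image.mp hb
      have : B ∈ nbhd 𝓒 (σ a) := by
        rw [h a]; exact Finset.mem_filter.mpr ⟨hB, haB⟩
      exact (Finset.mem_filter.mp this).2
    · rw [Finset.card_image_of_injective _ σ.injective]

lemma nbhd_swap {n : ℕ} (𝓒 : Finset (Finset (Fin n))) {u v : Fin n}
    (huv : nbhd 𝓒 u = nbhd 𝓒 v) (x : Fin n) :
    nbhd 𝓒 (Equiv.swap u v x) = nbhd 𝓒 x := by
  rcases eq_or_ne x u with rfl | hxu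
  · rw [Equiv.swap_apply_left]; exact huv.symm
  rcases eq_or_ne x v with rfl | hxv
  · rw [Equiv.swap_apply_right]; exact huv
  · rw [Equiv.swap_apply_of_ne_of_ne hxu hxv]

/-- A collection `𝓒` of subsets of `[n]`, each of size at most `r`, is a base for the
alternating group `A_n` acting on subsets of `[n]` of size at most `r` if and only if
the equivalence classes of `[n]` under `x ∼ y ⟺ N_𝓒(x) = N_𝓒(y)` are all singletons
except possibly one class of size exactly two. -/
theorem isBaseAlt_iff_classes (n r : ℕ) (hn : 0 < n) (hr : 0 < r)
    (𝓒 : Finset (Finset (Fin n))) (hcard : ∀ B ∈ 𝓒, B.card ≤ r) :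
    (∀ σ ∈ alternatingGroup (Fin n), (∀ B ∈ 𝓒, B.image σ = B) → σ = 1) ↔
      ((∀ x : Fin n, (nbhdClass 𝓒 x).card ≤ 2) ∧
        ∀ x y : Fin n, (nbhdClass 𝓒 x).card = 2 → (nbhdClass 𝓒 y).card = 2 →
          nbhdClass 𝓒 x = nbhdClass 𝓒 y) := by
  constructor
  · intro hbase
    constructor
    · intro x
      by_contra hc
      push_neg at hc
      obtain ⟨a, b, c, ha, hb, hc3, hab, hac, hbc⟩ := Finset.two_lt_card_iff.mp hc
      rw [mem_nbhdClass] at ha hb hc3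
      have hNab : nbhd 𝓒 a = nbhd 𝓒 b := ha.trans hb.symm
      have hNac : nbhd 𝓒 a = nbhd 𝓒 c := ha.trans hc3.symm
      set σ : Equiv.Perm (Fin n) := Equiv.swap a b * Equiv.swap a c with hσdef
      have hmem : σ ∈ alternatingGroup (Fin n) := by
        rw [Equiv.Perm.mem_alternatingGroup, hσdef, map_mul,
          Equiv.Perm.sign_swap hab, Equiv.Perm.sign_swap hac]
        decide
      have hfix : ∀ B ∈ 𝓒, B.image σ = B := by
        rw [fix_iff_nbhd]
        intro x
        show nbhd 𝓒 (Equiv.swap a b (Equiv.swap a c x)) = nbhd 𝓒 x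
        rw [nbhd_swap 𝓒 hNab, nbhd_swap 𝓒 hNac]
      have := hbase σ hmem hfix
      have hσa : σ a = c := by
        simp [hσdef, Equiv.swap_apply_of_ne_of_ne hac.symm hbc.symm]
      rw [this] at hσa
      exact hac (by simpa using hσa)
    · intro x y hx hy
      by_contra hne
      have hNxy : nbhd 𝓒 x ≠ nbhd 𝓒 y := fun h => hne (nbhdClass_eq_of_nbhd_eq 𝓒 h)
      have hxmem : x ∈ nbhdClass 𝓒 x := (mem_nbhdClass 𝓒 x x).mpr rfl
      have hymem : y ∈ nbhdClass 𝓒 y := (mem_nbhdClass 𝓒 y y).mpr rfl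
      obtain ⟨x', hx'mem, hx'⟩ := Finset.exists_mem_ne (s := nbhdClass 𝓒 x) (by omega) x
      obtain ⟨y', hy'mem, hy'⟩ := Finset.exists_mem_ne (s := nbhdClass 𝓒 y) (by omega) y
      rw [mem_nbhdClass] at hx'mem hy'mem
      have hNxx' : nbhd 𝓒 x = nbhd 𝓒 x' := hx'mem.symm
      have hNyy' : nbhd 𝓒 y = nbhd 𝓒 y' := hy'mem.symm
      have hxy : x ≠ y := fun h => hNxy (by rw [h])
      have hxy' : x ≠ y' := fun h => hNxy (by rw [h, ← hNyy'])
      set σ : Equiv.Perm (Fin n) := Equiv.swap x x' * Equiv.swap y y' with hσdef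
      have hmem : σ ∈ alternatingGroup (Fin n) := by
        rw [Equiv.Perm.mem_alternatingGroup, hσdef, map_mul,
          Equiv.Perm.sign_swap (Ne.symm hx'), Equiv.Perm.sign_swap (Ne.symm hy')]
        decide
      have hfix : ∀ B ∈ 𝓒, B.image σ = B := by
        rw [fix_iff_nbhd]
        intro z
        show nbhd 𝓒 (Equiv.swap x x' (Equiv.swap y y' z)) = nbhd 𝓒 z
        rw [nbhd_swap 𝓒 hNxx', nbhd_swap 𝓒 hNyy']
      have h1 := hbase σ hmem hfix
      have hσx : σ x = x' := by
        simp [hσdef, Equiv.swap_apply_of_ne_of_ne hxy hxy']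
      rw [h1] at hσx
      exact hx' (by simpa using hσx.symm)
  · rintro ⟨h2, huniq⟩ σ hσ hfix
    have hN := (fix_iff_nbhd 𝓒 σ).mp hfix
    by_contra hσ1
    obtain ⟨a, ha⟩ : ∃ a, σ a ≠ a := by
      by_contra h
      push_neg at h
      exact hσ1 (Equiv.Perm.ext h)
    have hclass2 : ∀ x : Fin n, σ x ≠ x → (nbhdClass 𝓒 x).card = 2 := by
      intro x hx
      refine le_antisymm (h2 x) ?_
      have h1 : σ x ∈ nbhdClass 𝓒 x := (mem_nbhdClass 𝓒 x (σ x)).mpr (hN x)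
      have h2' : x ∈ nbhdClass 𝓒 x := (mem_nbhdClass 𝓒 x x).mpr rfl
      exact Finset.one_lt_card.mpr ⟨σ x, h1, x, h2', hx⟩
    have hsupp : σ.support ⊆ nbhdClass 𝓒 a := by
      intro x hx
      rw [Equiv.Perm.mem_support] at hx
      have := huniq x a (hclass2 x hx) (hclass2 a ha)
      rw [← this]
      exact (mem_nbhdClass 𝓒 x x).mpr rfl
    have hle : 2 ≤ σ.support.card := Equiv.Perm.one_lt_card_support_of_ne_one hσ1
    have hcard2 : σ.support.card = 2 :=
      le_antisymm (le_trans (Finset.card_le_card hsupp) (h2 a)) hle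
    obtain ⟨u, v, huv, rfl⟩ := Equiv.Perm.card_support_eq_two.mp hcard2
    rw [Equiv.Perm.mem_alternatingGroup, Equiv.Perm.sign_swap huv] at hσ
    exact absurd hσ (by decide)
end

section
/- Fix positive integers l, n and r. There is a one-to-one correspondence between the set of isomorphism classes of (l,n,r)-hypergraphs and the set of S_n-equivalence classes of bases of size l for the symmetric group S_n acting on the set of subsets of [n] of size at most r, where two bases 𝓑₁, 𝓑₂ are equivalent if 𝓑₁^σ = 𝓑₂ for some σ ∈ S_n. -/
/-- A hypergraph on `Fin l` (given by its edge set `E`) is irrepeating if the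
vertex-neighbourhood map `v ↦ {e ∈ E : v ∈ e}` is injective. -/
def Irrep {l : ℕ} (E : Finset (Finset (Fin l))) : Prop :=
  Function.Injective (fun v : Fin l => E.filter (fun e => v ∈ e))

/-- An `(l,n,r)`-hypergraph: an irrepeating hypergraph on `l` vertices with exactly `n`
(distinct) hyperedges and every vertex of degree at most `r`. Up to isomorphism every
`(l,n,r)`-hypergraph has vertex set `Fin l`. -/
def IsLNR (l n r : ℕ) (E : Finset (Finset (Fin l))) : Prop :=
  E.card = n ∧ (∀ x : Fin l, (E.filter (fun e => x ∈ e)).card ≤ r) ∧ Irrep E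

/-- Isomorphism of hypergraphs on the vertex set `Fin l`: some bijection of the
vertices carries one edge set onto the other. -/
def HGIso {l : ℕ} (E₁ E₂ : Finset (Finset (Fin l))) : Prop :=
  ∃ π : Equiv.Perm (Fin l), E₁.image (fun e => e.image π) = E₂

/-- Equivalence of bases: `𝓑₁ ∼ 𝓑₂` iff `𝓑₁^σ = 𝓑₂` for some `σ ∈ S_n`. -/
def BaseEquiv {n : ℕ} (𝓑₁ 𝓑₂ : Finset (Finset (Fin n))) : Prop :=
  ∃ σ : Equiv.Perm (Fin n), 𝓑₁.image (fun B => B.image σ) = 𝓑₂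


open Finset

namespace HBC

variable {l n : ℕ}

def Bmap (g : Fin n → Finset (Fin l)) (v : Fin l) : Finset (Fin n) :=
  univ.filter fun i => v ∈ g i

lemma mem_Bmap {g : Fin n → Finset (Fin l)} {v : Fin l} {i : Fin n} :
    i ∈ Bmap g v ↔ v ∈ g i := by simp [Bmap]

def Bset (g : Fin n → Finset (Fin l)) : Finset (Finset (Fin n)) :=
  univ.image (Bmap g)

lemma mem_image_perm {α : Type*} [DecidableEq α] (σ : Equiv.Perm α) (B : Finset α)
    (a : α) : a ∈ B.image σ ↔ σ.symm a ∈ B := by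
  constructor
  · rintro h
    obtain ⟨b, hb, rfl⟩ := mem_image.mp h
    simpa using hb
  · intro h
    exact mem_image.mpr ⟨σ.symm a, h, by simp⟩

noncomputable def enum {α : Type*} (E : Finset α) {m : ℕ} (h : E.card = m) :
    Fin m → α := fun i => ((E.equivFinOfCardEq h).symm i : α)

lemma enum_inj {α : Type*} (E : Finset α) {m : ℕ} (h : E.card = m) :
    Function.Injective (enum E h) := fun i j hij =>
  (E.equivFinOfCardEq h).symm.injective (Subtype.ext hij)

lemma enum_image {α : Type*} [DecidableEq α] (E : Finset α) {m : ℕ}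
    (h : E.card = m) : univ.image (enum E h) = E := by
  ext e
  simp only [mem_image, mem_univ, true_and]
  constructor
  · rintro ⟨i, rfl⟩; exact ((E.equivFinOfCardEq h).symm i).2
  · intro he; exact ⟨E.equivFinOfCardEq h ⟨e, he⟩, by simp [enum]⟩

lemma enum_mem {α : Type*} (E : Finset α) {m : ℕ} (h : E.card = m) (i : Fin m) :
    enum E h i ∈ E := ((E.equivFinOfCardEq h).symm i).2

lemma filter_eq_image {g : Fin n → Finset (Fin l)} {E : Finset (Finset (Fin l))}
    (hE : univ.image g = E) (v : Fin l) :
    E.filter (fun e => v ∈ e) = (Bmap g v).image g := by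
  subst hE
  ext e
  simp only [mem_filter, mem_image, mem_univ, true_and, mem_Bmap]
  constructor
  · rintro ⟨⟨i, rfl⟩, hv⟩; exact ⟨i, hv, rfl⟩
  · rintro ⟨i, hv, rfl⟩; exact ⟨⟨i, rfl⟩, hv⟩

lemma Bmap_inj {g : Fin n → Finset (Fin l)} {E : Finset (Finset (Fin l))}
    (hE : univ.image g = E) (hI : Irrep E) :
    Function.Injective (Bmap g) := by
  intro v w h
  apply hI
  show E.filter (fun e => v ∈ e) = E.filter (fun e => w ∈ e)
  rw [filter_eq_image hE, filter_eq_image hE, h]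

lemma Bmap_card {g : Fin n → Finset (Fin l)} {E : Finset (Finset (Fin l))}
    (hg : Function.Injective g) (hE : univ.image g = E) (v : Fin l) :
    (Bmap g v).card = (E.filter (fun e => v ∈ e)).card := by
  rw [filter_eq_image hE, card_image_of_injective _ hg]

lemma exists_perm_enum {g d : Fin n → Finset (Fin l)} (hg : Function.Injective g)
    (hd : Function.Injective d) (h : univ.image g = univ.image d) :
    ∃ σ : Equiv.Perm (Fin n), ∀ i, d (σ i) = g i := by
  have hmem : ∀ i : Fin n, ∃ j, d j = g i := by
    intro i
    have : g i ∈ univ.image d := by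
      rw [← h]; exact mem_image_of_mem g (mem_univ i)
    simpa using this
  choose φ hφ using hmem
  have hinj : Function.Injective φ := fun i j hij => hg (by rw [← hφ i, ← hφ j, hij])
  exact ⟨Equiv.ofBijective φ (Finite.injective_iff_bijective.mp hinj), fun i => hφ i⟩

lemma Bset_image_of_enum {g d : Fin n → Finset (Fin l)} {σ : Equiv.Perm (Fin n)}
    (hσ : ∀ i, d (σ i) = g i) :
    (Bset g).image (fun B => B.image σ) = Bset d := by
  have key : ∀ v, (Bmap g v).image σ = Bmap d v := by
    intro v
    ext j
    rw [mem_image_perm]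
    simp only [mem_Bmap]
    rw [← hσ (σ.symm j), Equiv.apply_symm_apply]
  unfold Bset
  rw [image_image]
  exact image_congr (fun v _ => key v)

lemma Bset_card {g : Fin n → Finset (Fin l)} {E : Finset (Finset (Fin l))}
    (hE : univ.image g = E) (hI : Irrep E) : (Bset g).card = l := by
  rw [Bset, card_image_of_injective _ (Bmap_inj hE hI), card_univ, Fintype.card_fin]

lemma Bset_isBase {g : Fin n → Finset (Fin l)} (hg : Function.Injective g)
    (σ : Equiv.Perm (Fin n)) (hσ : ∀ B ∈ Bset g, B.image σ = B) : σ = 1 := by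
  refine Equiv.ext fun i => ?_
  have hgs : g (σ i) = g i := by
    ext v
    have hB : (Bmap g v).image σ = Bmap g v :=
      hσ _ (mem_image_of_mem _ (mem_univ v))
    have h2 : σ i ∈ Bmap g v ↔ i ∈ Bmap g v := by
      conv_lhs => rw [← hB]
      rw [mem_image_perm, Equiv.symm_apply_apply]
    simpa only [mem_Bmap] using h2
  simpa using hg hgs

noncomputable def toBase (r : ℕ) (E : Finset (Finset (Fin l))) (h : IsLNR l n r E) :
    Finset (Finset (Fin n)) := Bset (enum E h.1)

lemma toBase_spec (r : ℕ) (E : Finset (Finset (Fin l))) (h : IsLNR l n r E) :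
    IsBaseSymLe n r (toBase r E h) ∧ (toBase r E h).card = l := by
  refine ⟨⟨?_, ?_⟩, ?_⟩
  · intro B hB
    simp only [toBase, Bset, mem_image, mem_univ, true_and] at hB
    obtain ⟨v, rfl⟩ := hB
    rw [Bmap_card (enum_inj E h.1) (enum_image E h.1)]
    exact h.2.1 v
  · intro σ hσ
    exact Bset_isBase (enum_inj E h.1) σ hσ
  · exact Bset_card (enum_image E h.1) h.2.2

lemma iso_to_baseEquiv {E₁ E₂ : Finset (Finset (Fin l))} {g₁ g₂ : Fin n → Finset (Fin l)}
    (hg₁ : Function.Injective g₁) (hE₁ : univ.image g₁ = E₁)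
    (hg₂ : Function.Injective g₂) (hE₂ : univ.image g₂ = E₂)
    (h : HGIso E₁ E₂) : BaseEquiv (Bset g₁) (Bset g₂) := by
  obtain ⟨π, hπ⟩ := h
  set d : Fin n → Finset (Fin l) := fun i => (g₁ i).image π with hd
  have hdinj : Function.Injective d := fun i j hij =>
    hg₁ (Finset.image_injective π.injective hij)
  have hdimg : univ.image d = E₂ := by
    rw [← hπ, ← hE₁, image_image]
    rfl
  have hBd : Bset d = Bset g₁ := by
    have key : ∀ v, Bmap d v = Bmap g₁ (π.symm v) := by
      intro v; ext i
      simp only [mem_Bmap, hd]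
      exact mem_image_perm π (g₁ i) v
    unfold Bset
    ext B
    simp only [mem_image, mem_univ, true_and]
    constructor
    · rintro ⟨v, rfl⟩; exact ⟨π.symm v, (key v).symm⟩
    · rintro ⟨v, rfl⟩; exact ⟨π v, by rw [key, Equiv.symm_apply_apply]⟩
  obtain ⟨σ, hσ⟩ := exists_perm_enum hdinj hg₂ (by rw [hdimg, hE₂])
  exact ⟨σ, by rw [← hBd, Bset_image_of_enum hσ]⟩

lemma baseEquiv_to_iso {E₁ E₂ : Finset (Finset (Fin l))} {g₁ g₂ : Fin n → Finset (Fin l)}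
    (hE₁ : univ.image g₁ = E₁) (hI₁ : Irrep E₁)
    (hE₂ : univ.image g₂ = E₂) (hI₂ : Irrep E₂)
    (h : BaseEquiv (Bset g₁) (Bset g₂)) : HGIso E₁ E₂ := by
  obtain ⟨σ, hσ⟩ := h
  have hex : ∀ v : Fin l, ∃ w, Bmap g₂ w = (Bmap g₁ v).image σ := by
    intro v
    have hmem : (Bmap g₁ v).image σ ∈ Bset g₂ := by
      rw [← hσ]
      exact mem_image_of_mem _ (mem_image_of_mem _ (mem_univ v))
    obtain ⟨w, -, hw⟩ := mem_image.mp hmem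
    exact ⟨w, hw⟩
  choose p hp using hex
  have hpinj : Function.Injective p := by
    intro v w hvw
    have h1 := hp v
    rw [hvw, hp w] at h1
    exact Bmap_inj hE₁ hI₁ (Finset.image_injective σ.injective h1.symm)
  let π : Equiv.Perm (Fin l) := Equiv.ofBijective p (Finite.injective_iff_bijective.mp hpinj)
  refine ⟨π, ?_⟩
  have hv : ∀ (v : Fin l) (i : Fin n), v ∈ g₁ i ↔ p v ∈ g₂ (σ i) := by
    intro v i
    constructor
    · intro h1
      have h2 : σ i ∈ (Bmap g₁ v).image σ := mem_image_of_mem _ (mem_Bmap.mpr h1)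
      rw [← hp v] at h2
      exact mem_Bmap.mp h2
    · intro h1
      have h2 : σ i ∈ Bmap g₂ (p v) := mem_Bmap.mpr h1
      rw [hp v, mem_image_perm, Equiv.symm_apply_apply] at h2
      exact mem_Bmap.mp h2
  have key : ∀ i, (g₁ i).image π = g₂ (σ i) := by
    intro i
    ext w
    rw [mem_image_perm]
    have h3 := hv (π.symm w) i
    rwa [show p (π.symm w) = w from π.apply_symm_apply w] at h3
  rw [← hE₁, ← hE₂, image_image]
  ext e
  simp only [mem_image, mem_univ, true_and, Function.comp]
  constructor
  · rintro ⟨i, rfl⟩; exact ⟨σ i, (key i).symm⟩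
  · rintro ⟨j, rfl⟩; exact ⟨σ.symm j, by rw [key, Equiv.apply_symm_apply]⟩

lemma swap_fix {α : Type*} [DecidableEq α] {i j : α} {B : Finset α}
    (h : i ∈ B ↔ j ∈ B) : B.image (Equiv.swap i j) = B := by
  ext w
  rw [mem_image_perm, Equiv.symm_swap]
  rcases eq_or_ne w i with rfl | hi
  · rw [Equiv.swap_apply_left]; exact h.symm
  · rcases eq_or_ne w j with rfl | hj
    · rw [Equiv.swap_apply_right]; exact h
    · rw [Equiv.swap_apply_of_ne_of_ne hi hj]

lemma surj_aux {r : ℕ} (𝓑 : Finset (Finset (Fin n))) (hB : IsBaseSymLe n r 𝓑)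
    (hcard : 𝓑.card = l) :
    ∃ E : Finset (Finset (Fin l)), ∃ _h : IsLNR l n r E,
      ∃ d : Fin n → Finset (Fin l), Function.Injective d ∧ univ.image d = E ∧ Bset d = 𝓑 := by
  classical
  have hbinj : Function.Injective (enum 𝓑 hcard) := enum_inj 𝓑 hcard
  have hbimg : univ.image (enum 𝓑 hcard) = 𝓑 := enum_image 𝓑 hcard
  have hBmapd : ∀ v, Bmap (Bmap (enum 𝓑 hcard)) v = enum 𝓑 hcard v := by
    intro v; ext i; simp only [mem_Bmap]
  have hdinj : Function.Injective (Bmap (enum 𝓑 hcard)) := by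
    intro i j hij
    have hmem : ∀ v, (i ∈ enum 𝓑 hcard v ↔ j ∈ enum 𝓑 hcard v) := by
      intro v
      have h1 : v ∈ Bmap (enum 𝓑 hcard) i ↔ v ∈ Bmap (enum 𝓑 hcard) j := by rw [hij]
      simpa only [mem_Bmap] using h1
    have hswap : Equiv.swap i j = 1 := by
      apply hB.2
      intro B hBm
      rw [← hbimg] at hBm
      obtain ⟨v, -, rfl⟩ := mem_image.mp hBm
      exact swap_fix (hmem v)
    have h2 : Equiv.swap i j i = (1 : Equiv.Perm (Fin n)) i := by rw [hswap]
    simpa [Equiv.swap_apply_left] using h2.symm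
  have hEimg : univ.image (Bmap (enum 𝓑 hcard)) = univ.image (Bmap (enum 𝓑 hcard)) := rfl
  have hIrr : Irrep (univ.image (Bmap (enum 𝓑 hcard))) := by
    intro v w hvw
    apply hbinj
    rw [← hBmapd v, ← hBmapd w]
    apply Finset.image_injective hdinj
    rw [← filter_eq_image hEimg v, ← filter_eq_image hEimg w]
    exact hvw
  refine ⟨univ.image (Bmap (enum 𝓑 hcard)), ⟨?_, ?_, hIrr⟩, Bmap (enum 𝓑 hcard),
    hdinj, hEimg, ?_⟩
  · rw [card_image_of_injective _ hdinj, card_univ, Fintype.card_fin]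
  · intro v
    rw [← Bmap_card hdinj hEimg, hBmapd]
    exact hB.1 _ (enum_mem 𝓑 hcard v)
  · unfold Bset
    rw [image_congr (fun v _ => hBmapd v)]
    exact hbimg

end HBC

/-- Proposition 2.2: there is a one-to-one correspondence between isomorphism classes
of `(l,n,r)`-hypergraphs and equivalence classes of bases of size `l` for `S_{n,≤r}`;
stated as: there is a map on representatives which respects and reflects the two
equivalence relations and is surjective up to equivalence. -/
theorem hypergraph_base_correspondence (l n r : ℕ) (hl : 0 < l) (hn : 0 < n)
    (hr : 0 < r) :
    ∃ f : {E : Finset (Finset (Fin l)) // IsLNR l n r E} →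
        {𝓑 : Finset (Finset (Fin n)) // IsBaseSymLe n r 𝓑 ∧ 𝓑.card = l},
      (∀ a b, HGIso a.1 b.1 ↔ BaseEquiv (f a).1 (f b).1) ∧
      ∀ 𝓑 : {𝓑 : Finset (Finset (Fin n)) // IsBaseSymLe n r 𝓑 ∧ 𝓑.card = l},
        ∃ a, BaseEquiv (f a).1 𝓑.1 := by
  refine ⟨fun a => ⟨HBC.toBase r a.1 a.2, HBC.toBase_spec r a.1 a.2⟩, ?_, ?_⟩
  · intro a b
    constructor
    · intro h
      exact HBC.iso_to_baseEquiv (HBC.enum_inj _ a.2.1) (HBC.enum_image _ a.2.1)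
        (HBC.enum_inj _ b.2.1) (HBC.enum_image _ b.2.1) h
    · intro h
      exact HBC.baseEquiv_to_iso (HBC.enum_image _ a.2.1) a.2.2.2
        (HBC.enum_image _ b.2.1) b.2.2.2 h
  · intro 𝓑
    obtain ⟨E, hE, d, hdinj, hdimg, hBd⟩ := HBC.surj_aux 𝓑.1 𝓑.2.1 𝓑.2.2
    refine ⟨⟨E, hE⟩, ?_⟩
    obtain ⟨σ, hσ⟩ := HBC.exists_perm_enum (HBC.enum_inj E hE.1) hdinj
      (by rw [HBC.enum_image, hdimg])
    refine ⟨σ, ?_⟩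
    show (HBC.Bset (HBC.enum E hE.1)).image (fun B => B.image σ) = 𝓑.1
    rw [HBC.Bset_image_of_enum hσ, hBd]
end

section
/- Let k, l and s be positive integers with s ≤ C(l,k). Then there exists a set E of exactly s distinct k-element subsets of [l] such that every vertex x ∈ [l] lies in either ⌊ks/l⌋ or ⌈ks/l⌉ members of E, and the maximum over x ∈ [l] of the number of members of E containing x equals ⌈ks/l⌉. -/
/-- The degree of a vertex `x ∈ [l]` in the hypergraph with edge set `E`:
the number of members of `E` containing `x`. -/
def degree {l : ℕ} (E : Finset (Finset (Fin l))) (x : Fin l) : ℕ :=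
  (E.filter (fun e => x ∈ e)).card

open Finset

lemma degree_eq_sum {l : ℕ} (E : Finset (Finset (Fin l))) (x : Fin l) :
    degree E x = ∑ e ∈ E, if x ∈ e then 1 else 0 := by
  rw [degree, Finset.card_filter]

lemma sum_degree {l : ℕ} (E : Finset (Finset (Fin l))) :
    ∑ x : Fin l, degree E x = ∑ e ∈ E, e.card := by
  simp only [degree_eq_sum]
  rw [Finset.sum_comm]
  refine Finset.sum_congr rfl (fun e _ => ?_)
  rw [Finset.sum_ite_mem]
  simp

/-- swap identity -/
lemma degree_swap {l : ℕ} (E : Finset (Finset (Fin l))) {e e' : Finset (Fin l)}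
    (he : e ∈ E) (he' : e' ∉ E) (x : Fin l) :
    degree (insert e' (E.erase e)) x + (if x ∈ e then 1 else 0)
      = degree E x + (if x ∈ e' then 1 else 0) := by
  have h1 : e' ∉ E.erase e := fun h => he' (Finset.mem_of_mem_erase h)
  rw [degree_eq_sum, degree_eq_sum, Finset.sum_insert h1]
  have h2 : (∑ f ∈ E.erase e, if x ∈ f then 1 else 0) + (if x ∈ e then 1 else 0)
      = ∑ f ∈ E, if x ∈ f then 1 else 0 := Finset.sum_erase_add E _ he
  omega

/-- existence of an improving swap when degrees differ by ≥ 2 -/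
lemma exists_improving_swap {l : ℕ} (E : Finset (Finset (Fin l))) {u v : Fin l}
    (h : degree E v + 1 < degree E u) :
    ∃ e ∈ E, u ∈ e ∧ v ∉ e ∧ insert v (e.erase u) ∉ E := by
  by_contra hcon
  push_neg at hcon
  have huv : u ≠ v := by rintro rfl; omega
  set A := E.filter (fun e => u ∈ e ∧ v ∉ e) with hA
  set B := E.filter (fun e => v ∈ e ∧ u ∉ e) with hB
  set C := E.filter (fun e => u ∈ e ∧ v ∈ e) with hC
  have hAB : A.card ≤ B.card := by
    apply Finset.card_le_card_of_injOn (fun e => insert v (e.erase u))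
    · intro e heA
      simp only [hA, Finset.mem_coe, Finset.mem_filter] at heA
      obtain ⟨heE, hue, hve⟩ := heA
      have hmem : insert v (e.erase u) ∈ E := hcon e heE hue hve
      simp only [hB, Finset.mem_coe, Finset.mem_filter]
      refine ⟨hmem, Finset.mem_insert_self _ _, ?_⟩
      simp [Finset.mem_insert, huv, Finset.mem_erase]
    · intro e1 h1 e2 h2 heq
      simp only [Finset.mem_coe, hA, Finset.mem_filter] at h1 h2
      have hv1 : v ∉ e1.erase u := fun h => h1.2.2 (Finset.mem_of_mem_erase h)
      have hv2 : v ∉ e2.erase u := fun h => h2.2.2 (Finset.mem_of_mem_erase h)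
      have : e1.erase u = e2.erase u := by
        have := congrArg (fun t => Finset.erase t v) heq
        simpa [Finset.erase_insert hv1, Finset.erase_insert hv2] using this
      have h1' := Finset.insert_erase h1.2.1
      have h2' := Finset.insert_erase h2.2.1
      rw [← h1', ← h2', this]
  have hu : degree E u = C.card + A.card := by
    have h1 : (E.filter (fun e => u ∈ e)).filter (fun e => v ∈ e) = C := by
      rw [hC, Finset.filter_filter]
    have h2 : (E.filter (fun e => u ∈ e)).filter (fun e => ¬ v ∈ e) = A := by
      rw [hA, Finset.filter_filter]
    rw [degree, ← Finset.card_filter_add_card_filter_not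
      (s := E.filter (fun e => u ∈ e)) (p := fun e => v ∈ e), h1, h2]
  have hv : degree E v = C.card + B.card := by
    have h1 : (E.filter (fun e => v ∈ e)).filter (fun e => u ∈ e) = C := by
      rw [hC, Finset.filter_filter]
      exact Finset.filter_congr fun a _ => by tauto
    have h2 : (E.filter (fun e => v ∈ e)).filter (fun e => ¬ u ∈ e) = B := by
      rw [hB, Finset.filter_filter]
    rw [degree, ← Finset.card_filter_add_card_filter_not
      (s := E.filter (fun e => v ∈ e)) (p := fun e => u ∈ e), h1, h2]
  omega


/-- Lemma 2.4: for positive integers `k, l, s` with `s ≤ C(l,k)` there is a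
nearly-regular `k`-uniform hypergraph on `[l]` with exactly `s` (distinct) edges:
every vertex has degree `⌊ks/l⌋` or `⌈ks/l⌉`, and the maximum degree is `⌈ks/l⌉`. -/
theorem nearly_regular_uniform_hypergraph (k l s : ℕ) (hk : 0 < k) (hl : 0 < l)
    (hs : 0 < s) (hsl : s ≤ l.choose k) :
    ∃ E : Finset (Finset (Fin l)), E.card = s ∧ (∀ e ∈ E, e.card = k) ∧
      (∀ x : Fin l, (degree E x : ℤ) = ⌊(k * s : ℚ) / l⌋ ∨
        (degree E x : ℤ) = ⌈(k * s : ℚ) / l⌉) ∧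
      (((Finset.univ.sup (degree E) : ℕ) : ℤ) = ⌈(k * s : ℚ) / l⌉) := by
  classical
  set P : Finset (Finset (Fin l)) := Finset.powersetCard k Finset.univ with hP
  have hPcard : P.card = l.choose k := by
    simp [hP, Finset.card_powersetCard]
  set F : Finset (Finset (Finset (Fin l))) := P.powerset.filter (fun E => E.card = s) with hF
  have hFne : F.Nonempty := by
    obtain ⟨E, hEP, hEcard⟩ := Finset.exists_subset_card_eq
      (s := P) (n := s) (by rw [hPcard]; exact hsl)
    exact ⟨E, by simp [hF, Finset.mem_filter, Finset.mem_powerset, hEP, hEcard]⟩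
  obtain ⟨E, hEF, hmin⟩ :=
    Finset.exists_min_image F (fun E => ∑ x : Fin l, (degree E x)^2) hFne
  rw [hF, Finset.mem_filter, Finset.mem_powerset] at hEF
  obtain ⟨hEP, hEcard⟩ := hEF
  have hEk : ∀ e ∈ E, e.card = k := fun e he => (Finset.mem_powersetCard.mp (hEP he)).2
  -- near regularity of the minimizer
  have hreg : ∀ u v : Fin l, degree E u ≤ degree E v + 1 := by
    by_contra hcon
    push_neg at hcon
    obtain ⟨u, v, huv⟩ := hcon
    obtain ⟨e, heE, hue, hve, hne⟩ := exists_improving_swap E huv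
    set e' := insert v (e.erase u) with he'def
    have hu_ne_v : u ≠ v := by rintro rfl; omega
    have hue' : u ∉ e' := by
      simp [he'def, Finset.mem_insert, hu_ne_v, Finset.mem_erase]
    have hve' : v ∈ e' := Finset.mem_insert_self _ _
    have hk1 : 1 ≤ e.card := Finset.card_pos.mpr ⟨u, hue⟩
    have he'card : e'.card = k := by
      rw [he'def, Finset.card_insert_of_notMem (fun h => hve (Finset.mem_of_mem_erase h)),
        Finset.card_erase_of_mem hue]
      rw [hEk e heE] at hk1 ⊢
      omega
    set E' := insert e' (E.erase e) with hE'def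
    have hswap := degree_swap E heE hne
    have hdu : degree E' u + 1 = degree E u := by
      have := hswap u; rw [← hE'def] at this; simp [hue, hue'] at this; omega
    have hdv : degree E' v = degree E v + 1 := by
      have := hswap v; rw [← hE'def] at this; simp [hve, hve'] at this; omega
    have hdx : ∀ x : Fin l, x ≠ u → x ≠ v → degree E' x = degree E x := by
      intro x hxu hxv
      have hx : (x ∈ e') ↔ (x ∈ e) := by
        simp [he'def, Finset.mem_insert, Finset.mem_erase, hxu, hxv]
      have := hswap x; rw [← hE'def] at this; simp only [hx] at this; omega
    -- E' is a valid family
    have he'ne : e' ∉ E.erase e := fun h => hne (Finset.mem_of_mem_erase h)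
    have hE'card : E'.card = s := by
      rw [hE'def, Finset.card_insert_of_notMem he'ne, Finset.card_erase_of_mem heE, hEcard]
      omega
    have hE'P : E' ⊆ P := by
      intro f hf
      rw [hE'def, Finset.mem_insert] at hf
      rcases hf with rfl | hf
      · exact Finset.mem_powersetCard.mpr ⟨Finset.subset_univ _, he'card⟩
      · exact hEP (Finset.mem_of_mem_erase hf)
    have hE'F : E' ∈ F := by
      rw [hF, Finset.mem_filter, Finset.mem_powerset]; exact ⟨hE'P, hE'card⟩
    -- the sum of squares strictly decreases
    have key : ∀ (f : Fin l → ℕ), ∑ x, f x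
        = (∑ x ∈ (Finset.univ.erase u).erase v, f x) + f v + f u := by
      intro f
      rw [Finset.sum_erase_add _ _
        (Finset.mem_erase.mpr ⟨hu_ne_v.symm, Finset.mem_univ v⟩),
        Finset.sum_erase_add _ _ (Finset.mem_univ u)]
    have hlt : ∑ x : Fin l, (degree E' x)^2 < ∑ x : Fin l, (degree E x)^2 := by
      rw [key (fun x => (degree E' x)^2), key (fun x => (degree E x)^2)]
      have hrest : (∑ x ∈ (Finset.univ.erase u).erase v, (degree E' x)^2)
          = ∑ x ∈ (Finset.univ.erase u).erase v, (degree E x)^2 := by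
        refine Finset.sum_congr rfl (fun x hx => ?_)
        rw [Finset.mem_erase, Finset.mem_erase] at hx
        rw [hdx x hx.2.1 hx.1]
      rw [hrest]
      have h1 := hdu; have h2 := hdv
      nlinarith [hdu, hdv, huv]
    have := hmin E' hE'F
    omega
  -- sum of degrees
  have hsum : ∑ x : Fin l, degree E x = k * s := by
    rw [sum_degree, Finset.sum_congr rfl hEk, Finset.sum_const, hEcard, smul_eq_mul,
      mul_comm]
  obtain ⟨x0, -, hx0⟩ := Finset.exists_min_image Finset.univ (degree E)
    ⟨⟨0, hl⟩, Finset.mem_univ _⟩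
  set d := degree E x0 with hd
  have hub : ∀ x : Fin l, degree E x ≤ d + 1 := fun x => hreg x x0
  have hlb : ∀ x : Fin l, d ≤ degree E x := fun x => hx0 x (Finset.mem_univ x)
  have hlq : (0:ℚ) < (l:ℚ) := by exact_mod_cast hl
  by_cases hall : ∀ x : Fin l, degree E x = d
  · have hld : l * d = k * s := by
      rw [← hsum, Finset.sum_congr rfl (fun x _ => hall x), Finset.sum_const,
        Finset.card_univ, Fintype.card_fin, smul_eq_mul]
    have hq : (k * s : ℚ) / l = (d:ℚ) := by
      rw [div_eq_iff (ne_of_gt hlq)]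
      exact_mod_cast hld.symm.trans (mul_comm l d)
    have hfl : ⌊(k * s : ℚ)/l⌋ = (d:ℤ) := by rw [hq]; exact_mod_cast Int.floor_natCast d
    have hce : ⌈(k * s : ℚ)/l⌉ = (d:ℤ) := by rw [hq]; exact_mod_cast Int.ceil_natCast d
    have hsup : Finset.univ.sup (degree E) = d :=
      le_antisymm (Finset.sup_le fun x _ => (hall x).le)
        (hd ▸ Finset.le_sup (Finset.mem_univ x0))
    exact ⟨E, hEcard, hEk, fun x => Or.inl (by rw [hfl, hall x]), by rw [hsup, hce]⟩
  · push_neg at hall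
    obtain ⟨y, hy⟩ := hall
    have hyd : degree E y = d + 1 := by have := hub y; have := hlb y; omega
    have h1 : l * d < k * s := by
      rw [← hsum]
      calc l * d = ∑ _x : Fin l, d := by
            rw [Finset.sum_const, Finset.card_univ, Fintype.card_fin, smul_eq_mul]
        _ < ∑ x : Fin l, degree E x :=
            Finset.sum_lt_sum (fun i _ => hlb i) ⟨y, Finset.mem_univ y, by omega⟩
    have h2 : k * s < l * (d+1) := by
      rw [← hsum]
      calc ∑ x : Fin l, degree E x < ∑ _x : Fin l, (d+1) :=
            Finset.sum_lt_sum (fun i _ => hub i) ⟨x0, Finset.mem_univ x0, by omega⟩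
        _ = l * (d+1) := by
            rw [Finset.sum_const, Finset.card_univ, Fintype.card_fin, smul_eq_mul]
    have hfl : ⌊(k * s : ℚ)/l⌋ = (d:ℤ) := by
      rw [Int.floor_eq_iff]
      constructor
      · rw [le_div_iff₀ hlq]
        have : ((l*d:ℕ):ℚ) ≤ ((k*s:ℕ):ℚ) := Nat.cast_le.mpr h1.le
        push_cast at this ⊢
        linarith
      · rw [div_lt_iff₀ hlq]
        have : ((k*s:ℕ):ℚ) < ((l*(d+1):ℕ):ℚ) := Nat.cast_lt.mpr h2
        push_cast at this ⊢
        linarith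
    have hce : ⌈(k * s : ℚ)/l⌉ = (d:ℤ) + 1 := by
      rw [Int.ceil_eq_iff]
      constructor
      · rw [lt_div_iff₀ hlq]
        have : ((l*d:ℕ):ℚ) < ((k*s:ℕ):ℚ) := Nat.cast_lt.mpr h1
        push_cast at this ⊢
        linarith
      · rw [div_le_iff₀ hlq]
        have : ((k*s:ℕ):ℚ) ≤ ((l*(d+1):ℕ):ℚ) := Nat.cast_le.mpr h2.le
        push_cast at this ⊢
        linarith
    have hsup : Finset.univ.sup (degree E) = d + 1 := by
      refine le_antisymm (Finset.sup_le fun x _ => hub x) ?_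
      calc d + 1 = degree E y := hyd.symm
        _ ≤ Finset.univ.sup (degree E) := Finset.le_sup (Finset.mem_univ y)
    refine ⟨E, hEcard, hEk, fun x => ?_, ?_⟩
    · have h3 := hub x
      have h4 := hlb x
      rcases (by omega : degree E x = d ∨ degree E x = d + 1) with h | h
      · left; rw [hfl, h]
      · right; rw [hce, h]; push_cast; ring
    · rw [hsup, hce]; push_cast; ring
end

section
/- Let n and r be positive integers with n ≥ 2r, let 𝓑 be a base of size l for the symmetric group S_n acting on the set of r-element subsets of [n], and let k be a positive integer with l·r ≥ Σ_{i=1}^{k-1} i·C(l,i). Then n ≤ Σ_{i=0}^{k-1} C(l,i) + m_r(l,k). -/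
/-!
If `𝓑` is a base, distinct points `x ≠ y` lie in distinct subfamilies of `𝓑`, since otherwise
the transposition `(x y)` fixes every block. So `x ↦ {B ∈ 𝓑 | x ∈ B}` is injective into the
subsets of `𝓑`: at most `C(l, i)` points lie in exactly `i` blocks, while the numbers `d_x` of
blocks through the points add up to `l r`. Hence
`k n ≤ ∑_x ((k - d_x)₊ + d_x) ≤ ∑_{i<k} C(l, i) (k - i) + l r`, which rearranges to the bound.
-/

open Finset Function

section Signature

variable {α : Type*} [DecidableEq α]

theorem Finset.image_swap_eq_self {B : Finset α} {x y : α} (h : x ∈ B ↔ y ∈ B) :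
    B.image (Equiv.swap x y) = B := by
  refine eq_of_subset_of_card_le (image_subset_iff.2 fun a ha => ?_)
    (card_image_of_injective _ (Equiv.injective _)).ge
  rw [Equiv.swap_apply_def]
  split_ifs with hax hay
  · exact h.1 (hax ▸ ha)
  · exact h.2 (hay ▸ ha)
  · exact ha

def signature (𝓑 : Finset (Finset α)) (x : α) : Finset (Finset α) := {B ∈ 𝓑 | x ∈ B}

theorem signature_subset (𝓑 : Finset (Finset α)) (x : α) : signature 𝓑 x ⊆ 𝓑 :=
  filter_subset _ _

theorem signature_injective {𝓑 : Finset (Finset α)}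
    (h𝓑 : ∀ σ : Equiv.Perm α, (∀ B ∈ 𝓑, B.image σ = B) → σ = 1) :
    Injective (signature 𝓑) := by
  intro x y hxy
  have hmem : ∀ B ∈ 𝓑, x ∈ B ↔ y ∈ B := fun B hB => by
    simpa [signature, hB] using congrArg (B ∈ ·) hxy
  exact Equiv.swap_eq_one_iff.1 (h𝓑 _ fun B hB => image_swap_eq_self (hmem B hB))

theorem sum_card_signature [Fintype α] (𝓑 : Finset (Finset α)) :
    ∑ x, #(signature 𝓑 x) = ∑ B ∈ 𝓑, #B := by
  unfold signature
  simpa [bipartiteAbove, bipartiteBelow] using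
    sum_card_bipartiteAbove_eq_sum_card_bipartiteBelow (s := univ) (t := 𝓑) (r := (· ∈ ·))

end Signature

section Counting

variable {ι β : Type*} [Fintype ι]

theorem sum_tsub_eq_sum_range_card_fiber_mul (g : ι → ℕ) (k : ℕ) :
    ∑ x, (k - g x) = ∑ i ∈ range k, #{x | g x = i} * (k - i) :=
  calc ∑ x, (k - g x) = ∑ x with g x ∈ range k, (k - g x) :=
        (sum_filter_of_ne fun x _ h => by simp; omega).symm
    _ = ∑ i ∈ range k, ∑ x with g x = i, (k - g x) := (sum_fiberwise_eq_sum_filter _ _ _ _).symm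
    _ = _ := sum_congr rfl fun i _ => sum_const_nat fun x hx => by rw [(mem_filter.1 hx).2]

theorem card_filter_card_eq_le_choose {f : ι → Finset β} {T : Finset β} (hf : Injective f)
    (hT : ∀ x, f x ⊆ T) (i : ℕ) : #{x | #(f x) = i} ≤ (#T).choose i := by
  rw [← card_powersetCard]
  exact card_le_card_of_injOn f (fun x hx => mem_powersetCard.2 ⟨hT x, (mem_filter.1 hx).2⟩)
    hf.injOn

theorem mul_card_le_sum_choose_mul_add {f : ι → Finset β} {T : Finset β} (hf : Injective f)
    (hT : ∀ x, f x ⊆ T) (k : ℕ) :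
    k * Fintype.card ι ≤ ∑ i ∈ range k, (#T).choose i * (k - i) + ∑ x, #(f x) :=
  calc k * Fintype.card ι = ∑ x : ι, k := by simp [mul_comm]
    _ ≤ ∑ x, ((k - #(f x)) + #(f x)) := sum_le_sum fun x _ => le_tsub_add
    _ = ∑ i ∈ range k, #{x | #(f x) = i} * (k - i) + ∑ x, #(f x) := by
      rw [sum_add_distrib, sum_tsub_eq_sum_range_card_fiber_mul]
    _ ≤ _ := by gcongr with i; exact card_filter_card_eq_le_choose hf hT i

end Counting

theorem cast_sum_choose_mul_sub (l k : ℕ) :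
    ((∑ i ∈ range k, l.choose i * (k - i) : ℕ) : ℚ) =
      k * ∑ i ∈ range k, (l.choose i : ℚ) - ∑ i ∈ Icc 1 (k - 1), (i : ℚ) * l.choose i := by
  have hIcc : ∑ i ∈ Icc 1 (k - 1), (i : ℚ) * l.choose i = ∑ i ∈ range k, (i : ℚ) * l.choose i :=
    sum_subset (fun i hi => by simp at hi ⊢; omega) fun i hik hi => by
      obtain rfl : i = 0 := by simp at hik hi; omega
      simp
  rw [hIcc, mul_sum, ← sum_sub_distrib, Nat.cast_sum]
  refine sum_congr rfl fun i hi => ?_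
  rw [Nat.cast_mul, Nat.cast_sub (mem_range.1 hi).le]
  ring

theorem base_gives_upper_bound_general (n r l k : ℕ) (𝓑 : Finset (Finset (Fin n)))
    (hbase : IsBaseSym n r 𝓑) (hl : 𝓑.card = l) (hk : 0 < k) :
    (n : ℚ) ≤ (∑ i ∈ Finset.range k, (l.choose i : ℚ)) + mr r l k := by
  obtain ⟨hcard, hstab⟩ := hbase
  have hcount := mul_card_le_sum_choose_mul_add (signature_injective hstab)
    (signature_subset 𝓑) k
  rw [sum_card_signature, sum_const_nat hcard, hl, Fintype.card_fin] at hcount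
  have hcountℚ := (Nat.cast_le (α := ℚ)).2 hcount
  rw [Nat.cast_add, cast_sum_choose_mul_sub] at hcountℚ
  rw [mr, ← sub_le_iff_le_add', le_div_iff₀ (by exact_mod_cast hk)]
  push_cast at hcountℚ
  linarith

/-- If `𝓑` is a base of size `l` for `S_n` acting on `r`-subsets of `[n]` (with
`n ≥ 2r`), and `k` is a positive integer with `l·r ≥ Σ_{i=1}^{k-1} i·C(l,i)`, then
`n ≤ Σ_{i=0}^{k-1} C(l,i) + m_r(l,k)`. -/
theorem base_gives_upper_bound (n r l k : ℕ) (hn : 0 < n) (hr : 0 < r)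
    (h2r : 2 * r ≤ n) (𝓑 : Finset (Finset (Fin n))) (hbase : IsBaseSym n r 𝓑)
    (hl : 𝓑.card = l) (hk : 0 < k)
    (hlr : (∑ i ∈ Finset.Icc 1 (k - 1), (i : ℚ) * (l.choose i)) ≤ (l : ℚ) * r) :
    (n : ℚ) ≤ (∑ i ∈ Finset.range k, (l.choose i : ℚ)) + mr r l k :=
  base_gives_upper_bound_general n r l k 𝓑 hbase hl hk
end

section
/- Let n and r be positive integers with n ≥ (r²+r)/2. Then the base size of the symmetric group S_n acting on the set of r-element subsets of [n] equals ⌈(2n−2)/(r+1)⌉. -/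
open Finset
set_option linter.unusedSectionVars false
set_option maxHeartbeats 1000000


variable {n r : ℕ}

lemma pattern_inj_of_base {𝓑 : Finset (Finset (Fin n))} (hb : IsBaseSym n r 𝓑) :
    Function.Injective (fun x : Fin n => 𝓑.filter (fun B => x ∈ B)) := by
  intro x y hxy
  have hxy' : 𝓑.filter (fun B => x ∈ B) = 𝓑.filter (fun B => y ∈ B) := hxy
  by_contra hne
  have hmem : ∀ B ∈ 𝓑, (x ∈ B ↔ y ∈ B) := by
    intro B hB
    constructor
    · intro h
      have : B ∈ 𝓑.filter (fun B => y ∈ B) := by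
        rw [← hxy']; exact mem_filter.2 ⟨hB, h⟩
      exact (mem_filter.1 this).2
    · intro h
      have : B ∈ 𝓑.filter (fun B => x ∈ B) := by
        rw [hxy']; exact mem_filter.2 ⟨hB, h⟩
      exact (mem_filter.1 this).2
  have hswap : ∀ B ∈ 𝓑, B.image (Equiv.swap x y) = B := by
    intro B hB
    have hsub : B.image (Equiv.swap x y) ⊆ B := by
      intro z hz
      obtain ⟨w, hw, rfl⟩ := mem_image.1 hz
      rcases eq_or_ne w x with rfl | hwx
      · rw [Equiv.swap_apply_left]; exact (hmem _ hB).1 hw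
      rcases eq_or_ne w y with rfl | hwy
      · rw [Equiv.swap_apply_right]; exact (hmem _ hB).2 hw
      · rw [Equiv.swap_apply_of_ne_of_ne hwx hwy]; exact hw
    exact eq_of_subset_of_card_le hsub
      (le_of_eq (card_image_of_injective _ (Equiv.injective _)).symm)
  have h1 := hb.2 _ hswap
  apply hne
  have h2 : Equiv.swap x y x = x := by rw [h1]; rfl
  rw [Equiv.swap_apply_left] at h2
  exact h2.symm ▸ rfl

lemma base_of_pattern_inj {𝓑 : Finset (Finset (Fin n))}
    (hcard : ∀ B ∈ 𝓑, B.card = r)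
    (hinj : Function.Injective (fun x : Fin n => 𝓑.filter (fun B => x ∈ B))) :
    IsBaseSym n r 𝓑 := by
  refine ⟨hcard, fun σ hσ => ?_⟩
  refine Equiv.ext fun x => ?_
  have hx : ∀ B ∈ 𝓑, (σ x ∈ B ↔ x ∈ B) := by
    intro B hB
    conv_lhs => rw [← hσ B hB]
    constructor
    · intro h
      obtain ⟨z, hz, hzx⟩ := mem_image.1 h
      rwa [← σ.injective hzx]
    · intro h
      exact mem_image_of_mem _ h
  have heq : 𝓑.filter (fun B => σ x ∈ B) = 𝓑.filter (fun B => x ∈ B) :=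
    filter_congr (fun B hB => by simp [hx B hB])
  exact hinj heq

lemma lower_bound {𝓑 : Finset (Finset (Fin n))} (hb : IsBaseSym n r 𝓑) :
    2 * n ≤ 𝓑.card * (r + 1) + 2 := by
  classical
  set w : Fin n → ℕ := fun x => (𝓑.filter (fun B => x ∈ B)).card with hw
  have hinj := pattern_inj_of_base hb
  have hsum : ∑ x : Fin n, w x = 𝓑.card * r := by
    have h1 : ∑ x : Fin n, w x = ∑ B ∈ 𝓑, (univ.filter (fun x : Fin n => x ∈ B)).card := by
      simp only [hw, card_filter]
      rw [Finset.sum_comm]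
    rw [h1]
    have h2 : ∀ B ∈ 𝓑, (univ.filter (fun x : Fin n => x ∈ B)).card = r := by
      intro B hB
      rw [filter_univ_mem]; exact hb.1 B hB
    rw [Finset.sum_congr rfl h2, Finset.sum_const, smul_eq_mul]
  set A0 := univ.filter (fun x : Fin n => w x = 0) with hA0
  set A1 := univ.filter (fun x : Fin n => w x = 1) with hA1
  set A2 := univ.filter (fun x : Fin n => 2 ≤ w x) with hA2
  have hdisj01 : Disjoint A0 A1 := by
    simp only [disjoint_left, hA0, hA1, mem_filter, mem_univ, true_and]
    omega
  have hdisj012 : Disjoint (A0 ∪ A1) A2 := by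
    simp only [disjoint_left, hA0, hA1, hA2, mem_union, mem_filter, mem_univ, true_and]
    omega
  have hcardsplit : A0.card + A1.card + A2.card = n := by
    have hu : A0 ∪ A1 ∪ A2 = univ := by
      ext x
      simp only [hA0, hA1, hA2, mem_union, mem_filter, mem_univ, true_and, iff_true]
      omega
    have := card_union_of_disjoint hdisj012
    rw [hu, card_union_of_disjoint hdisj01] at this
    rw [← this, card_univ, Fintype.card_fin]
  have hA0le : A0.card ≤ 1 := by
    refine card_le_one.2 (fun x hx y hy => ?_)
    simp only [hA0, mem_filter, mem_univ, true_and] at hx hy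
    apply hinj
    have hx' : 𝓑.filter (fun B => x ∈ B) = ∅ := card_eq_zero.1 hx
    have hy' : 𝓑.filter (fun B => y ∈ B) = ∅ := card_eq_zero.1 hy
    simp only [hx', hy']
  have hA1le : A1.card ≤ 𝓑.card := by
    have h1 : A1.card = ∑ x ∈ A1, w x := by
      rw [Finset.sum_congr rfl (fun x hx => (mem_filter.1 hx).2), Finset.sum_const,
        smul_eq_mul, mul_one]
    have h2 : ∑ x ∈ A1, w x = ∑ B ∈ 𝓑, (A1.filter (fun x => x ∈ B)).card := by
      simp only [hw, card_filter]
      rw [Finset.sum_comm]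
    have h3 : ∀ B ∈ 𝓑, (A1.filter (fun x => x ∈ B)).card ≤ 1 := by
      intro B hB
      refine card_le_one.2 (fun x hx y hy => ?_)
      rw [mem_filter, hA1, mem_filter] at hx hy
      obtain ⟨⟨-, hx1⟩, hxB⟩ := hx
      obtain ⟨⟨-, hy1⟩, hyB⟩ := hy
      apply hinj
      have ex : 𝓑.filter (fun C => x ∈ C) = {B} := by
        obtain ⟨a, ha⟩ := card_eq_one.1 hx1
        have hBmem : B ∈ 𝓑.filter (fun C => x ∈ C) := mem_filter.2 ⟨hB, hxB⟩
        rw [ha, mem_singleton] at hBmem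
        rw [ha, hBmem]
      have ey : 𝓑.filter (fun C => y ∈ C) = {B} := by
        obtain ⟨a, ha⟩ := card_eq_one.1 hy1
        have hBmem : B ∈ 𝓑.filter (fun C => y ∈ C) := mem_filter.2 ⟨hB, hyB⟩
        rw [ha, mem_singleton] at hBmem
        rw [ha, hBmem]
      simp only [ex, ey]
    calc A1.card = ∑ x ∈ A1, w x := h1
      _ = ∑ B ∈ 𝓑, (A1.filter (fun x => x ∈ B)).card := h2
      _ ≤ ∑ _B ∈ 𝓑, 1 := Finset.sum_le_sum h3
      _ = 𝓑.card := by simp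
  have hsumge : A1.card + 2 * A2.card ≤ ∑ x : Fin n, w x := by
    have e1 : A1.card ≤ ∑ x ∈ A1, w x := by
      calc A1.card = ∑ _x ∈ A1, 1 := by simp
        _ ≤ ∑ x ∈ A1, w x := Finset.sum_le_sum (fun x hx => by
            rw [hA1, mem_filter] at hx; omega)
    have e2 : 2 * A2.card ≤ ∑ x ∈ A2, w x := by
      calc 2 * A2.card = ∑ _x ∈ A2, 2 := by simp [mul_comm]
        _ ≤ ∑ x ∈ A2, w x := Finset.sum_le_sum (fun x hx => by
            rw [hA2, mem_filter] at hx; exact hx.2)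
    have hd12 : Disjoint A1 A2 := by
      simp only [disjoint_left, hA1, hA2, mem_filter, mem_univ, true_and]
      omega
    have hsub : ∑ x ∈ A1, w x + ∑ x ∈ A2, w x ≤ ∑ x : Fin n, w x := by
      rw [← Finset.sum_union hd12]
      exact Finset.sum_le_sum_of_subset (subset_univ _)
    omega
  have hmul : 𝓑.card * (r + 1) = 𝓑.card * r + 𝓑.card := by ring
  omega

lemma base_from_patterns {n r l : ℕ} (P : Finset (Finset (Fin l))) (hP : P.card = n)
    (hcol : ∀ i : Fin l, (P.filter (fun A => i ∈ A)).card = r) :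
    ∃ 𝓑 : Finset (Finset (Fin n)), IsBaseSym n r 𝓑 ∧ 𝓑.card ≤ l := by
  classical
  let e : Fin n ≃ {A // A ∈ P} := (P.equivFinOfCardEq hP).symm
  let B : Fin l → Finset (Fin n) := fun i => univ.filter (fun x => i ∈ (e x : Finset (Fin l)))
  refine ⟨univ.image B, ⟨?_, ?_⟩, ?_⟩
  · intro B' hB'
    obtain ⟨i, -, rfl⟩ := mem_image.1 hB'
    have : (B i).card = (P.filter (fun A => i ∈ A)).card := by
      refine card_bij (fun x _ => (e x : Finset (Fin l))) ?_ ?_ ?_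
      · intro x hx
        rw [mem_filter] at hx
        exact mem_filter.2 ⟨(e x).2, hx.2⟩
      · intro x _ y _ hxy
        exact e.injective (Subtype.ext hxy)
      · intro A hA
        rw [mem_filter] at hA
        refine ⟨e.symm ⟨A, hA.1⟩, ?_, by simp⟩
        rw [mem_filter]
        refine ⟨mem_univ _, ?_⟩
        simpa using hA.2
    rw [this, hcol]
  · intro σ hσ
    have hinj : Function.Injective (fun x : Fin n =>
        (univ.image B).filter (fun C => x ∈ C)) := by
      intro x y hxy
      have hxy' : ∀ C ∈ univ.image B, (x ∈ C ↔ y ∈ C) := by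
        intro C hC
        have hxy'' : (univ.image B).filter (fun C => x ∈ C)
            = (univ.image B).filter (fun C => y ∈ C) := hxy
        constructor
        · intro h
          have : C ∈ (univ.image B).filter (fun C => y ∈ C) := by
            rw [← hxy'']; exact mem_filter.2 ⟨hC, h⟩
          exact (mem_filter.1 this).2
        · intro h
          have : C ∈ (univ.image B).filter (fun C => x ∈ C) := by
            rw [hxy'']; exact mem_filter.2 ⟨hC, h⟩
          exact (mem_filter.1 this).2
      have hBixy : ∀ i : Fin l, (i ∈ (e x : Finset (Fin l)) ↔ i ∈ (e y : Finset (Fin l))) := by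
        intro i
        have := hxy' (B i) (mem_image_of_mem B (mem_univ i))
        simpa [B, mem_filter] using this
      have : (e x : Finset (Fin l)) = (e y : Finset (Fin l)) := Finset.ext hBixy
      exact e.injective (Subtype.ext this)
    exact (base_of_pattern_inj (by
      intro B' hB'
      obtain ⟨i, -, rfl⟩ := mem_image.1 hB'
      have : (B i).card = (P.filter (fun A => i ∈ A)).card := by
        refine card_bij (fun x _ => (e x : Finset (Fin l))) ?_ ?_ ?_
        · intro x hx
          rw [mem_filter] at hx
          exact mem_filter.2 ⟨(e x).2, hx.2⟩
        · intro x _ y _ hxy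
          exact e.injective (Subtype.ext hxy)
        · intro A hA
          rw [mem_filter] at hA
          refine ⟨e.symm ⟨A, hA.1⟩, ?_, by simp⟩
          rw [mem_filter]
          refine ⟨mem_univ _, ?_⟩
          simpa using hA.2
      rw [this, hcol]) hinj).2 σ hσ
  · calc (univ.image B).card ≤ univ.card := card_image_le
      _ = l := by simp

namespace Construction

variable {l : ℕ} [NeZero l]

def pr (t : ℕ) (v : ZMod l) : Finset (ZMod l) := {v, v + (t : ZMod l)}

lemma mem_pr {t : ℕ} {v i : ZMod l} : i ∈ pr t v ↔ v = i ∨ v = i - (t : ZMod l) := by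
  simp only [pr, mem_insert, mem_singleton]
  constructor
  · rintro (rfl | h)
    · exact Or.inl rfl
    · right; rw [h]; ring
  · rintro (rfl | rfl)
    · exact Or.inl rfl
    · right; ring

lemma card_pr {t : ℕ} {v : ZMod l} (ht : (t : ZMod l) ≠ 0) : (pr t v).card = 2 := by
  rw [pr, card_insert_of_notMem, card_singleton]
  simp only [mem_singleton]
  intro h
  exact ht (by linear_combination -h)

lemma pr_eq_pr_iff {t t' : ℕ} {v w : ZMod l} (ht : (t : ZMod l) ≠ 0) (ht' : (t' : ZMod l) ≠ 0) :
    pr t v = pr t' w ↔ (v = w ∧ (t : ZMod l) = t') ∨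
      (v = w + t' ∧ (t : ZMod l) + t' = 0) := by
  constructor
  · intro h
    have hv : v ∈ pr t' w := by rw [← h]; simp [pr]
    have hvt : v + t ∈ pr t' w := by rw [← h]; simp [pr]
    simp only [pr, mem_insert, mem_singleton] at hv hvt
    rcases hv with rfl | rfl
    · rcases hvt with h1 | h1
      · exact absurd (by linear_combination h1) ht
      · exact Or.inl ⟨rfl, by linear_combination h1⟩
    · rcases hvt with h1 | h1
      · exact Or.inr ⟨rfl, by linear_combination h1⟩
      · exact absurd (by linear_combination h1) ht
  · rintro (⟨rfl, h⟩ | ⟨rfl, h⟩)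
    · rw [pr, pr, h]
    · rw [pr, pr]
      have h1 : w + (t' : ZMod l) + t = w := by linear_combination h
      rw [h1]
      exact pair_comm _ _

/-- cast of a positive natural `< l` is nonzero -/
lemma cast_ne_zero {t : ℕ} (h0 : 0 < t) (hl : t < l) : (t : ZMod l) ≠ 0 := by
  intro h
  have := ZMod.val_cast_of_lt hl
  rw [h, ZMod.val_zero] at this
  omega

lemma cast_inj_of_lt {a b : ℕ} (ha : a < l) (hb : b < l) (h : (a : ZMod l) = b) : a = b := by
  have h1 := ZMod.val_cast_of_lt ha
  have h2 := ZMod.val_cast_of_lt hb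
  rw [h, h2] at h1
  omega

lemma cast_eq_iff_val {a : ℕ} (ha : a < l) {i : ZMod l} : (a : ZMod l) = i ↔ i.val = a := by
  constructor
  · rintro rfl; exact ZMod.val_cast_of_lt ha
  · rintro rfl; exact ZMod.natCast_rightInverse i

/-- full round of pairs at distance t -/
def Round (t : ℕ) : Finset (Finset (ZMod l)) := univ.image (pr t)

lemma filter_round (t : ℕ) (i : ZMod l) :
    (Round (l := l) t).filter (fun A => i ∈ A)
      = ({i, i - (t : ZMod l)} : Finset (ZMod l)).image (pr t) := by
  rw [Round, filter_image]
  congr 1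
  ext v
  simp only [mem_filter, mem_univ, true_and, mem_pr, mem_insert, mem_singleton]

lemma deg_round_two {t : ℕ} (ht : (t : ZMod l) ≠ 0) (h2t : (t : ZMod l) + t ≠ 0) (i : ZMod l) :
    ((Round (l := l) t).filter (fun A => i ∈ A)).card = 2 := by
  rw [filter_round, image_insert, image_singleton, card_insert_of_notMem, card_singleton]
  simp only [mem_singleton]
  rw [pr_eq_pr_iff ht ht]
  rintro (⟨h, -⟩ | ⟨-, h⟩)
  · exact ht (by linear_combination h)
  · exact h2t h

lemma card_round_two {t : ℕ} (ht : (t : ZMod l) ≠ 0) (h2t : (t : ZMod l) + t ≠ 0) :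
    (Round (l := l) t).card = l := by
  rw [Round, card_image_of_injective _ ?_, card_univ, ZMod.card]
  intro v w h
  rcases (pr_eq_pr_iff ht ht).1 h with ⟨h1, -⟩ | ⟨-, h1⟩
  · exact h1
  · exact absurd h1 h2t

lemma round_disjoint {t t' : ℕ} (ht : (t : ZMod l) ≠ 0) (ht' : (t' : ZMod l) ≠ 0)
    (hne : (t : ZMod l) ≠ t') (hsum : (t : ZMod l) + t' ≠ 0) :
    Disjoint (Round (l := l) t) (Round (l := l) t') := by
  rw [disjoint_left]
  rintro A hA hA'
  obtain ⟨v, -, rfl⟩ := mem_image.1 hA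
  obtain ⟨w, -, h⟩ := mem_image.1 hA'
  rcases (pr_eq_pr_iff ht' ht).1 h with ⟨-, h1⟩ | ⟨-, h1⟩
  · exact hne h1.symm
  · exact hsum (by linear_combination h1)

/-- all full rounds at distances 1..k -/
def Efull (k : ℕ) : Finset (Finset (ZMod l)) := (Icc 1 k).biUnion (fun t => Round t)

variable {k : ℕ}

lemma round_nz (h2k : 2 * k < l) {t : ℕ} (ht : t ∈ Icc 1 k) : (t : ZMod l) ≠ 0 := by
  rw [mem_Icc] at ht
  exact cast_ne_zero (by omega) (by omega)

lemma round_nz2 (h2k : 2 * k < l) {t : ℕ} (ht : t ∈ Icc 1 k) : (t : ZMod l) + t ≠ 0 := by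
  rw [mem_Icc] at ht
  have : ((t + t : ℕ) : ZMod l) ≠ 0 := cast_ne_zero (by omega) (by omega)
  intro h
  apply this
  push_cast
  exact h

lemma Efull_pdisj (h2k : 2 * k < l) :
    Set.PairwiseDisjoint (Icc 1 k : Finset ℕ) (fun t => Round (l := l) t) := by
  intro t ht t' ht' hne
  have ht1 := ht; have ht1' := ht'
  rw [coe_Icc, Set.mem_Icc] at ht1 ht1'
  refine round_disjoint (round_nz h2k (by simpa using ht)) (round_nz h2k (by simpa using ht')) ?_ ?_
  · intro h
    exact hne (cast_inj_of_lt (by omega) (by omega) h)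
  · intro h
    have : ((t + t' : ℕ) : ZMod l) ≠ 0 := cast_ne_zero (by omega) (by omega)
    apply this
    push_cast
    exact h

lemma card_Efull (h2k : 2 * k < l) : (Efull (l := l) k).card = l * k := by
  rw [Efull, card_biUnion (Efull_pdisj h2k)]
  rw [Finset.sum_congr rfl (fun t ht => card_round_two (round_nz h2k ht) (round_nz2 h2k ht))]
  simp [mul_comm]

lemma deg_Efull (h2k : 2 * k < l) (i : ZMod l) :
    ((Efull (l := l) k).filter (fun A => i ∈ A)).card = 2 * k := by
  rw [Efull, filter_biUnion, card_biUnion]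
  · rw [Finset.sum_congr rfl (fun t ht => deg_round_two (round_nz h2k ht) (round_nz2 h2k ht) i)]
    simp [mul_comm]
  · intro t ht t' ht' hne
    exact Finset.disjoint_filter_filter (Efull_pdisj h2k ht ht' hne)

lemma card_of_mem_Efull (h2k : 2 * k < l) {A : Finset (ZMod l)}
    (hA : A ∈ Efull (l := l) k) : A.card = 2 := by
  rw [Efull, mem_biUnion] at hA
  obtain ⟨t, ht, hA⟩ := hA
  obtain ⟨v, -, rfl⟩ := mem_image.1 hA
  exact card_pr (round_nz h2k ht)

lemma pr_not_mem_Efull (h2k : 2 * k < l) {u : ℕ} (hu1 : k < u) (hu2 : u + k < l)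
    (v : ZMod l) : pr u v ∉ Efull (l := l) k := by
  intro h
  rw [Efull, mem_biUnion] at h
  obtain ⟨t, ht, hA⟩ := h
  obtain ⟨w, -, hw⟩ := mem_image.1 hA
  rw [mem_Icc] at ht
  have hu0 : (u : ZMod l) ≠ 0 := cast_ne_zero (by omega) (by omega)
  have ht0 : (t : ZMod l) ≠ 0 := cast_ne_zero (by omega) (by omega)
  rcases (pr_eq_pr_iff ht0 hu0).1 hw with ⟨-, h1⟩ | ⟨-, h1⟩
  · have := cast_inj_of_lt (show t < l by omega) (show u < l by omega) h1
    omega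
  · have : ((t + u : ℕ) : ZMod l) ≠ 0 := cast_ne_zero (by omega) (by omega)
    apply this
    push_cast
    exact h1

/-- a segment of pairs `{f j, f j + t}` for `j < c` -/
def pairSeg (f : ℕ → ℕ) (c t : ℕ) : Finset (Finset (ZMod l)) :=
  (range c).image (fun j => pr t ((f j : ℕ) : ZMod l))

section pairSeg
variable {f : ℕ → ℕ} {c t : ℕ}

lemma pairSeg_injOn (hc : ∀ j < c, f j + t < l) (ht : 0 < t)
    (hinj : ∀ j j', j < c → j' < c → f j = f j' → j = j')
    (hsec : ∀ j j', j < c → j' < c → f j ≠ f j' + t) :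
    ∀ j ∈ range c, ∀ j' ∈ range c,
      pr (l := l) t ((f j : ℕ) : ZMod l) = pr t ((f j' : ℕ) : ZMod l) → j = j' := by
  intro j hj j' hj' h
  rw [mem_range] at hj hj'
  have ht0 : (t : ZMod l) ≠ 0 := cast_ne_zero ht (by have := hc j hj; omega)
  rcases (pr_eq_pr_iff ht0 ht0).1 h with ⟨h1, -⟩ | ⟨h1, -⟩
  · exact hinj _ _ hj hj' (cast_inj_of_lt (by have := hc j hj; omega)
      (by have := hc j' hj'; omega) h1)
  · exfalso
    have h2 : ((f j : ℕ) : ZMod l) = ((f j' + t : ℕ) : ZMod l) := by push_cast; exact h1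
    exact hsec _ _ hj hj' (cast_inj_of_lt (by have := hc j hj; omega) (hc j' hj') h2)

lemma card_pairSeg (hc : ∀ j < c, f j + t < l) (ht : 0 < t)
    (hinj : ∀ j j', j < c → j' < c → f j = f j' → j = j')
    (hsec : ∀ j j', j < c → j' < c → f j ≠ f j' + t) :
    (pairSeg (l := l) f c t).card = c := by
  rw [pairSeg, card_image_of_injOn (fun j hj j' hj' h => pairSeg_injOn hc ht hinj hsec j hj j' hj' h),
    card_range]

lemma deg_pairSeg (hc : ∀ j < c, f j + t < l) (ht : 0 < t)
    (hinj : ∀ j j', j < c → j' < c → f j = f j' → j = j')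
    (hsec : ∀ j j', j < c → j' < c → f j ≠ f j' + t) (i : ZMod l) :
    ((pairSeg (l := l) f c t).filter (fun A => i ∈ A)).card
      = ((range c).filter (fun j => i.val = f j ∨ i.val = f j + t)).card := by
  rw [pairSeg, filter_image]
  rw [card_image_of_injOn]
  · congr 1
    refine filter_congr (fun j hj => ?_)
    rw [mem_range] at hj
    have h1 : f j < l := by have := hc j hj; omega
    have h2 : f j + t < l := hc j hj
    simp only [mem_pr]
    constructor
    · rintro (h | h)
      · left; exact (cast_eq_iff_val h1).1 h
      · right
        have h3 : ((f j + t : ℕ) : ZMod l) = i := by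
          push_cast
          linear_combination h
        exact (cast_eq_iff_val h2).1 h3
    · rintro (h | h)
      · left; exact (cast_eq_iff_val h1).2 h
      · have h3 : ((f j + t : ℕ) : ZMod l) = i := (cast_eq_iff_val h2).2 h
        push_cast at h3
        right
        linear_combination h3
  · intro j hj j' hj' h
    rw [mem_coe, mem_filter] at hj hj'
    exact pairSeg_injOn hc ht hinj hsec j hj.1 j' hj'.1 h

lemma card_of_mem_pairSeg (hc : ∀ j < c, f j + t < l) (ht : 0 < t)
    {A : Finset (ZMod l)} (hA : A ∈ pairSeg (l := l) f c t) : A.card = 2 := by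
  obtain ⟨j, hj, rfl⟩ := mem_image.1 hA
  rw [mem_range] at hj
  exact card_pr (cast_ne_zero ht (by have := hc j hj; omega))

end pairSeg

/-- all singletons -/
def Sgl : Finset (Finset (ZMod l)) := univ.image (fun v : ZMod l => ({v} : Finset (ZMod l)))

lemma card_Sgl : (Sgl (l := l)).card = l := by
  rw [Sgl, card_image_of_injective _ (fun a b h => singleton_injective h), card_univ, ZMod.card]

lemma deg_Sgl (i : ZMod l) : ((Sgl (l := l)).filter (fun A => i ∈ A)).card = 1 := by
  rw [Sgl, filter_image]
  have : (univ.filter (fun v : ZMod l => i ∈ ({v} : Finset (ZMod l)))) = {i} := by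
    ext v
    simp [eq_comm]
  rw [this, image_singleton, card_singleton]

lemma card_of_mem_Sgl {A : Finset (ZMod l)} (hA : A ∈ Sgl (l := l)) : A.card = 1 := by
  obtain ⟨v, -, rfl⟩ := mem_image.1 hA
  exact card_singleton _

/-- finset of ZMod l given by a predicate on values -/
lemma card_val_filter (p : ℕ → Prop) [DecidablePred p] :
    (univ.filter (fun i : ZMod l => p i.val)).card = ((range l).filter p).card := by
  refine card_bij (fun i _ => i.val) ?_ ?_ ?_
  · intro i hi
    rw [mem_filter] at hi ⊢
    exact ⟨mem_range.2 (ZMod.val_lt i), hi.2⟩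
  · intro a _ b _ h
    exact ZMod.val_injective l h
  · intro v hv
    rw [mem_filter, mem_range] at hv
    refine ⟨(v : ZMod l), ?_, ZMod.val_cast_of_lt hv.1⟩
    rw [mem_filter]
    exact ⟨mem_univ _, by rw [ZMod.val_cast_of_lt hv.1]; exact hv.2⟩


lemma filter_sdiff' {α : Type*} [DecidableEq α] (p : α → Prop) [DecidablePred p]
    (s t : Finset α) : (s \ t).filter p = s.filter p \ t.filter p := by
  ext a
  simp only [mem_filter, mem_sdiff]
  tauto

lemma caseA {r n s k : ℕ} (hrk : r = 2*k+1) (hs2 : 2 ∣ s) (hsr : s ≤ r) (hrl : r ≤ l)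
    (heq : l * (r+1) = 2*(n-1) + s) (hn : 1 ≤ n) :
    ∃ P : Finset (Finset (ZMod l)), P.card = n
      ∧ ∀ i, (P.filter (fun A => i ∈ A)).card = r := by
  classical
  subst hrk
  have h2k : 2 * k < l := by omega
  have hk : s = 0 ∨ 1 ≤ k := by omega
  set Del : Finset (Finset (ZMod l)) := pairSeg (fun j => 2*j) (s/2) 1 with hDel
  set W : Finset (ZMod l) := univ.filter (fun i : ZMod l => i.val < s) with hW
  set E : Finset (Finset (ZMod l)) := Efull k \ Del with hE
  have hc : ∀ j < s/2, (fun j => 2*j) j + 1 < l := fun j hj => by show 2*j+1 < l; omega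
  have ht : (0:ℕ) < 1 := one_pos
  have hinj : ∀ j j', j < s/2 → j' < s/2 → 2*j = 2*j' → j = j' := fun j j' _ _ h => by omega
  have hsec : ∀ j j', j < s/2 → j' < s/2 → 2*j ≠ 2*j' + 1 := fun j j' _ _ h => by omega
  have hDelSub : Del ⊆ Efull k := by
    intro A hA
    rw [hDel, pairSeg, mem_image] at hA
    obtain ⟨j, hj, rfl⟩ := hA
    rw [mem_range] at hj
    have hk1 : 1 ≤ k := by rcases hk with h0 | h1 <;> omega
    exact mem_biUnion.2 ⟨1, mem_Icc.2 ⟨le_refl 1, hk1⟩, mem_image.2 ⟨_, mem_univ _, rfl⟩⟩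
  have cardDel : Del.card = s / 2 := card_pairSeg hc ht hinj hsec
  have cardE : E.card = l * k - s / 2 := by
    rw [hE, card_sdiff_of_subset hDelSub, card_Efull h2k, cardDel]
  have memW : ∀ i : ZMod l, i ∈ W ↔ i.val < s := fun i => by
    rw [hW, mem_filter]; simp
  have cardW : W.card = s := by
    rw [hW, card_val_filter (fun v => v < s)]
    have h1 : (range l).filter (fun v => v < s) = range s := by
      ext v; simp only [mem_filter, mem_range]; omega
    rw [h1, card_range]
  have degDel : ∀ i : ZMod l, (Del.filter (fun A => i ∈ A)).card
      = if i.val < s then 1 else 0 := by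
    intro i
    rw [hDel, deg_pairSeg hc ht hinj hsec]
    by_cases hi : i.val < s
    · have h1 : (range (s/2)).filter (fun j => i.val = 2*j ∨ i.val = 2*j + 1) = {i.val / 2} := by
        ext j; simp only [mem_filter, mem_range, mem_singleton]; omega
      rw [h1, card_singleton, if_pos hi]
    · have h1 : (range (s/2)).filter (fun j => i.val = 2*j ∨ i.val = 2*j + 1) = ∅ := by
        ext j; simp only [mem_filter, mem_range, notMem_empty, iff_false]; omega
      rw [h1, card_empty, if_neg hi]
  have degE : ∀ i : ZMod l, (E.filter (fun A => i ∈ A)).card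
      = 2*k - (if i.val < s then 1 else 0) := by
    intro i
    rw [hE, filter_sdiff', card_sdiff_of_subset (filter_subset_filter _ hDelSub), deg_Efull h2k, degDel]
  have hSE : Disjoint Sgl E := by
    rw [disjoint_left]
    intro A hS hEm
    have h1 := card_of_mem_Sgl hS
    have h2 := card_of_mem_Efull h2k (mem_sdiff.1 hEm).1
    omega
  have hWSE : W ∉ Sgl ∪ E := by
    intro h
    rcases mem_union.1 h with h | h
    · have := card_of_mem_Sgl h
      rw [cardW] at this
      omega
    · rcases Nat.lt_or_ge s 2 with hs | hs
      · have hs0 : s = 0 := by omega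
        have h2 := card_of_mem_Efull h2k (mem_sdiff.1 h).1
        rw [cardW, hs0] at h2
        omega
      rcases Nat.lt_or_ge s 3 with hs' | hs'
      · have hs2' : s = 2 := by omega
        have hWpr : W = pr 1 (((fun j => 2*j) 0 : ℕ) : ZMod l) := by
          ext i
          rw [memW, hs2']
          simp only [pr, Nat.mul_zero, Nat.cast_zero, mem_insert, mem_singleton, zero_add]
          constructor
          · intro hv
            have hv' : i.val = 0 ∨ i.val = 1 := by omega
            rcases hv' with h0 | h1
            · left; exact ((ZMod.val_eq_zero i).1 h0)
            · right
              have h2 : ((1:ℕ) : ZMod l) = i := (cast_eq_iff_val (by omega)).2 h1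
              exact h2.symm
          · rintro (rfl | rfl)
            · rw [ZMod.val_zero]; omega
            · have h3 : ((1:ℕ) : ZMod l).val = 1 := ZMod.val_cast_of_lt (by omega)
              rw [h3]; omega
        have hWDel : W ∈ Del := by
          rw [hDel, pairSeg, mem_image]
          exact ⟨0, mem_range.2 (by omega), hWpr.symm⟩
        exact (mem_sdiff.1 h).2 hWDel
      · have h2 := card_of_mem_Efull h2k (mem_sdiff.1 h).1
        rw [cardW] at h2
        omega
  refine ⟨insert W (Sgl ∪ E), ?_, ?_⟩
  · rw [card_insert_of_notMem hWSE, card_union_of_disjoint hSE, card_Sgl, cardE]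
    have heq' : 2*(l*k) + 2*l = 2*(n-1) + s := by rw [← heq]; ring
    set m := l * k with hm
    rcases hk with h0 | h1
    · omega
    · have hlm : l ≤ m := by rw [hm]; exact Nat.le_mul_of_pos_right l (by omega)
      omega
  · intro i
    have hWnot : W ∉ (Sgl ∪ E).filter (fun A => i ∈ A) :=
      fun hmem => hWSE (filter_subset _ _ hmem)
    have hcardSplit : ((insert W (Sgl ∪ E)).filter (fun A => i ∈ A)).card
        = (if i ∈ W then 1 else 0) + ((Sgl ∪ E).filter (fun A => i ∈ A)).card := by
      rw [filter_insert]
      by_cases hiW : i ∈ W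
      · rw [if_pos hiW, card_insert_of_notMem hWnot, if_pos hiW]
        omega
      · rw [if_neg hiW, if_neg hiW]
        omega
    rw [hcardSplit, filter_union, card_union_of_disjoint (disjoint_filter_filter hSE),
      deg_Sgl, degE]
    by_cases hi : i.val < s
    · have hk1 : 1 ≤ k := by rcases hk with h0 | h1 <;> omega
      rw [if_pos ((memW i).2 hi), if_pos hi]
      omega
    · rw [if_neg (fun h => hi ((memW i).1 h)), if_neg hi]
      omega

lemma caseB {r n s k : ℕ} (hrk : r = 2*k+2) (hl2 : 2 ∣ l) (hs2 : 2 ∣ s) (hsr : s ≤ r)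
    (hrl : r ≤ l) (heq : l * (r+1) = 2*(n-1) + s) (hn : 1 ≤ n) :
    ∃ P : Finset (Finset (ZMod l)), P.card = n
      ∧ ∀ i, (P.filter (fun A => i ∈ A)).card = r := by
  classical
  subst hrk
  have h2k : 2 * k < l := by omega
  have hl0 : 0 < l := by omega
  have hhalf : k < l/2 ∧ l/2 + k < l ∧ 0 < l/2 ∧ l/2 < l := by omega
  have hsl : s ≤ l := by omega
  set M : Finset (Finset (ZMod l)) := pairSeg (fun j => j) (l/2) (l/2) with hM
  set Del : Finset (Finset (ZMod l)) := pairSeg (fun j => j) (s/2) (l/2) with hDel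
  set pW : ℕ → Prop := fun v => v < s/2 ∨ (l/2 ≤ v ∧ v < l/2 + s/2) with hpW
  have hpWd : DecidablePred pW := fun v => by rw [hpW]; infer_instance
  set W : Finset (ZMod l) := univ.filter (fun i : ZMod l => pW i.val) with hW
  set E : Finset (Finset (ZMod l)) := (Efull k ∪ M) \ Del with hE
  have hcM : ∀ j < l/2, (fun j => j) j + l/2 < l := fun j hj => by show j + l/2 < l; omega
  have htM : 0 < l/2 := by omega
  have hinjM : ∀ j j', j < l/2 → j' < l/2 → (fun j => j) j = (fun j => j) j' → j = j' :=
    fun j j' _ _ h => h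
  have hsecM : ∀ j j', j < l/2 → j' < l/2 → (fun j => j) j ≠ (fun j => j) j' + l/2 :=
    fun j j' hj hj' h => by simp only at h; omega
  have hcD : ∀ j < s/2, (fun j => j) j + l/2 < l := fun j hj => by show j + l/2 < l; omega
  have hinjD : ∀ j j', j < s/2 → j' < s/2 → (fun j => j) j = (fun j => j) j' → j = j' :=
    fun j j' _ _ h => h
  have hsecD : ∀ j j', j < s/2 → j' < s/2 → (fun j => j) j ≠ (fun j => j) j' + l/2 :=
    fun j j' hj hj' h => by simp only at h; omega
  have hDelM : Del ⊆ M := by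
    intro A hA
    rw [hDel, pairSeg, mem_image] at hA
    obtain ⟨j, hj, rfl⟩ := hA
    rw [mem_range] at hj
    exact mem_image.2 ⟨j, mem_range.2 (by omega), rfl⟩
  have hMEfull : Disjoint (Efull k) M := by
    rw [disjoint_right]
    intro A hA
    rw [hM, pairSeg, mem_image] at hA
    obtain ⟨j, -, rfl⟩ := hA
    exact pr_not_mem_Efull h2k (by omega) (by omega) _
  have hDelSub : Del ⊆ Efull k ∪ M := fun A hA => mem_union.2 (Or.inr (hDelM hA))
  have cardM : M.card = l/2 := card_pairSeg hcM htM hinjM hsecM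
  have cardDel : Del.card = s/2 := card_pairSeg hcD htM hinjD hsecD
  have cardE : E.card = (l * k + l/2) - s/2 := by
    rw [hE, card_sdiff_of_subset hDelSub, card_union_of_disjoint hMEfull, card_Efull h2k, cardM, cardDel]
  have degM : ∀ i : ZMod l, (M.filter (fun A => i ∈ A)).card = 1 := by
    intro i
    have hvl := ZMod.val_lt i
    rw [hM, deg_pairSeg hcM htM hinjM hsecM]
    by_cases hi : i.val < l/2
    · have h1 : (range (l/2)).filter (fun j => i.val = j ∨ i.val = j + l/2) = {i.val} := by
        ext j; simp only [mem_filter, mem_range, mem_singleton]; omega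
      rw [h1, card_singleton]
    · have h1 : (range (l/2)).filter (fun j => i.val = j ∨ i.val = j + l/2)
          = {i.val - l/2} := by
        ext j; simp only [mem_filter, mem_range, mem_singleton]; omega
      rw [h1, card_singleton]
  have degDel : ∀ i : ZMod l, (Del.filter (fun A => i ∈ A)).card
      = if pW i.val then 1 else 0 := by
    intro i
    have hvl := ZMod.val_lt i
    rw [hDel, deg_pairSeg hcD htM hinjD hsecD]
    by_cases hi : pW i.val
    · rw [if_pos hi]
      rcases hi with hi | hi
      · have h1 : (range (s/2)).filter (fun j => i.val = j ∨ i.val = j + l/2) = {i.val} := by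
          ext j; simp only [mem_filter, mem_range, mem_singleton]; omega
        rw [h1, card_singleton]
      · have h1 : (range (s/2)).filter (fun j => i.val = j ∨ i.val = j + l/2)
            = {i.val - l/2} := by
          ext j; simp only [mem_filter, mem_range, mem_singleton]; omega
        rw [h1, card_singleton]
    · rw [if_neg hi, hpW] at *
      have h1 : (range (s/2)).filter (fun j => i.val = j ∨ i.val = j + l/2) = ∅ := by
        ext j; simp only [mem_filter, mem_range, notMem_empty, iff_false]
        push_neg at hi
        omega
      rw [h1, card_empty]
  have memW : ∀ i : ZMod l, i ∈ W ↔ pW i.val := fun i => by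
    rw [hW, mem_filter]; simp
  have cardW : W.card = s := by
    rw [hW, card_val_filter pW]
    have h1 : (range l).filter pW = range (s/2) ∪ Ico (l/2) (l/2 + s/2) := by
      ext v; simp only [hpW, mem_filter, mem_range, mem_union, mem_Ico]; omega
    rw [h1, card_union_of_disjoint, card_range, Nat.card_Ico]
    · omega
    · rw [disjoint_left]
      intro v hv hv'
      rw [mem_range] at hv
      rw [mem_Ico] at hv'
      omega
  have degE : ∀ i : ZMod l, (E.filter (fun A => i ∈ A)).card
      = (2*k + 1) - (if pW i.val then 1 else 0) := by
    intro i
    rw [hE, filter_sdiff', card_sdiff_of_subset (filter_subset_filter _ hDelSub), filter_union,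
      card_union_of_disjoint (disjoint_filter_filter hMEfull), deg_Efull h2k, degM, degDel]
  have cardmemE : ∀ A ∈ E, A.card = 2 := by
    intro A hA
    rcases mem_union.1 (mem_sdiff.1 hA).1 with h | h
    · exact card_of_mem_Efull h2k h
    · exact card_of_mem_pairSeg hcM htM h
  have hSE : Disjoint Sgl E := by
    rw [disjoint_left]
    intro A hS hEm
    have h1 := card_of_mem_Sgl hS
    have h2 := cardmemE A hEm
    omega
  have hWSE : W ∉ Sgl ∪ E := by
    intro h
    rcases mem_union.1 h with h | h
    · have := card_of_mem_Sgl h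
      rw [cardW] at this
      omega
    · rcases Nat.lt_or_ge s 2 with hs | hs
      · have hs0 : s = 0 := by omega
        have h2 := cardmemE W h
        rw [cardW, hs0] at h2
        omega
      rcases Nat.lt_or_ge s 3 with hs' | hs'
      · have hs2' : s = 2 := by omega
        have hWpr : W = pr (l/2) (((fun j => j) 0 : ℕ) : ZMod l) := by
          ext i
          rw [memW]
          simp only [pr, Nat.cast_zero, mem_insert, mem_singleton, zero_add, hpW, hs2']
          constructor
          · intro hv
            rcases hv with h0 | h1
            · left; exact ((ZMod.val_eq_zero i).1 (by omega))
            · right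
              have h2 : ((l/2 : ℕ) : ZMod l) = i := (cast_eq_iff_val (by omega)).2 (by omega)
              exact h2.symm
          · rintro (rfl | rfl)
            · rw [ZMod.val_zero]; omega
            · have h3 : ((l/2:ℕ) : ZMod l).val = l/2 := ZMod.val_cast_of_lt (by omega)
              rw [h3]; omega
        have hWDel : W ∈ Del := by
          rw [hDel, pairSeg, mem_image]
          exact ⟨0, mem_range.2 (by omega), hWpr.symm⟩
        exact (mem_sdiff.1 h).2 hWDel
      · have h2 := cardmemE W h
        rw [cardW] at h2
        omega
  refine ⟨insert W (Sgl ∪ E), ?_, ?_⟩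
  · rw [card_insert_of_notMem hWSE, card_union_of_disjoint hSE, card_Sgl, cardE]
    have heq' : 2*(l*k) + 3*l = 2*(n-1) + s := by rw [← heq]; ring
    set m := l * k with hm
    omega
  · intro i
    have hWnot : W ∉ (Sgl ∪ E).filter (fun A => i ∈ A) :=
      fun hmem => hWSE (filter_subset _ _ hmem)
    have hcardSplit : ((insert W (Sgl ∪ E)).filter (fun A => i ∈ A)).card
        = (if i ∈ W then 1 else 0) + ((Sgl ∪ E).filter (fun A => i ∈ A)).card := by
      rw [filter_insert]
      by_cases hiW : i ∈ W
      · rw [if_pos hiW, card_insert_of_notMem hWnot, if_pos hiW]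
        omega
      · rw [if_neg hiW, if_neg hiW]
        omega
    rw [hcardSplit, filter_union, card_union_of_disjoint (disjoint_filter_filter hSE),
      deg_Sgl, degE]
    by_cases hi : pW i.val
    · rw [if_pos ((memW i).2 hi), if_pos hi]
      omega
    · rw [if_neg (fun h => hi ((memW i).1 h)), if_neg hi]
      omega


lemma caseC {r n s k : ℕ} (hrk : r = 2*k+2) (hl2 : ¬ 2 ∣ l) (hs2 : ¬ 2 ∣ s) (hsr : s ≤ r)
    (hrl : r ≤ l) (heq : l * (r+1) = 2*(n-1) + s) (hn : 1 ≤ n) :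
    ∃ P : Finset (Finset (ZMod l)), P.card = n
      ∧ ∀ i, (P.filter (fun A => i ∈ A)).card = r := by
  classical
  subst hrk
  have hrl' : 2*k+2 < l := by omega
  have h2k : 2 * k < l := by omega
  set h : ℕ := if s = 1 then 3 else s with hh
  have hodd : ¬ 2 ∣ h := by rw [hh]; split <;> omega
  have hh3 : 3 ≤ h := by rw [hh]; split <;> omega
  have hhl : h ≤ l := by rw [hh]; split <;> omega
  set c : ℕ := (l - h)/2 with hc
  have hc2 : 2*c = l - h := by omega
  set u : ℕ := max (k+1) c with hu
  have hku : k + 1 ≤ u := le_max_left _ _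
  have hcu : c ≤ u := le_max_right _ _
  have huc : u + c ≤ l := by omega
  have huk : u + k < l := by omega
  set pC : ℕ → Prop := fun v => v < c ∨ (u ≤ v ∧ v < u + c) with hpC
  have hpCd : DecidablePred pC := fun v => by rw [hpC]; infer_instance
  set M : Finset (Finset (ZMod l)) := pairSeg (fun j => j) c u with hM
  set W : Finset (ZMod l) := univ.filter (fun i : ZMod l => ¬ pC i.val) with hW
  set E : Finset (Finset (ZMod l)) := Efull k ∪ M with hE
  have hcM : ∀ j < c, (fun j => j) j + u < l := fun j hj => by show j + u < l; omega
  have htM : 0 < u := by omega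
  have hinjM : ∀ j j', j < c → j' < c → (fun j => j) j = (fun j => j) j' → j = j' :=
    fun j j' _ _ hx => hx
  have hsecM : ∀ j j', j < c → j' < c → (fun j => j) j ≠ (fun j => j) j' + u :=
    fun j j' hj hj' hx => by simp only at hx; omega
  have hMEfull : Disjoint (Efull k) M := by
    rw [disjoint_right]
    intro A hA
    rw [hM, pairSeg, mem_image] at hA
    obtain ⟨j, -, rfl⟩ := hA
    exact pr_not_mem_Efull h2k (by omega) (by omega) _
  have cardM : M.card = c := card_pairSeg hcM htM hinjM hsecM
  have cardE : E.card = l * k + c := by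
    rw [hE, card_union_of_disjoint hMEfull, card_Efull h2k, cardM]
  have degM : ∀ i : ZMod l, (M.filter (fun A => i ∈ A)).card
      = if pC i.val then 1 else 0 := by
    intro i
    have hvl := ZMod.val_lt i
    rw [hM, deg_pairSeg hcM htM hinjM hsecM]
    by_cases hi : pC i.val
    · rw [if_pos hi]
      rcases hi with hi | hi
      · have h1 : (range c).filter (fun j => i.val = j ∨ i.val = j + u) = {i.val} := by
          ext j; simp only [mem_filter, mem_range, mem_singleton]; omega
        rw [h1, card_singleton]
      · have h1 : (range c).filter (fun j => i.val = j ∨ i.val = j + u) = {i.val - u} := by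
          ext j; simp only [mem_filter, mem_range, mem_singleton]; omega
        rw [h1, card_singleton]
    · rw [if_neg hi, hpC] at *
      have h1 : (range c).filter (fun j => i.val = j ∨ i.val = j + u) = ∅ := by
        ext j; simp only [mem_filter, mem_range, notMem_empty, iff_false]
        push_neg at hi
        omega
      rw [h1, card_empty]
  have memW : ∀ i : ZMod l, i ∈ W ↔ ¬ pC i.val := fun i => by
    rw [hW, mem_filter]; simp
  have cardW : W.card = h := by
    rw [hW, card_val_filter (fun v => ¬ pC v)]
    have h1 : (range l).filter (fun v => ¬ pC v) = Ico c u ∪ Ico (u+c) l := by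
      ext v
      simp only [hpC, mem_filter, mem_range, mem_union, mem_Ico]
      constructor
      · intro hx
        push_neg at hx
        omega
      · intro hx
        push_neg
        omega
    rw [h1, card_union_of_disjoint, Nat.card_Ico, Nat.card_Ico]
    · omega
    · rw [disjoint_left]
      intro v hv hv'
      rw [mem_Ico] at hv hv'
      omega
  have degE : ∀ i : ZMod l, (E.filter (fun A => i ∈ A)).card
      = 2*k + (if pC i.val then 1 else 0) := by
    intro i
    rw [hE, filter_union, card_union_of_disjoint (disjoint_filter_filter hMEfull),
      deg_Efull h2k, degM]
  have cardmemE : ∀ A ∈ E, A.card = 2 := by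
    intro A hA
    rcases mem_union.1 hA with hx | hx
    · exact card_of_mem_Efull h2k hx
    · exact card_of_mem_pairSeg hcM htM hx
  have hSE : Disjoint Sgl E := by
    rw [disjoint_left]
    intro A hS hEm
    have h1 := card_of_mem_Sgl hS
    have h2 := cardmemE A hEm
    omega
  have hWSE : W ∉ Sgl ∪ E := by
    intro hx
    rcases mem_union.1 hx with hx | hx
    · have := card_of_mem_Sgl hx
      rw [cardW] at this
      omega
    · have := cardmemE W hx
      rw [cardW] at this
      omega
  have cardP1 : (insert W (Sgl ∪ E)).card = 1 + l + (l*k + c) := by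
    rw [card_insert_of_notMem hWSE, card_union_of_disjoint hSE, card_Sgl, cardE]
    omega
  have degP1 : ∀ i, ((insert W (Sgl ∪ E)).filter (fun A => i ∈ A)).card = 2*k+2 := by
    intro i
    have hWnot : W ∉ (Sgl ∪ E).filter (fun A => i ∈ A) :=
      fun hmem => hWSE (filter_subset _ _ hmem)
    have hcardSplit : ((insert W (Sgl ∪ E)).filter (fun A => i ∈ A)).card
        = (if i ∈ W then 1 else 0) + ((Sgl ∪ E).filter (fun A => i ∈ A)).card := by
      rw [filter_insert]
      by_cases hiW : i ∈ W
      · rw [if_pos hiW, card_insert_of_notMem hWnot, if_pos hiW]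
        omega
      · rw [if_neg hiW, if_neg hiW]
        omega
    rw [hcardSplit, filter_union, card_union_of_disjoint (disjoint_filter_filter hSE),
      deg_Sgl, degE]
    by_cases hi : pC i.val
    · rw [if_neg (fun hmm => ((memW i).1 hmm) hi), if_pos hi]
      omega
    · rw [if_pos ((memW i).2 hi), if_neg hi]
      omega
  by_cases hs1 : s = 1
  · -- add the empty set as an extra pattern
    have hemp : (∅ : Finset (ZMod l)) ∉ insert W (Sgl ∪ E) := by
      intro hx
      rcases mem_insert.1 hx with hx | hx
      · rw [← hx] at cardW
        simp at cardW
        omega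
      rcases mem_union.1 hx with hx | hx
      · have := card_of_mem_Sgl hx
        simp at this
      · have := cardmemE _ hx
        simp at this
    refine ⟨insert ∅ (insert W (Sgl ∪ E)), ?_, ?_⟩
    · rw [card_insert_of_notMem hemp, cardP1]
      have heq' : 2*(l*k) + 3*l = 2*(n-1) + s := by rw [← heq]; ring
      have hh3' : h = 3 := by rw [hh, if_pos hs1]
      set m := l * k with hm
      omega
    · intro i
      have h0 : ((insert ∅ (insert W (Sgl ∪ E))).filter (fun A => i ∈ A))
          = ((insert W (Sgl ∪ E)).filter (fun A => i ∈ A)) := by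
        rw [filter_insert, if_neg (notMem_empty i)]
      rw [h0, degP1]
  · refine ⟨insert W (Sgl ∪ E), ?_, ?_⟩
    · rw [cardP1]
      have heq' : 2*(l*k) + 3*l = 2*(n-1) + s := by rw [← heq]; ring
      have hhs : h = s := by rw [hh, if_neg hs1]
      set m := l * k with hm
      omega
    · exact degP1


lemma exists_patterns_zmod {l r n s : ℕ} [NeZero l] (hr : 1 ≤ r) (hrl : r ≤ l) (hsr : s ≤ r)
    (heq : l * (r+1) = 2*(n-1) + s) (hn : 1 ≤ n) :
    ∃ P : Finset (Finset (ZMod l)), P.card = n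
      ∧ ∀ i, (P.filter (fun A => i ∈ A)).card = r := by
  rcases Nat.even_or_odd r with he | ho
  · -- r even, r = 2k+2
    obtain ⟨m, hm⟩ := he
    have hm1 : 1 ≤ m := by omega
    set k := m - 1 with hk
    have hrk : r = 2*k + 2 := by omega
    rcases Nat.even_or_odd l with hle | hlo
    · obtain ⟨a, ha⟩ := hle
      have hs2 : 2 ∣ s := by
        have h2 : l * (r+1) = 2*(a*(r+1)) := by rw [ha]; ring
        rw [h2] at heq
        omega
      exact caseB hrk (by omega) hs2 hsr hrl heq hn
    · obtain ⟨a, ha⟩ := hlo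
      have hs2 : ¬ 2 ∣ s := by
        have h2 : l * (r+1) = 2*(a*(2*k+3) + k + 1) + 1 := by rw [ha, hrk]; ring
        rw [h2] at heq
        omega
      have hl2 : ¬ 2 ∣ l := by omega
      exact caseC hrk hl2 hs2 hsr hrl heq hn
  · obtain ⟨k, hk⟩ := ho
    have hs2 : 2 ∣ s := by
      have h2 : l * (r+1) = 2*(l*(k+1)) := by rw [hk]; ring
      rw [h2] at heq
      omega
    exact caseA hk hs2 hsr hrl heq hn

lemma exists_patterns_fin {l r n s : ℕ} (hl : 0 < l) (hr : 1 ≤ r) (hrl : r ≤ l) (hsr : s ≤ r)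
    (heq : l * (r+1) = 2*(n-1) + s) (hn : 1 ≤ n) :
    ∃ P : Finset (Finset (Fin l)), P.card = n
      ∧ ∀ i, (P.filter (fun A => i ∈ A)).card = r := by
  haveI : NeZero l := ⟨hl.ne'⟩
  obtain ⟨P, hPcard, hPcol⟩ := exists_patterns_zmod (l := l) hr hrl hsr heq hn
  classical
  let e : ZMod l ≃ Fin l := Fintype.equivFinOfCardEq (ZMod.card l)
  refine ⟨P.image (fun A => A.image e), ?_, ?_⟩
  · rw [card_image_of_injOn, hPcard]
    intro A _ B _ h
    have h' : A.image e = B.image e := h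
    have : (A.image e).image e.symm = (B.image e).image e.symm := by rw [h']
    rwa [image_image, image_image,
      show (⇑e.symm ∘ ⇑e) = id from funext (fun x => e.symm_apply_apply x),
      image_id, image_id] at this
  · intro i
    rw [filter_image]
    rw [card_image_of_injOn]
    · have h1 : P.filter (fun A => i ∈ A.image e) = P.filter (fun A => e.symm i ∈ A) := by
        refine filter_congr (fun A _ => ?_)
        simp only [mem_image, eq_iff_iff]
        constructor
        · rintro ⟨x, hx, hxe⟩
          rwa [← hxe, e.symm_apply_apply]
        · intro h
          exact ⟨e.symm i, h, e.apply_symm_apply i⟩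
      rw [h1, hPcol]
    · intro A hA B hB h
      rw [mem_coe, mem_filter] at hA hB
      have h' : A.image e = B.image e := h
      have : (A.image e).image e.symm = (B.image e).image e.symm := by rw [h']
      rwa [image_image, image_image,
        show (⇑e.symm ∘ ⇑e) = id from funext (fun x => e.symm_apply_apply x),
        image_id, image_id] at this


end Construction

/-- Corollary 3.2: if `n ≥ (r² + r)/2` then `b(S_{n,r}) = ⌈(2n − 2)/(r + 1)⌉`. -/
theorem baseSize_eq_ceil (n r : ℕ) (hn : 0 < n) (hr : 0 < r)
    (hbound : ((r : ℚ) ^ 2 + r) / 2 ≤ n) :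
    (baseSizeSym n r : ℤ) = ⌈(2 * (n : ℚ) - 2) / (r + 1)⌉ := by
  classical
  have hb2 : r*r + r ≤ 2*n := by
    have h1 : (r:ℚ)*r + r ≤ 2*n := by nlinarith [hbound]
    exact_mod_cast h1
  rcases eq_or_lt_of_le (Nat.succ_le_of_lt hn) with h1 | hn2
  · -- n = 1
    have hn1 : n = 1 := h1.symm
    subst hn1
    have h0 : (0:ℕ) ∈ {m : ℕ | ∃ 𝓑 : Finset (Finset (Fin 1)), IsBaseSym 1 r 𝓑 ∧ 𝓑.card = m} :=
      ⟨∅, ⟨fun B hB => absurd hB (Finset.notMem_empty _),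
        fun σ _ => Subsingleton.elim σ 1⟩, rfl⟩
    have hz : baseSizeSym 1 r = 0 := Nat.le_zero.1 (Nat.sInf_le h0)
    rw [hz]
    norm_num
  · have hn2' : 2 ≤ n := hn2
    set S := {m : ℕ | ∃ 𝓑 : Finset (Finset (Fin n)), IsBaseSym n r 𝓑 ∧ 𝓑.card = m} with hS
    have hbs : baseSizeSym n r = sInf S := rfl
    set L := (2*n - 2 + r) / (r+1) with hL
    have hrpos : 0 < r + 1 := by omega
    obtain ⟨s, hsr, heq⟩ : ∃ s, s ≤ r ∧ L * (r+1) = 2*(n-1) + s := by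
      have h1 : (r+1) * L + (2*n-2+r) % (r+1) = 2*n-2+r := by rw [hL]; exact Nat.div_add_mod _ _
      have h2 : (2*n-2+r) % (r+1) < r + 1 := Nat.mod_lt _ hrpos
      have h3 : L * (r+1) = (r+1) * L := by ring
      exact ⟨r - (2*n-2+r) % (r+1), by omega, by omega⟩
    have hrL : r ≤ L := by
      rw [hL, Nat.le_div_iff_mul_le hrpos]
      have hx : r * (r+1) = r*r + r := by ring
      rw [hx]
      rcases Nat.lt_or_ge r 2 with h2 | h2
      · have hr1 : r = 1 := by omega
        subst hr1
        omega
      · set m := r*r with hm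
        omega
    have hL0 : 0 < L := by omega
    obtain ⟨P, hP1, hP2⟩ := Construction.exists_patterns_fin hL0 hr hrL hsr heq (by omega)
    obtain ⟨𝓑, h𝓑, h𝓑c⟩ := base_from_patterns P hP1 hP2
    have hmemS : 𝓑.card ∈ S := ⟨𝓑, h𝓑, rfl⟩
    have hub : baseSizeSym n r ≤ L := by
      rw [hbs]
      exact le_trans (Nat.sInf_le hmemS) h𝓑c
    have hSne : S.Nonempty := ⟨_, hmemS⟩
    obtain ⟨𝓑₀, h𝓑₀, h𝓑₀c⟩ := Nat.sInf_mem hSne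
    have hlow := lower_bound h𝓑₀
    rw [h𝓑₀c, ← hbs] at hlow
    set b := baseSizeSym n r with hb
    have hlb : L ≤ b := by
      rw [hL, Nat.div_le_iff_le_mul_add_pred hrpos]
      have hcomm2 : (r+1) * b = b * (r+1) := by ring
      omega
    have hLB : b = L := le_antisymm hub hlb
    rw [hLB]
    symm
    rw [Int.ceil_eq_iff]
    have hrq : (0:ℚ) < (r:ℚ) + 1 := by positivity
    have hc1 : ((2*n - 2 + r : ℕ) : ℚ) = 2*(n:ℚ) - 2 + r := by
      push_cast [Nat.cast_sub (show 2 ≤ 2*n by omega)]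
      ring
    have hnat1 : L*(r+1) ≤ 2*n-2+r := by omega
    have hnat2 : 2*n-2 ≤ L*(r+1) := by omega
    have hq1 : (L:ℚ)*((r:ℚ)+1) ≤ 2*(n:ℚ) - 2 + r := by
      have h2 : ((L*(r+1) : ℕ) : ℚ) ≤ ((2*n-2+r : ℕ):ℚ) := by exact_mod_cast hnat1
      rw [hc1] at h2
      push_cast at h2
      linarith
    have hq2 : 2*(n:ℚ) - 2 ≤ (L:ℚ)*((r:ℚ)+1) := by
      have h2 : ((2*n-2 : ℕ):ℚ) ≤ ((L*(r+1) : ℕ) : ℚ) := by exact_mod_cast hnat2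
      have hc2 : ((2*n - 2 : ℕ) : ℚ) = 2*(n:ℚ) - 2 := by
        push_cast [Nat.cast_sub (show 2 ≤ 2*n by omega)]
        ring
      rw [hc2] at h2
      push_cast at h2
      linarith
    constructor
    · rw [lt_div_iff₀ hrq]
      push_cast
      nlinarith
    · rw [div_le_iff₀ hrq]
      push_cast
      nlinarith
end

section
/- Let n and r be positive integers with n ≥ 2r, and suppose 𝓑 is a base for the symmetric group S_n acting on the set of r-element subsets of [n] such that every point x ∈ [n] lies in at most 2 of the members of 𝓑. Then n ≥ (r²+r)/2. -/
lemma two_choose_two (m : ℕ) : 2 * m.choose 2 = m * (m - 1) := by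
  rw [Nat.choose_two_right, Nat.mul_div_cancel']
  rcases m with _ | k
  · simp
  · simpa [Nat.mul_comm] using (Nat.even_mul_succ_self k).two_dvd

/-- If `n ≥ 2r` and `𝓑` is a base for `S_n` acting on `r`-subsets of `[n]` in which
every point of `[n]` lies in at most `2` members of `𝓑`, then `n ≥ (r² + r)/2`. -/
theorem base_maxdeg_two (n r : ℕ) (hn : 0 < n) (hr : 0 < r) (h2r : 2 * r ≤ n)
    (𝓑 : Finset (Finset (Fin n))) (hbase : IsBaseSym n r 𝓑)
    (hdeg : ∀ x : Fin n, (𝓑.filter (fun B => x ∈ B)).card ≤ 2) :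
    ((r : ℚ) ^ 2 + r) / 2 ≤ (n : ℚ) := by
  classical
  set pat : Fin n → Finset (Finset (Fin n)) := fun x => 𝓑.filter (fun B => x ∈ B) with hpat
  -- the pattern map is injective
  have hinj : Function.Injective pat := by
    intro x y hxy
    by_contra hne
    have hswap : ∀ B ∈ 𝓑, B.image (Equiv.swap x y) = B := by
      intro B hB
      have hiff : x ∈ B ↔ y ∈ B := by
        constructor
        · intro h
          have : B ∈ pat y := hxy ▸ (Finset.mem_filter.2 ⟨hB, h⟩)
          exact (Finset.mem_filter.1 this).2
        · intro h
          have : B ∈ pat x := hxy.symm ▸ (Finset.mem_filter.2 ⟨hB, h⟩)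
          exact (Finset.mem_filter.1 this).2
      have hsub : B.image (Equiv.swap x y) ⊆ B := by
        intro a ha
        obtain ⟨b, hb, rfl⟩ := Finset.mem_image.1 ha
        rcases eq_or_ne b x with rfl | hbx
        · rw [Equiv.swap_apply_left]; exact hiff.1 hb
        rcases eq_or_ne b y with rfl | hby
        · rw [Equiv.swap_apply_right]; exact hiff.2 hb
        · rw [Equiv.swap_apply_of_ne_of_ne hbx hby]; exact hb
      refine Finset.eq_of_subset_of_card_le hsub ?_
      rw [Finset.card_image_of_injective _ (Equiv.injective _)]
    have h1 := hbase.2 _ hswap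
    apply hne
    have := congrArg (fun σ : Equiv.Perm (Fin n) => σ x) h1
    simpa [Equiv.swap_apply_left] using this.symm
  set m := 𝓑.card with hm
  -- m ≥ 1
  have hn2 : 2 ≤ n := le_trans (by omega) h2r
  have hm1 : 1 ≤ m := by
    by_contra h
    have h0 : 𝓑 = ∅ := by
      rw [← Finset.card_eq_zero]; omega
    have h01 : (⟨0, by omega⟩ : Fin n) ≠ ⟨1, by omega⟩ := by
      simp [Fin.ext_iff]
    apply h01
    apply hinj
    simp [hpat, h0]
  -- double counting: sum of degrees = m * r
  have hsum : ∑ x : Fin n, (pat x).card = m * r := by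
    have h1 : ∀ x : Fin n, (pat x).card = ∑ B ∈ 𝓑, if x ∈ B then 1 else 0 := by
      intro x; rw [hpat]; exact Finset.card_filter _ _
    calc ∑ x : Fin n, (pat x).card
        = ∑ x : Fin n, ∑ B ∈ 𝓑, if x ∈ B then 1 else 0 := by
          exact Finset.sum_congr rfl fun x _ => h1 x
      _ = ∑ B ∈ 𝓑, ∑ x : Fin n, if x ∈ B then 1 else 0 := Finset.sum_comm
      _ = ∑ B ∈ 𝓑, B.card := by
          refine Finset.sum_congr rfl fun B _ => ?_
          rw [← Finset.card_filter]
          congr 1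
          ext a
          simp
      _ = m * r := by
          rw [Finset.sum_congr rfl (fun B hB => hbase.1 B hB), Finset.sum_const, smul_eq_mul]
  set D1 : Finset (Fin n) := Finset.univ.filter (fun x => (pat x).card = 1) with hD1
  set D2 : Finset (Fin n) := Finset.univ.filter (fun x => (pat x).card = 2) with hD2
  -- sum of degrees = |D1| + 2 |D2|
  have hsplit : ∑ x : Fin n, (pat x).card = D1.card + 2 * D2.card := by
    have hpoint : ∀ x : Fin n, (pat x).card =
        (if (pat x).card = 1 then 1 else 0) + 2 * (if (pat x).card = 2 then 1 else 0) := by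
      intro x
      have := hdeg x
      rw [hpat]
      interval_cases h : (𝓑.filter (fun B => x ∈ B)).card <;> simp
    calc ∑ x : Fin n, (pat x).card
        = ∑ x : Fin n, ((if (pat x).card = 1 then 1 else 0)
            + 2 * (if (pat x).card = 2 then 1 else 0)) :=
          Finset.sum_congr rfl fun x _ => hpoint x
      _ = D1.card + 2 * D2.card := by
          rw [Finset.sum_add_distrib, ← Finset.mul_sum, ← Finset.card_filter, ← Finset.card_filter]
  -- |D1| + |D2| ≤ n
  have hD12 : D1.card + D2.card ≤ n := by
    have hdisj : Disjoint D1 D2 := by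
      rw [Finset.disjoint_filter]
      intro x _ h1 h2
      omega
    calc D1.card + D2.card = (D1 ∪ D2).card := (Finset.card_union_of_disjoint hdisj).symm
      _ ≤ (Finset.univ : Finset (Fin n)).card := Finset.card_le_univ _
      _ = n := by simp
  -- |D1| ≤ m
  have hcard1 : D1.card ≤ m := by
    have : D1.card ≤ (𝓑.powersetCard 1).card := by
      apply Finset.card_le_card_of_injOn pat
      · intro x hx
        rw [Finset.mem_coe, Finset.mem_powersetCard]
        exact ⟨Finset.filter_subset _ _, (Finset.mem_filter.1 hx).2⟩
      · exact fun x _ y _ h => hinj h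
    simpa using this
  -- 2 * |D2| + m ≤ m * m
  have hcard2 : 2 * D2.card + m ≤ m * m := by
    have h2 : D2.card ≤ m.choose 2 := by
      have : D2.card ≤ (𝓑.powersetCard 2).card := by
        apply Finset.card_le_card_of_injOn pat
        · intro x hx
          rw [Finset.mem_coe, Finset.mem_powersetCard]
          exact ⟨Finset.filter_subset _ _, (Finset.mem_filter.1 hx).2⟩
        · exact fun x _ y _ h => hinj h
      simpa using this
    have := two_choose_two m
    have : 2 * D2.card ≤ m * (m - 1) := by omega
    have hmm : m * (m - 1) + m = m * m := by
      rcases m with _ | k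
      · simp
      · simp only [Nat.succ_sub_one]
        ring
    omega
  rw [hsplit] at hsum
  -- key natural-number inequality
  have key : r * r + r ≤ 2 * n := by
    rcases le_or_gt m r with hle | hlt
    · -- then r ≤ m, so m = r
      have hrm : r ≤ m := by
        have h1 : m * r ≤ m * m := by omega
        exact Nat.le_of_mul_le_mul_left h1 (by omega)
      have : m = r := le_antisymm hle hrm
      subst this
      -- now linear in the atom m*m
      nlinarith [hsum, hcard1, hcard2, hD12]
    · have h1 : (r + 1) * r ≤ m * r := Nat.mul_le_mul_right r hlt
      nlinarith [hsum, hD12, h1]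
  rw [div_le_iff₀ (by norm_num : (0:ℚ) < 2)]
  have : (r * r + r : ℚ) ≤ 2 * n := by exact_mod_cast key
  nlinarith [this]
end
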